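/- arXiv:1907.03411 — 8 statements merged into one kernel-verified Lean document; each statement's English description precedes it below -/
import Mathlib

section
/- Let a_1,…,a_k and b_1,…,b_k be random vectors in ℝ^d such that the pairs (a_i,b_i), i=1,…,k, are i.i.d. (a_i and b_i may be dependent within a pair), and let A, B ∈ ℝ^{k×d} be the random matrices with rows a_iᵀ and b_iᵀ respectively. Assume k ≥ d and that every entry of E[a_1 b_1ᵀ] is finite and det(AᵀB) is integrable. Then k^d · E[det(AᵀB)] = k^{d̲} · det(E[AᵀB]), where E[AᵀB] = k·E[a_1 b_1ᵀ]. -/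
open MeasureTheory Matrix Finset

section aux
variable {X : Type*} [MeasurableSpace X] {μ : Measure X} [IsProbabilityMeasure μ] {d k : ℕ}

private def fiberG (g : Fin d → Fin k) (h : Fin d → X → ℝ) (t : Fin k) (x : X) : ℝ :=
  ∏ j ∈ Finset.univ.filter (fun j => g j = t), h j x

private lemma fiberG_prod (g : Fin d → Fin k) (h : Fin d → X → ℝ) (x : Fin k → X) :
    ∏ t, fiberG g h t (x t) = ∏ j, h j (x (g j)) := by
  rw [← Finset.prod_fiberwise_of_maps_to (fun j _ => Finset.mem_univ (g j))
    (fun j => h j (x (g j)))]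
  refine Finset.prod_congr rfl fun t _ => ?_
  refine Finset.prod_congr rfl fun j hj => ?_
  rw [Finset.mem_filter] at hj
  rw [hj.2]

private lemma fiber_cases (g : Fin d → Fin k) (hg : Function.Injective g) (t : Fin k) :
    (Finset.univ.filter (fun j => g j = t)) = ∅ ∨
      ∃ j0, g j0 = t ∧ (Finset.univ.filter (fun j => g j = t)) = {j0} := by
  by_cases ht : ∃ j, g j = t
  · obtain ⟨j0, rfl⟩ := ht
    refine Or.inr ⟨j0, rfl, ?_⟩
    ext a; simp [hg.eq_iff]
  · refine Or.inl ?_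
    ext a; simp only [Finset.mem_filter, Finset.mem_univ, true_and, Finset.notMem_empty,
      iff_false]
    exact fun hc => ht ⟨a, hc⟩

private lemma aux_integrable (g : Fin d → Fin k) (hg : Function.Injective g)
    (h : Fin d → X → ℝ) (hi : ∀ j, Integrable (h j) μ) :
    Integrable (fun x : Fin k → X => ∏ j, h j (x (g j))) (Measure.pi fun _ => μ) := by
  letI : MeasureSpace X := ⟨μ⟩
  have hv : (Measure.pi fun _ : Fin k => μ) = (volume : Measure (Fin k → X)) := rfl
  rw [hv]
  simp_rw [← fiberG_prod g h]
  refine Integrable.fintype_prod (fun t => ?_)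
  rcases fiber_cases g hg t with ht | ⟨j0, -, ht⟩
  · have : fiberG g h t = fun _ => 1 := by
      funext x; unfold fiberG; rw [ht, Finset.prod_empty]
    rw [this]; exact integrable_const 1
  · have : fiberG g h t = h j0 := by
      funext x; unfold fiberG; rw [ht, Finset.prod_singleton]
    rw [this]; exact hi j0

private lemma aux_integral (g : Fin d → Fin k) (hg : Function.Injective g)
    (h : Fin d → X → ℝ) :
    ∫ x : Fin k → X, ∏ j, h j (x (g j)) ∂(Measure.pi fun _ => μ)
      = ∏ j, ∫ x, h j x ∂μ := by
  letI : MeasureSpace X := ⟨μ⟩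
  have hv : (Measure.pi fun _ : Fin k => μ) = (volume : Measure (Fin k → X)) := rfl
  rw [hv]
  simp_rw [← fiberG_prod g h]
  rw [← hv, integral_fintype_prod_eq_prod (ι := Fin k) (fiberG g h)]
  rw [← Finset.prod_fiberwise_of_maps_to (fun j (_ : j ∈ Finset.univ) => Finset.mem_univ (g j))
    (fun j => ∫ x, h j x ∂μ)]
  refine Finset.prod_congr rfl fun t _ => ?_
  rcases fiber_cases g hg t with ht | ⟨j0, -, ht⟩
  · have : fiberG g h t = fun _ => 1 := by
      funext x; unfold fiberG; rw [ht, Finset.prod_empty]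
    rw [ht, this, Finset.prod_empty]
    simp
  · have : fiberG g h t = h j0 := by
      funext x; unfold fiberG; rw [ht, Finset.prod_singleton]
    rw [ht, this, Finset.prod_singleton]

end aux

private lemma det_expand {d k : ℕ} (A B : Fin k → Fin d → ℝ) :
    ((Matrix.of A)ᵀ * Matrix.of B).det
      = ∑ f : Fin d → Fin k, (∏ j, B (f j) j) * (Matrix.of fun i j => A (f j) i).det := by
  calc ((Matrix.of A)ᵀ * Matrix.of B).det
      = ∑ σ : Equiv.Perm (Fin d), ∑ f : Fin d → Fin k,
          ((Equiv.Perm.sign σ : ℤ) : ℝ) * ∏ i, A (f i) (σ i) * B (f i) i := by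
        rw [Matrix.det_apply']
        refine Finset.sum_congr rfl fun σ _ => ?_
        rw [← Finset.mul_sum]
        congr 1
        simp only [Matrix.mul_apply, Matrix.transpose_apply, Matrix.of_apply]
        rw [Finset.prod_univ_sum (fun _ : Fin d => (Finset.univ : Finset (Fin k)))
          (fun i t => A t (σ i) * B t i), Fintype.piFinset_univ]
    _ = ∑ f : Fin d → Fin k, ∑ σ : Equiv.Perm (Fin d),
          ((Equiv.Perm.sign σ : ℤ) : ℝ) * ∏ i, A (f i) (σ i) * B (f i) i :=
        Finset.sum_comm
    _ = ∑ f : Fin d → Fin k, (∏ j, B (f j) j) * (Matrix.of fun i j => A (f j) i).det := by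
        refine Finset.sum_congr rfl fun f _ => ?_
        rw [Matrix.det_apply', Finset.mul_sum]
        refine Finset.sum_congr rfl fun σ _ => ?_
        simp only [Matrix.of_apply]
        rw [Finset.prod_mul_distrib]
        ring

private lemma det_noninj {d k : ℕ} (A : Fin k → Fin d → ℝ) {f : Fin d → Fin k}
    (hf : ¬ Function.Injective f) :
    (Matrix.of fun i j => A (f j) i).det = 0 := by
  rw [Function.not_injective_iff] at hf
  obtain ⟨j1, j2, hj, hne⟩ := hf
  exact Matrix.det_zero_of_column_eq hne (fun i => by simp [hj])

set_option maxHeartbeats 1000000 in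
private lemma term_inj {d k : ℕ} (ρ : Measure ((Fin d → ℝ) × (Fin d → ℝ)))
    [IsProbabilityMeasure ρ]
    (hmom : ∀ i j : Fin d,
      Integrable (fun p : (Fin d → ℝ) × (Fin d → ℝ) => p.1 i * p.2 j) ρ)
    {f : Fin d → Fin k} (hf : Function.Injective f) :
    Integrable (fun ω : Fin k → (Fin d → ℝ) × (Fin d → ℝ) =>
        (∏ j, (ω (f j)).2 j) * (Matrix.of fun i j => (ω (f j)).1 i).det)
      (Measure.pi fun _ : Fin k => ρ) ∧
    ∫ ω : Fin k → (Fin d → ℝ) × (Fin d → ℝ),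
        (∏ j, (ω (f j)).2 j) * (Matrix.of fun i j => (ω (f j)).1 i).det
        ∂(Measure.pi fun _ : Fin k => ρ)
      = (Matrix.of fun i j : Fin d => ∫ p, p.1 i * p.2 j ∂ρ).det := by
  have hterm_eq : (fun ω : Fin k → (Fin d → ℝ) × (Fin d → ℝ) =>
      (∏ j, (ω (f j)).2 j) * (Matrix.of fun i j => (ω (f j)).1 i).det)
      = fun ω => ∑ σ : Equiv.Perm (Fin d), ((Equiv.Perm.sign σ : ℤ) : ℝ) *
        ∏ j, ((ω (f j)).1 (σ j) * (ω (f j)).2 j) := by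
    funext ω
    rw [Matrix.det_apply', Finset.mul_sum]
    refine Finset.sum_congr rfl fun σ _ => ?_
    simp only [Matrix.of_apply]
    rw [Finset.prod_mul_distrib]
    ring
  have h1 : ∀ σ : Equiv.Perm (Fin d),
      Integrable (fun ω : Fin k → (Fin d → ℝ) × (Fin d → ℝ) =>
          ∏ j, ((ω (f j)).1 (σ j) * (ω (f j)).2 j))
        (Measure.pi fun _ : Fin k => ρ) := fun σ =>
    aux_integrable f hf (fun j (p : (Fin d → ℝ) × (Fin d → ℝ)) => p.1 (σ j) * p.2 j) (fun j => hmom (σ j) j)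
  constructor
  · rw [hterm_eq]
    exact integrable_finset_sum _ fun σ _ => (h1 σ).const_mul _
  · rw [hterm_eq, integral_finset_sum _ fun σ _ => (h1 σ).const_mul _]
    have h2 : ∀ σ : Equiv.Perm (Fin d),
        ∫ ω : Fin k → (Fin d → ℝ) × (Fin d → ℝ),
            ∏ j, ((ω (f j)).1 (σ j) * (ω (f j)).2 j)
          ∂(Measure.pi fun _ : Fin k => ρ)
          = ∏ j, (Matrix.of fun i j : Fin d => ∫ p, p.1 i * p.2 j ∂ρ) (σ j) j := by
      intro σ
      rw [aux_integral f hf (fun j (p : (Fin d → ℝ) × (Fin d → ℝ)) => p.1 (σ j) * p.2 j)]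
      simp only [Matrix.of_apply]
    simp_rw [integral_const_mul, h2]
    rw [Matrix.det_apply']

private lemma term_noninj {d k : ℕ} {f : Fin d → Fin k} (hf : ¬ Function.Injective f) :
    (fun ω : Fin k → (Fin d → ℝ) × (Fin d → ℝ) =>
        (∏ j, (ω (f j)).2 j) * (Matrix.of fun i j => (ω (f j)).1 i).det)
      = fun _ => (0 : ℝ) := by
  funext ω
  rw [det_noninj (fun t => (ω t).1) hf, mul_zero]

/-- **Expected determinant of a product of i.i.d.-row matrices**
(Lemma 1, eq. (1), Dereziński–Warmuth–Hsu).
If the rows `(aᵢ, bᵢ)` of the pair of random matrices `A, B ∈ ℝ^{k×d}` form an i.i.d.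
sequence of pairs of random vectors (the two vectors within a pair may be dependent),
`k ≥ d`, every entry of `E[a₁ b₁ᵀ]` is finite and `det(AᵀB)` is integrable, then
`k^d · E[det(AᵀB)] = k^{d̲} · det(E[AᵀB])` with `E[AᵀB] = k · E[a₁ b₁ᵀ]`. -/
theorem expected_det_of_iid_rows
    {d k : ℕ} (hdk : d ≤ k)
    (ρ : Measure ((Fin d → ℝ) × (Fin d → ℝ))) [IsProbabilityMeasure ρ]
    (hmom : ∀ i j : Fin d,
      Integrable (fun p : (Fin d → ℝ) × (Fin d → ℝ) => p.1 i * p.2 j) ρ)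
    (hdet : Integrable
      (fun ω : Fin k → (Fin d → ℝ) × (Fin d → ℝ) =>
        ((Matrix.of fun i : Fin k => (ω i).1)ᵀ * (Matrix.of fun i : Fin k => (ω i).2)).det)
      (Measure.pi fun _ : Fin k => ρ)) :
    (k : ℝ) ^ d *
        ∫ ω : Fin k → (Fin d → ℝ) × (Fin d → ℝ),
          ((Matrix.of fun i : Fin k => (ω i).1)ᵀ * (Matrix.of fun i : Fin k => (ω i).2)).det
          ∂(Measure.pi fun _ : Fin k => ρ) =
      (k.descFactorial d : ℝ) *
        (Matrix.of fun i j : Fin d => (k : ℝ) * ∫ p, p.1 i * p.2 j ∂ρ).det := by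
  classical
  have hterm_int : ∀ f : Fin d → Fin k,
      Integrable (fun ω : Fin k → (Fin d → ℝ) × (Fin d → ℝ) =>
          (∏ j, (ω (f j)).2 j) * (Matrix.of fun i j => (ω (f j)).1 i).det)
        (Measure.pi fun _ : Fin k => ρ) := by
    intro f
    by_cases hf : Function.Injective f
    · exact (term_inj ρ hmom hf).1
    · rw [term_noninj hf]
      exact integrable_zero _ _ _
  have hexp : (fun ω : Fin k → (Fin d → ℝ) × (Fin d → ℝ) =>
      ((Matrix.of fun i : Fin k => (ω i).1)ᵀ * (Matrix.of fun i : Fin k => (ω i).2)).det)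
      = fun ω => ∑ f : Fin d → Fin k,
          (∏ j, (ω (f j)).2 j) * (Matrix.of fun i j => (ω (f j)).1 i).det := by
    funext ω
    exact det_expand (fun i => (ω i).1) (fun i => (ω i).2)
  rw [hexp, integral_finset_sum _ fun f _ => hterm_int f]
  have hval : ∀ f : Fin d → Fin k,
      ∫ ω : Fin k → (Fin d → ℝ) × (Fin d → ℝ),
          (∏ j, (ω (f j)).2 j) * (Matrix.of fun i j => (ω (f j)).1 i).det
          ∂(Measure.pi fun _ : Fin k => ρ)
        = if Function.Injective f
            then (Matrix.of fun i j : Fin d => ∫ p, p.1 i * p.2 j ∂ρ).det else 0 := by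
    intro f
    by_cases hf : Function.Injective f
    · rw [if_pos hf]; exact (term_inj ρ hmom hf).2
    · rw [if_neg hf, term_noninj hf]
      exact integral_zero _ _
  simp_rw [hval]
  rw [← Finset.sum_filter, Finset.sum_const, nsmul_eq_mul]
  have hcard : (Finset.univ.filter fun f : Fin d → Fin k => Function.Injective f).card
      = k.descFactorial d := by
    rw [← Fintype.card_subtype]
    rw [Fintype.card_congr (Equiv.subtypeInjectiveEquivEmbedding (Fin d) (Fin k))]
    rw [Fintype.card_embedding_eq, Fintype.card_fin, Fintype.card_fin]
  rw [hcard]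
  have hR : (Matrix.of fun i j : Fin d => (k : ℝ) * ∫ p, p.1 i * p.2 j ∂ρ)
      = (k : ℝ) • (Matrix.of fun i j : Fin d => ∫ p, p.1 i * p.2 j ∂ρ) := by
    ext i j
    simp [Matrix.smul_apply]
  rw [hR, Matrix.det_smul, Fintype.card_fin]
  ring
end

section
/- Let a_1,…,a_k and b_1,…,b_k be random vectors in ℝ^d such that the pairs (a_i,b_i), i=1,…,k, are i.i.d. (a_i and b_i may be dependent within a pair), and let A, B ∈ ℝ^{k×d} be the random matrices with rows a_iᵀ and b_iᵀ respectively. Assume k ≥ d−1 and that every entry of E[a_1 b_1ᵀ] is finite and every entry of adj(AᵀB) is integrable. Then k^{d−1} · E[adj(AᵀB)] = k^{\underline{d−1}} · adj(E[AᵀB]), where adj denotes the matrix adjugate and k^{\underline{d−1}} := k(k−1)⋯(k−d+2). -/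
open MeasureTheory Matrix

private lemma prod_eq_of_inj {M : Type*} [CommMonoid M] {k m : ℕ}
    (f : Fin m → Fin k) (hf : Function.Injective f)
    (g : Fin m → M) (F : Fin k → M)
    (h1 : ∀ i, F (f i) = g i) (h2 : ∀ l, (¬ ∃ i, f i = l) → F l = 1) :
    ∏ l, F l = ∏ i, g i := by
  classical
  have hs : ∏ l ∈ Finset.univ.image f, F l = ∏ l, F l := by
    refine Finset.prod_subset (Finset.subset_univ _) fun x _ hx => ?_
    exact h2 x (by simpa [Finset.mem_image] using hx)
  rw [← hs, Finset.prod_image (fun x _ y _ h => hf h)]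
  exact Finset.prod_congr rfl fun i _ => h1 i

private lemma key_indep {E : Type*} [MeasurableSpace E] {k m : ℕ}
    (ρ : Measure E) [IsProbabilityMeasure ρ]
    (f : Fin m → Fin k) (hf : Function.Injective f)
    (g : Fin m → E → ℝ) (hg : ∀ i, Integrable (g i) ρ) :
    Integrable (fun ω : Fin k → E => ∏ i, g i (ω (f i))) (Measure.pi fun _ => ρ) ∧
      ∫ ω : Fin k → E, (∏ i, g i (ω (f i))) ∂(Measure.pi fun _ => ρ)
        = ∏ i, ∫ p, g i p ∂ρ := by
  classical
  letI : MeasureSpace E := ⟨ρ⟩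
  haveI : SigmaFinite (volume : Measure E) := inferInstanceAs (SigmaFinite ρ)
  haveI : IsProbabilityMeasure (volume : Measure E) := inferInstanceAs (IsProbabilityMeasure ρ)
  have hvol : (Measure.pi fun _ : Fin k => ρ) = (volume : Measure (Fin k → E)) :=
    (MeasureTheory.volume_pi).symm
  set h : Fin k → E → ℝ := Function.extend f g (fun _ _ => 1) with hh
  have hFa : ∀ i, h (f i) = g i := fun i => hf.extend_apply _ _ i
  have hFb : ∀ l, (¬ ∃ i, f i = l) → h l = fun _ => 1 := fun l hl =>
    Function.extend_apply' _ _ _ hl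
  have hext : ∀ ω : Fin k → E, ∏ i, g i (ω (f i)) = ∏ l, h l (ω l) := by
    intro ω
    exact (prod_eq_of_inj f hf (fun i => g i (ω (f i))) (fun l => h l (ω l))
      (fun i => congrFun (hFa i) _) (fun l hl => congrFun (hFb l hl) _)).symm
  have hint : ∀ l, Integrable (h l) ρ := by
    intro l
    by_cases hl : ∃ i, f i = l
    · obtain ⟨i, rfl⟩ := hl; rw [hFa]; exact hg i
    · rw [hFb l hl]; exact integrable_const 1
  constructor
  · simp_rw [hext, hvol]
    exact Integrable.fintype_prod hint
  · simp_rw [hext, hvol]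
    rw [MeasureTheory.integral_fintype_prod_volume_eq_prod]
    exact prod_eq_of_inj f hf (fun i => ∫ p, g i p ∂ρ) (fun l => ∫ x, h l x)
      (fun i => by beta_reduce; rw [hFa i]; rfl)
      (fun l hl => by beta_reduce; rw [hFb l hl]; simp)


private lemma key_det {E : Type*} [MeasurableSpace E] {k m : ℕ}
    (ρ : Measure E) [IsProbabilityMeasure ρ]
    (u v : Fin m → E → ℝ) (huv : ∀ r c, Integrable (fun p => u r p * v c p) ρ) :
    ∫ ω : Fin k → E, (Matrix.of fun r c : Fin m => ∑ l : Fin k, u r (ω l) * v c (ω l)).det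
        ∂(Measure.pi fun _ : Fin k => ρ)
      = (k.descFactorial m : ℝ) * (Matrix.of fun r c : Fin m => ∫ p, u r p * v c p ∂ρ).det := by
  classical
  set C : Matrix (Fin m) (Fin m) ℝ := Matrix.of fun r c : Fin m => ∫ p, u r p * v c p ∂ρ with hC
  -- auxiliary pointwise facts
  have hfac : ∀ (f : Fin m → Fin k) (ω : Fin k → E),
      (Matrix.of fun r c : Fin m => u r (ω (f r)) * v c (ω (f r))).det
        = (∏ r, u r (ω (f r))) * (Matrix.of fun r c : Fin m => v c (ω (f r))).det :=
    fun f ω => Matrix.det_mul_column _ _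
  have hzero : ∀ (f : Fin m → Fin k), ¬ Function.Injective f → ∀ ω : Fin k → E,
      (Matrix.of fun r c : Fin m => v c (ω (f r))).det = 0 := by
    intro f hinj ω
    simp only [Function.Injective, not_forall] at hinj
    obtain ⟨r, r', hrr', hne⟩ := hinj
    exact Matrix.det_zero_of_row_eq hne (by funext c; simp [hrr'])
  have hexp : ∀ (f : Fin m → Fin k) (ω : Fin k → E),
      (∏ r, u r (ω (f r))) * (Matrix.of fun r c : Fin m => v c (ω (f r))).det
        = ∑ σ : Equiv.Perm (Fin m),
            ((Equiv.Perm.sign σ : ℤ) : ℝ) * ∏ i, (u i (ω (f i)) * v (σ i) (ω (f i))) := by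
    intro f ω
    rw [← Matrix.det_transpose, Matrix.det_apply', Finset.mul_sum]
    refine Finset.sum_congr rfl fun σ _ => ?_
    simp only [Matrix.transpose_apply, Matrix.of_apply]
    rw [Finset.prod_mul_distrib]
    ring
  -- pointwise expansion
  have hpoint : ∀ ω : Fin k → E,
      (Matrix.of fun r c : Fin m => ∑ l : Fin k, u r (ω l) * v c (ω l)).det
        = ∑ f ∈ Finset.univ.filter (fun f : Fin m → Fin k => Function.Injective f),
            ∑ σ : Equiv.Perm (Fin m),
              ((Equiv.Perm.sign σ : ℤ) : ℝ) * ∏ i, (u i (ω (f i)) * v (σ i) (ω (f i))) := by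
    intro ω
    have h0 : (Matrix.of fun r c : Fin m => ∑ l : Fin k, u r (ω l) * v c (ω l))
        = fun r : Fin m => ∑ l : Fin k, (fun c : Fin m => u r (ω l) * v c (ω l)) := by
      funext r c
      simp [Finset.sum_apply]
    calc (Matrix.of fun r c : Fin m => ∑ l : Fin k, u r (ω l) * v c (ω l)).det
        = (Matrix.detRowAlternating (R := ℝ) (n := Fin m)).toMultilinearMap
            (fun r : Fin m => ∑ l : Fin k, (fun c : Fin m => u r (ω l) * v c (ω l))) := by
          rw [← h0]; rfl
      _ = ∑ f : Fin m → Fin k, (Matrix.detRowAlternating (R := ℝ) (n := Fin m)).toMultilinearMap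
            (fun r : Fin m => (fun c : Fin m => u r (ω (f r)) * v c (ω (f r)))) :=
          MultilinearMap.map_sum _ _
      _ = ∑ f : Fin m → Fin k,
            (Matrix.of fun r c : Fin m => u r (ω (f r)) * v c (ω (f r))).det := rfl
      _ = ∑ f ∈ Finset.univ.filter (fun f : Fin m → Fin k => Function.Injective f),
            (Matrix.of fun r c : Fin m => u r (ω (f r)) * v c (ω (f r))).det := by
          symm
          refine Finset.sum_filter_of_ne fun f _ hne => ?_
          by_contra hinj
          exact hne (by rw [hfac f ω, hzero f hinj ω, mul_zero])
      _ = _ := Finset.sum_congr rfl fun f _ => by rw [hfac f ω, hexp f ω]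
  simp only [hpoint]
  -- integrability of the individual terms
  have hGint : ∀ (f : Fin m → Fin k), Function.Injective f → ∀ σ : Equiv.Perm (Fin m),
      Integrable (fun ω : Fin k → E =>
          ((Equiv.Perm.sign σ : ℤ) : ℝ) * ∏ i, (u i (ω (f i)) * v (σ i) (ω (f i))))
        (Measure.pi fun _ : Fin k => ρ) := fun f hf σ =>
    ((key_indep ρ f hf (fun i p => u i p * v (σ i) p) (fun i => huv i (σ i))).1).const_mul _
  rw [integral_finset_sum _ (fun f hf => integrable_finset_sum _
    (fun σ _ => hGint f (Finset.mem_filter.mp hf).2 σ))]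
  have hterm : ∀ f ∈ Finset.univ.filter (fun f : Fin m → Fin k => Function.Injective f),
      (∫ ω : Fin k → E, (∑ σ : Equiv.Perm (Fin m),
          ((Equiv.Perm.sign σ : ℤ) : ℝ) * ∏ i, (u i (ω (f i)) * v (σ i) (ω (f i))))
        ∂(Measure.pi fun _ : Fin k => ρ)) = C.det := by
    intro f hf
    have hfinj : Function.Injective f := (Finset.mem_filter.mp hf).2
    rw [integral_finset_sum _ (fun σ _ => hGint f hfinj σ)]
    have : ∀ σ : Equiv.Perm (Fin m),
        (∫ ω : Fin k → E, ((Equiv.Perm.sign σ : ℤ) : ℝ)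
            * ∏ i, (u i (ω (f i)) * v (σ i) (ω (f i))) ∂(Measure.pi fun _ : Fin k => ρ))
          = ((Equiv.Perm.sign σ : ℤ) : ℝ) * ∏ i, C i (σ i) := by
      intro σ
      rw [MeasureTheory.integral_const_mul]
      congr 1
      exact (key_indep ρ f hfinj (fun i p => u i p * v (σ i) p) (fun i => huv i (σ i))).2
    rw [Finset.sum_congr rfl fun σ _ => this σ]
    rw [← Matrix.det_transpose C, Matrix.det_apply']
    exact Finset.sum_congr rfl fun σ _ => by simp [Matrix.transpose_apply]
  rw [Finset.sum_congr rfl hterm, Finset.sum_const, nsmul_eq_mul]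
  congr 2
  rw [← Fintype.card_subtype, Fintype.card_congr
    (Equiv.subtypeInjectiveEquivEmbedding (Fin m) (Fin k)),
    Fintype.card_embedding_eq, Fintype.card_fin, Fintype.card_fin]

/-- **Expected adjugate of a product of i.i.d.-row matrices**
(Lemma 1, eq. (2), Dereziński–Warmuth–Hsu).
If the rows `(aᵢ, bᵢ)` of the pair of random matrices `A, B ∈ ℝ^{k×d}` form an i.i.d.
sequence of pairs of random vectors, `k ≥ d−1`, every entry of `E[a₁ b₁ᵀ]` is finite and
every entry of `adj(AᵀB)` is integrable, then
`k^{d−1} · E[adj(AᵀB)] = k^{\underline{d−1}} · adj(E[AᵀB])` with `E[AᵀB] = k · E[a₁ b₁ᵀ]`. -/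

theorem expected_adjugate_of_iid_rows
    {d k : ℕ} (hdk : d - 1 ≤ k)
    (ρ : Measure ((Fin d → ℝ) × (Fin d → ℝ))) [IsProbabilityMeasure ρ]
    (hmom : ∀ i j : Fin d,
      Integrable (fun p : (Fin d → ℝ) × (Fin d → ℝ) => p.1 i * p.2 j) ρ)
    (hadj : ∀ i j : Fin d, Integrable
      (fun ω : Fin k → (Fin d → ℝ) × (Fin d → ℝ) =>
        (((Matrix.of fun l : Fin k => (ω l).1)ᵀ *
          (Matrix.of fun l : Fin k => (ω l).2)).adjugate) i j)
      (Measure.pi fun _ : Fin k => ρ)) :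
    (k : ℝ) ^ (d - 1) •
        (Matrix.of fun i j : Fin d =>
          ∫ ω : Fin k → (Fin d → ℝ) × (Fin d → ℝ),
            (((Matrix.of fun l : Fin k => (ω l).1)ᵀ *
              (Matrix.of fun l : Fin k => (ω l).2)).adjugate) i j
            ∂(Measure.pi fun _ : Fin k => ρ)) =
      (k.descFactorial (d - 1) : ℝ) •
        (Matrix.of fun i j : Fin d => (k : ℝ) * ∫ p, p.1 i * p.2 j ∂ρ).adjugate := by
  cases d with
  | zero =>
      ext i j
      exact i.elim0
  | succ n =>
      simp only [Nat.add_sub_cancel] at hdk ⊢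
      ext i j
      simp only [Matrix.smul_apply, Matrix.of_apply, smul_eq_mul]
      -- rewrite the adjugate entries as signed minors
      have hsub : ∀ ω : Fin k → (Fin (n+1) → ℝ) × (Fin (n+1) → ℝ),
          ((Matrix.of fun l : Fin k => (ω l).1)ᵀ *
              (Matrix.of fun l : Fin k => (ω l).2)).adjugate i j
            = (-1 : ℝ) ^ (j + i : ℕ) *
              (Matrix.of fun r c : Fin n =>
                ∑ l : Fin k, (ω l).1 (j.succAbove r) * (ω l).2 (i.succAbove c)).det := by
        intro ω
        rw [Matrix.adjugate_fin_succ_eq_det_submatrix]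
        have hs : (((Matrix.of fun l : Fin k => (ω l).1)ᵀ *
              (Matrix.of fun l : Fin k => (ω l).2)).submatrix j.succAbove i.succAbove)
            = Matrix.of fun r c : Fin n =>
                ∑ l : Fin k, (ω l).1 (j.succAbove r) * (ω l).2 (i.succAbove c) := by
          ext r c
          simp [Matrix.mul_apply]
        rw [hs]
      simp only [hsub]
      rw [MeasureTheory.integral_const_mul,
        key_det (k := k) ρ (fun r p => p.1 (j.succAbove r)) (fun c p => p.2 (i.succAbove c))
          (fun r c => hmom (j.succAbove r) (i.succAbove c))]
      rw [Matrix.adjugate_fin_succ_eq_det_submatrix]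
      have h2 : ((Matrix.of fun i j : Fin (n+1) => (k : ℝ) * ∫ p, p.1 i * p.2 j ∂ρ).submatrix
            j.succAbove i.succAbove)
          = (k : ℝ) • (Matrix.of fun r c : Fin n =>
              ∫ p : (Fin (n+1) → ℝ) × (Fin (n+1) → ℝ), p.1 (j.succAbove r) * p.2 (i.succAbove c) ∂ρ) := by
        ext r c
        simp
      rw [h2, Matrix.det_smul, Fintype.card_fin]
      ring
end

section
/- Let X̄ ~ VS^k, and conditionally on X̄ let S be a random subset of {1,…,k} of size d with Pr(S = s | X̄) = det(X̄_s)² / det(X̄ᵀX̄) (well-defined by the Cauchy–Binet formula). Then for every fixed subset s ⊆ {1,…,k} with |s| = d, every measurable set B of d×d matrices, and every measurable set C of (k−d)×d matrices: Pr(S = s, X̄_s ∈ B, X̄_{sᶜ} ∈ C) = binom(k,d)^{−1} · VS^d(B) · D_X^{k−d}(C). In particular S is uniform over size-d subsets, X̄_S ~ VS^d, X̄_{{1..k}∖S} ~ D_X^{k−d}, and the three random variables S, X̄_S, X̄_{{1..k}∖S} are mutually independent. -/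
open MeasureTheory ProbabilityTheory Matrix
open scoped ENNReal

/-- The second-moment matrix `Σ = E[x xᵀ]` of a distribution on row vectors in `ℝ^d`. -/
noncomputable def secondMoment {d : ℕ} (μ : Measure (Fin d → ℝ)) :
    Matrix (Fin d) (Fin d) ℝ :=
  Matrix.of fun i j => ∫ x, x i * x j ∂μ

/-- Volume-rescaled sampling of size `k` from `μ`: the measure on `k × d` matrices whose
density with respect to `μ^k` is `det(XᵀX) / (k^{d̲} · det Σ)`. -/
noncomputable def VS {d : ℕ} (μ : Measure (Fin d → ℝ)) (k : ℕ) :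
    Measure (Fin k → Fin d → ℝ) :=
  (Measure.pi fun _ : Fin k => μ).withDensity fun X =>
    ENNReal.ofReal (((Matrix.of X)ᵀ * Matrix.of X).det /
      ((k.descFactorial d : ℝ) * (secondMoment μ).det))

section Aux

lemma VS_psd_det_nonneg {n : ℕ} {M : Matrix (Fin n) (Fin n) ℝ} (hM : M.PosSemidef) :
    0 ≤ M.det := by
  rw [hM.isHermitian.det_eq_prod_eigenvalues]
  exact Finset.prod_nonneg fun i _ => hM.eigenvalues_nonneg i

lemma VS_gram_det_nonneg {k d : ℕ} (X : Matrix (Fin k) (Fin d) ℝ) :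
    0 ≤ (Xᵀ * X).det := by
  have h : (Xᴴ * X).PosSemidef := Matrix.posSemidef_conjTranspose_mul_self X
  have h2 : Xᴴ = Xᵀ := by ext i j; simp [Matrix.conjTranspose_apply]
  rw [h2] at h
  exact VS_psd_det_nonneg h

lemma VS_det_sub_zero {k d : ℕ} {X : Matrix (Fin k) (Fin d) ℝ}
    (h : (Xᵀ * X).det = 0) (f : Fin d → Fin k) :
    (X.submatrix f id).det = 0 := by
  obtain ⟨v, hv, hXv⟩ := (Matrix.exists_mulVec_eq_zero_iff).2 h
  have hX0 : X.mulVec v = 0 := by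
    have hm : v ∈ LinearMap.ker (Xᵀ * X).mulVecLin := hXv
    rw [Matrix.ker_mulVecLin_transpose_mul_self] at hm
    exact hm
  exact Matrix.exists_mulVec_eq_zero_iff.1 ⟨v, hv, funext fun i => congrFun hX0 (f i)⟩

lemma VS_measurable_gram_det {k d : ℕ} :
    Measurable fun X : Fin k → Fin d → ℝ => ((Matrix.of X)ᵀ * Matrix.of X).det := by
  have c1 : Continuous fun X : Fin k → Fin d → ℝ => (Matrix.of X : Matrix _ _ ℝ) :=
    continuous_matrix fun i j => (continuous_apply j).comp (continuous_apply i)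
  exact ((c1.matrix_transpose.matrix_mul c1).matrix_det).measurable

lemma VS_measurable_sub_det {k d : ℕ} (f : Fin d → Fin k) :
    Measurable fun X : Fin k → Fin d → ℝ =>
      (Matrix.of fun i : Fin d => X (f i)).det := by
  have : Continuous fun X : Fin k → Fin d → ℝ =>
      (Matrix.of fun i : Fin d => X (f i)).det := by
    apply Continuous.matrix_det
    exact continuous_matrix fun i j => (continuous_apply j).comp (continuous_apply (f i))
  exact this.measurable

end Aux

/-- **Decomposition of volume-rescaled sampling** (Theorem 3, Dereziński–Warmuth–Hsu).
Let `X̄ ~ VS^k` and, conditionally on `X̄`, let `S` be a random size-`d` subset of `{1,…,k}`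
with `Pr(S = s | X̄) = det(X̄_s)² / det(X̄ᵀX̄)`.  Then for every fixed size-`d` subset `s`,
every measurable set `B` of `d×d` matrices and every measurable set `C` of `(k−d)×d`
matrices (rows listed in increasing order of index),
`Pr(S = s ∧ X̄_s ∈ B ∧ X̄_{sᶜ} ∈ C) = binom(k,d)⁻¹ · VS^d(B) · μ^{k−d}(C)`;
hence `S` is uniform, `X̄_S ~ VS^d`, `X̄_{Sᶜ} ~ μ^{k−d}`, mutually independently. -/
theorem volume_rescaled_composition
    {d k : ℕ} (hdk : d ≤ k)
    (μ : Measure (Fin d → ℝ)) [IsProbabilityMeasure μ]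
    (hmom : ∀ i j : Fin d, Integrable (fun x : Fin d → ℝ => x i * x j) μ)
    (hSig : IsUnit (secondMoment μ).det)
    (s : Finset (Fin k)) (hs : s.card = d) (hsc : sᶜ.card = k - d)
    (B : Set (Fin d → Fin d → ℝ)) (hB : MeasurableSet B)
    (C : Set (Fin (k - d) → Fin d → ℝ)) (hC : MeasurableSet C) :
    (∫⁻ X in {X : Fin k → Fin d → ℝ |
        (fun i : Fin d => X ↑(s.orderIsoOfFin hs i)) ∈ B ∧
        (fun i : Fin (k - d) => X ↑((sᶜ).orderIsoOfFin hsc i)) ∈ C},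
      ENNReal.ofReal
        ((Matrix.of fun i : Fin d => X ↑(s.orderIsoOfFin hs i)).det ^ 2 /
          ((Matrix.of X)ᵀ * Matrix.of X).det) ∂(VS μ k)) =
      ((k.choose d : ℝ≥0∞))⁻¹ * VS μ d B *
        (Measure.pi fun _ : Fin (k - d) => μ) C := by
  classical
  have hdet : (secondMoment μ).det ≠ 0 := hSig.ne_zero
  rcases hdet.lt_or_gt with hneg | hpos
  · -- degenerate (impossible-for-second-moment) case: detΣ < 0, both sides vanish
    have hz : ∀ m : ℕ, VS μ m = 0 := by
      intro m
      have h0 : (fun X : Fin m → Fin d → ℝ => ENNReal.ofReal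
          (((Matrix.of X)ᵀ * Matrix.of X).det /
            ((m.descFactorial d : ℝ) * (secondMoment μ).det))) = fun _ => 0 := by
        funext X
        rw [ENNReal.ofReal_eq_zero]
        exact div_nonpos_of_nonneg_of_nonpos (VS_gram_det_nonneg _)
          (mul_nonpos_of_nonneg_of_nonpos (Nat.cast_nonneg _) hneg.le)
      rw [VS, h0]; exact withDensity_zero
    rw [hz k, hz d]
    simp
  · -- main case
    set es : Fin d → Fin k := fun i => ↑(s.orderIsoOfFin hs i) with hes
    set ec : Fin (k - d) → Fin k := fun j => ↑((sᶜ).orderIsoOfFin hsc j) with hec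
    set πk := Measure.pi fun _ : Fin k => μ with hπk
    set πd := Measure.pi fun _ : Fin d => μ with hπd
    set πc := Measure.pi fun _ : Fin (k - d) => μ with hπc
    set Sd := (secondMoment μ).det with hSd
    have hkdpos : 0 < (k.descFactorial d : ℝ) := by
      have : k.descFactorial d ≠ 0 := by
        intro h
        exact absurd (Nat.descFactorial_eq_zero_iff_lt.1 h) (not_lt.2 hdk)
      exact_mod_cast Nat.pos_of_ne_zero this
    have hddpos : 0 < (d.descFactorial d : ℝ) := by
      have : d.descFactorial d ≠ 0 := by
        intro h
        exact absurd (Nat.descFactorial_eq_zero_iff_lt.1 h) (lt_irrefl d)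
      exact_mod_cast Nat.pos_of_ne_zero this
    set c : ℝ := (k.descFactorial d : ℝ) * Sd with hcdef
    set cd : ℝ := (d.descFactorial d : ℝ) * Sd with hcddef
    have hc : 0 < c := mul_pos hkdpos hpos
    have hcd : 0 < cd := mul_pos hddpos hpos
    set A : Set (Fin k → Fin d → ℝ) :=
      {X | (fun i : Fin d => X (es i)) ∈ B ∧ (fun j : Fin (k - d) => X (ec j)) ∈ C} with hA
    have hms : Measurable fun X : Fin k → Fin d → ℝ => fun i : Fin d => X (es i) :=
      measurable_pi_lambda _ fun i => measurable_pi_apply (es i)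
    have hmc : Measurable fun X : Fin k → Fin d → ℝ => fun j : Fin (k - d) => X (ec j) :=
      measurable_pi_lambda _ fun j => measurable_pi_apply (ec j)
    have hAmeas : MeasurableSet A := (hms hB).inter (hmc hC)
    -- measurable densities
    have hfmeas : Measurable fun X : Fin k → Fin d → ℝ =>
        ENNReal.ofReal (((Matrix.of X)ᵀ * Matrix.of X).det / c) :=
      ENNReal.measurable_ofReal.comp (VS_measurable_gram_det.div_const c)
    have hgmeas : Measurable fun X : Fin k → Fin d → ℝ =>
        ENNReal.ofReal ((Matrix.of fun i : Fin d => X (es i)).det ^ 2 /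
          ((Matrix.of X)ᵀ * Matrix.of X).det) :=
      ENNReal.measurable_ofReal.comp
        (((VS_measurable_sub_det es).pow_const 2).div VS_measurable_gram_det)
    have hameas : Measurable fun X : Fin k → Fin d → ℝ =>
        ENNReal.ofReal ((Matrix.of fun i : Fin d => X (es i)).det ^ 2) :=
      ENNReal.measurable_ofReal.comp ((VS_measurable_sub_det es).pow_const 2)
    -- the splitting equivalence
    have hbij : Function.Bijective (Sum.elim es ec) := by
      constructor
      · intro x y hxy
        match x, y with
        | Sum.inl i, Sum.inl i' =>
          simp only [Sum.elim_inl] at hxy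
          exact congrArg Sum.inl ((s.orderIsoOfFin hs).injective (Subtype.ext hxy))
        | Sum.inl i, Sum.inr j =>
          exfalso
          simp only [Sum.elim_inl, Sum.elim_inr] at hxy
          have h1 : es i ∈ s := (s.orderIsoOfFin hs i).2
          have h2 : ec j ∈ sᶜ := ((sᶜ).orderIsoOfFin hsc j).2
          rw [hxy] at h1
          exact (Finset.mem_compl.1 h2) h1
        | Sum.inr j, Sum.inl i =>
          exfalso
          simp only [Sum.elim_inl, Sum.elim_inr] at hxy
          have h1 : es i ∈ s := (s.orderIsoOfFin hs i).2
          have h2 : ec j ∈ sᶜ := ((sᶜ).orderIsoOfFin hsc j).2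
          rw [← hxy] at h1
          exact (Finset.mem_compl.1 h2) h1
        | Sum.inr j, Sum.inr j' =>
          simp only [Sum.elim_inr] at hxy
          exact congrArg Sum.inr (((sᶜ).orderIsoOfFin hsc).injective (Subtype.ext hxy))
      · intro m
        by_cases hm : m ∈ s
        · refine ⟨Sum.inl ((s.orderIsoOfFin hs).symm ⟨m, hm⟩), ?_⟩
          show ((s.orderIsoOfFin hs) ((s.orderIsoOfFin hs).symm ⟨m, hm⟩) : Fin k) = m
          rw [OrderIso.apply_symm_apply]
        · refine ⟨Sum.inr (((sᶜ).orderIsoOfFin hsc).symm ⟨m, Finset.mem_compl.2 hm⟩), ?_⟩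
          show (((sᶜ).orderIsoOfFin hsc) (((sᶜ).orderIsoOfFin hsc).symm
            ⟨m, Finset.mem_compl.2 hm⟩) : Fin k) = m
          rw [OrderIso.apply_symm_apply]
    set e : Fin d ⊕ Fin (k - d) ≃ Fin k := Equiv.ofBijective _ hbij with he
    set T : (Fin d → Fin d → ℝ) × (Fin (k - d) → Fin d → ℝ) → (Fin k → Fin d → ℝ) :=
      fun p => (MeasurableEquiv.piCongrLeft (fun _ : Fin k => (Fin d → ℝ)) e)
        ((MeasurableEquiv.sumPiEquivProdPi (fun _ : Fin d ⊕ Fin (k - d) => (Fin d → ℝ))).symm p)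
      with hT
    have hTmp : MeasurePreserving T (πd.prod πc) πk :=
      (measurePreserving_piCongrLeft (fun _ : Fin k => μ) e).comp
        (measurePreserving_sumPiEquivProdPi_symm (fun _ : Fin d ⊕ Fin (k - d) => μ))
    have hTs : ∀ p i, T p (es i) = p.1 i := fun p i =>
      Equiv.piCongrLeft_apply_apply (fun _ : Fin k => (Fin d → ℝ)) e _ (Sum.inl i)
    have hTc : ∀ p j, T p (ec j) = p.2 j := fun p j =>
      Equiv.piCongrLeft_apply_apply (fun _ : Fin k => (Fin d → ℝ)) e _ (Sum.inr j)
    -- the two factor functions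
    set F : (Fin d → Fin d → ℝ) → ℝ≥0∞ :=
      B.indicator fun Y => ENNReal.ofReal ((Matrix.of Y).det ^ 2) with hF
    set G : (Fin (k - d) → Fin d → ℝ) → ℝ≥0∞ := C.indicator 1 with hG
    have hFmeas : Measurable F := by
      apply Measurable.indicator _ hB
      exact ENNReal.measurable_ofReal.comp
        ((VS_measurable_sub_det (id : Fin d → Fin d)).pow_const 2)
    have hGmeas : Measurable G := measurable_const.indicator hC
    -- LHS computation
    have hL : (∫⁻ X in A,
        ENNReal.ofReal ((Matrix.of fun i : Fin d => X (es i)).det ^ 2 /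
          ((Matrix.of X)ᵀ * Matrix.of X).det) ∂(VS μ k)) =
        ((∫⁻ Y in B, ENNReal.ofReal ((Matrix.of Y).det ^ 2) ∂πd) * πc C) *
          ENNReal.ofReal c⁻¹ := by
      have h1 : VS μ k = πk.withDensity fun X =>
          ENNReal.ofReal (((Matrix.of X)ᵀ * Matrix.of X).det / c) := rfl
      rw [h1, setLIntegral_withDensity_eq_setLIntegral_mul πk hfmeas hgmeas hAmeas]
      have hpt : ∀ X : Fin k → Fin d → ℝ,
          ((fun X : Fin k → Fin d → ℝ =>
              ENNReal.ofReal (((Matrix.of X)ᵀ * Matrix.of X).det / c)) *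
            fun X : Fin k → Fin d → ℝ =>
              ENNReal.ofReal ((Matrix.of fun i : Fin d => X (es i)).det ^ 2 /
              ((Matrix.of X)ᵀ * Matrix.of X).det)) X =
          ENNReal.ofReal ((Matrix.of fun i : Fin d => X (es i)).det ^ 2) *
            ENNReal.ofReal c⁻¹ := by
        intro X
        simp only [Pi.mul_apply]
        by_cases hb : ((Matrix.of X)ᵀ * Matrix.of X).det = 0
        · have ha : (Matrix.of fun i : Fin d => X (es i)).det = 0 :=
            VS_det_sub_zero hb es
          simp [hb, ha]
        · have hbpos : 0 < ((Matrix.of X)ᵀ * Matrix.of X).det :=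
            (VS_gram_det_nonneg _).lt_of_ne (Ne.symm hb)
          rw [← ENNReal.ofReal_mul (by positivity), ← ENNReal.ofReal_mul (by positivity)]
          congr 1
          field_simp
      rw [lintegral_congr hpt, lintegral_mul_const _ hameas]
      congr 1
      -- factorize the set-integral
      rw [← lintegral_indicator hAmeas]
      have hHmeas : Measurable (A.indicator fun X =>
          ENNReal.ofReal ((Matrix.of fun i : Fin d => X (es i)).det ^ 2)) :=
        hameas.indicator hAmeas
      rw [← hTmp.lintegral_comp hHmeas]
      have hcomp : ∀ p, (A.indicator fun X =>
          ENNReal.ofReal ((Matrix.of fun i : Fin d => X (es i)).det ^ 2)) (T p) =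
          F p.1 * G p.2 := by
        intro p
        have h1 : (fun i : Fin d => T p (es i)) = p.1 := funext (hTs p)
        have h2 : (fun j : Fin (k - d) => T p (ec j)) = p.2 := funext (hTc p)
        by_cases hp1 : p.1 ∈ B <;> by_cases hp2 : p.2 ∈ C <;>
          simp [Set.indicator, hA, hF, hG, h1, h2, hp1, hp2]
      rw [lintegral_congr hcomp, lintegral_prod_mul hFmeas.aemeasurable hGmeas.aemeasurable,
        hF, hG, lintegral_indicator hB, lintegral_indicator_one hC]
    have hR : VS μ d B = (∫⁻ Y in B, ENNReal.ofReal ((Matrix.of Y).det ^ 2) ∂πd) *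
        ENNReal.ofReal cd⁻¹ := by
      have h1 : VS μ d B = ∫⁻ Y in B,
          ENNReal.ofReal (((Matrix.of Y)ᵀ * Matrix.of Y).det / cd) ∂πd :=
        withDensity_apply _ hB
      rw [h1]
      have hpt : ∀ Y : Fin d → Fin d → ℝ,
          ENNReal.ofReal (((Matrix.of Y)ᵀ * Matrix.of Y).det / cd) =
          ENNReal.ofReal ((Matrix.of Y).det ^ 2) * ENNReal.ofReal cd⁻¹ := by
        intro Y
        rw [Matrix.det_mul, Matrix.det_transpose, ← sq, div_eq_mul_inv,
          ENNReal.ofReal_mul (sq_nonneg _)]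
      rw [lintegral_congr hpt]
      exact lintegral_mul_const _ (by
        exact ENNReal.measurable_ofReal.comp
          ((VS_measurable_sub_det (id : Fin d → Fin d)).pow_const 2))
    have hcc : ENNReal.ofReal c⁻¹ = (k.choose d : ℝ≥0∞)⁻¹ * ENNReal.ofReal cd⁻¹ := by
      have hchoose : 0 < (k.choose d : ℝ) := by exact_mod_cast Nat.choose_pos hdk
      have hceq : c = (k.choose d : ℝ) * cd := by
        rw [hcdef, hcddef, Nat.descFactorial_eq_factorial_mul_choose, Nat.descFactorial_self]
        push_cast
        ring
      rw [hceq, mul_inv, ENNReal.ofReal_mul (by positivity)]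
      congr 1
      rw [ENNReal.ofReal_inv_of_pos hchoose, ENNReal.ofReal_natCast]
    rw [hL, hR, hcc]
    ring
end

section
/- Let X̄ ~ VS^k with rows x̄_1ᵀ,…,x̄_kᵀ. Then for each i ∈ {1,…,k}, the marginal distribution of the row vector x̄_iᵀ is the mixture (d/k)·Lev + (1 − d/k)·D_X; that is, for every measurable A ⊆ ℝ^d: Pr(x̄_iᵀ ∈ A) = (d/k)·Lev(A) + (1 − d/k)·D_X(A). -/
open MeasureTheory ProbabilityTheory Matrix
open scoped ENNReal

/-- Leverage score sampling from `μ`: the measure on `ℝ^d` whose density with respect to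
`μ` is `l_x / d` where `l_x = xᵀ Σ⁻¹ x`. -/
noncomputable def Lev {d : ℕ} (μ : Measure (Fin d → ℝ)) : Measure (Fin d → ℝ) :=
  μ.withDensity fun x =>
    ENNReal.ofReal (dotProduct x (Matrix.mulVec (secondMoment μ)⁻¹ x) / d)

/-! ### Auxiliary lemmas -/

section Aux

/-- Fubini for a finite product of copies of a probability measure. -/
lemma pi_integral_prod {δ : Type*} [MeasurableSpace δ] (μ : Measure δ)
    [IsProbabilityMeasure μ] {k : ℕ} (f : Fin k → δ → ℝ) :
    ∫ X, ∏ t, f t (X t) ∂(Measure.pi fun _ : Fin k => μ) = ∏ t, ∫ x, f t x ∂μ := by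
  letI : MeasureSpace δ := ⟨μ⟩
  rw [show (Measure.pi fun _ : Fin k => μ) = (volume : Measure (Fin k → δ)) from
    (MeasureTheory.volume_pi).symm]
  exact MeasureTheory.integral_fintype_prod_eq_prod f

lemma pi_integrable_prod {δ : Type*} [MeasurableSpace δ] (μ : Measure δ)
    [IsProbabilityMeasure μ] {k : ℕ} (f : Fin k → δ → ℝ) (hf : ∀ t, Integrable (f t) μ) :
    Integrable (fun X : Fin k → δ => ∏ t, f t (X t)) (Measure.pi fun _ : Fin k => μ) := by
  letI : MeasureSpace δ := ⟨μ⟩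
  rw [show (Measure.pi fun _ : Fin k => μ) = (volume : Measure (Fin k → δ)) from
    (MeasureTheory.volume_pi).symm]
  exact MeasureTheory.Integrable.fintype_prod hf

lemma det_sum_perm {d : ℕ} (B : Matrix (Fin d) (Fin d) ℝ) :
    ∑ σ : Equiv.Perm (Fin d), ((Equiv.Perm.sign σ : ℤ) : ℝ) * ∏ p, B p (σ p) = B.det := by
  rw [← Matrix.det_transpose, Matrix.det_apply']
  rfl

lemma det_gram_expand {d k : ℕ} (X : Fin k → Fin d → ℝ) :
    ((Matrix.of X)ᵀ * Matrix.of X).det =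
      ∑ h ∈ Finset.univ.filter (fun h : Fin d → Fin k => Function.Injective h),
        ∑ σ : Equiv.Perm (Fin d), ((Equiv.Perm.sign σ : ℤ) : ℝ) *
          ∏ p, (X (h p) p * X (h p) (σ p)) := by
  classical
  have h1 : ((Matrix.of X)ᵀ * Matrix.of X).det
      = Matrix.detRowAlternating (fun p : Fin d => ∑ t : Fin k, X t p • X t) := by
    have : ((Matrix.of X)ᵀ * Matrix.of X) = fun p : Fin d => ∑ t : Fin k, X t p • X t := by
      funext p q
      simp [Matrix.mul_apply, Finset.sum_apply, smul_eq_mul]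
    rw [this]; rfl
  rw [h1, ← AlternatingMap.coe_multilinearMap,
    (Matrix.detRowAlternating).toMultilinearMap.map_sum (fun p t => X t p • X t)]
  simp only [AlternatingMap.coe_multilinearMap]
  rw [Finset.sum_filter]
  refine Finset.sum_congr rfl fun h _ => ?_
  by_cases hinj : Function.Injective h
  · rw [if_pos hinj]
    have h2 : Matrix.detRowAlternating (fun p : Fin d => X (h p) p • X (h p))
        = (∏ p, X (h p) p) • Matrix.detRowAlternating (fun p : Fin d => X (h p)) :=
      (Matrix.detRowAlternating).toMultilinearMap.map_smul_univ (fun p => X (h p) p)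
        (fun p => X (h p))
    have h3 : Matrix.detRowAlternating (fun p : Fin d => X (h p))
        = ∑ σ : Equiv.Perm (Fin d), ((Equiv.Perm.sign σ : ℤ) : ℝ) * ∏ p, X (h p) (σ p) := by
      rw [show Matrix.detRowAlternating (fun p : Fin d => X (h p))
          = (Matrix.of fun p q => X (h p) q).det from rfl,
        ← det_sum_perm]
      simp only [Matrix.of_apply]
    rw [h2, h3, smul_eq_mul, Finset.mul_sum]
    refine Finset.sum_congr rfl fun σ _ => ?_
    rw [Finset.prod_mul_distrib]
    ring
  · rw [if_neg hinj]
    have hni : ¬ Function.Injective (fun p : Fin d => X (h p)) := by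
      intro hc
      exact hinj fun a b hab => hc (by simp [hab])
    have h2 : Matrix.detRowAlternating (fun p : Fin d => X (h p) p • X (h p))
        = (∏ p, X (h p) p) • Matrix.detRowAlternating (fun p : Fin d => X (h p)) :=
      (Matrix.detRowAlternating).toMultilinearMap.map_smul_univ (fun p => X (h p) p)
        (fun p => X (h p))
    rw [h2, (Matrix.detRowAlternating).map_eq_zero_of_not_injective _ hni, smul_zero]

lemma inj_card {d k : ℕ} :
    (Finset.univ.filter (fun h : Fin d → Fin k => Function.Injective h)).card
      = k.descFactorial d := by
  classical
  have h1 : (Finset.univ.filter (fun h : Fin d → Fin k => Function.Injective h)).card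
      = Fintype.card {f : Fin d → Fin k // Function.Injective f} :=
    (Fintype.card_subtype _).symm
  rw [h1, Fintype.card_congr (Equiv.subtypeInjectiveEquivEmbedding (Fin d) (Fin k)),
    Fintype.card_embedding_eq, Fintype.card_fin, Fintype.card_fin]

lemma count_fiber {d k : ℕ} (p0 : Fin d) (i : Fin k) :
    k * ((Finset.univ.filter (fun h : Fin d → Fin k => Function.Injective h)).filter
        (fun h => h p0 = i)).card = k.descFactorial d := by
  classical
  set s := Finset.univ.filter (fun h : Fin d → Fin k => Function.Injective h) with hs
  have hconst : ∀ i' : Fin k,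
      (s.filter (fun h => h p0 = i')).card = (s.filter (fun h => h p0 = i)).card := by
    intro i'
    refine Finset.card_bij' (fun h _ => (Equiv.swap i' i) ∘ h)
      (fun h _ => (Equiv.swap i' i) ∘ h) ?_ ?_ ?_ ?_
    · intro h hh
      simp only [hs, Finset.mem_filter, Finset.mem_univ, true_and] at hh ⊢
      exact ⟨(Equiv.swap i' i).injective.comp hh.1, by simp [hh.2]⟩
    · intro h hh
      simp only [hs, Finset.mem_filter, Finset.mem_univ, true_and] at hh ⊢
      refine ⟨(Equiv.swap i' i).injective.comp hh.1, by simp [hh.2, Equiv.swap_apply_right]⟩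
    · intro h _; funext p; simp
    · intro h _; funext p; simp
  have hsum : ∑ i' : Fin k, (s.filter (fun h => h p0 = i')).card = s.card :=
    (Finset.card_eq_sum_card_fiberwise (fun h _ => Finset.mem_univ (h p0))).symm
  calc k * (s.filter (fun h => h p0 = i)).card
      = ∑ _i' : Fin k, (s.filter (fun h => h p0 = i)).card := by
        rw [Finset.sum_const, Finset.card_univ, Fintype.card_fin, smul_eq_mul]
    _ = ∑ i' : Fin k, (s.filter (fun h => h p0 = i')).card :=
        Finset.sum_congr rfl fun i' _ => (hconst i').symm
    _ = s.card := hsum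
    _ = k.descFactorial d := inj_card

lemma det_gram_nonneg {d k : ℕ} (X : Fin k → Fin d → ℝ) :
    0 ≤ ((Matrix.of X)ᵀ * Matrix.of X).det := by
  have hpsd : (((Matrix.of X)ᵀ * Matrix.of X)).PosSemidef := by
    have := Matrix.posSemidef_conjTranspose_mul_self (Matrix.of X)
    simpa using this
  exact hpsd.det_nonneg

end Aux

section Moment

variable {d : ℕ} (μ : Measure (Fin d → ℝ)) [IsProbabilityMeasure μ]

lemma quad_expand (B : Matrix (Fin d) (Fin d) ℝ) (x : Fin d → ℝ) :
    dotProduct x (B *ᵥ x) = ∑ q, ∑ p, B q p * (x q * x p) := by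
  simp only [dotProduct, Matrix.mulVec, dotProduct, Finset.mul_sum]
  refine Finset.sum_congr rfl fun q _ => Finset.sum_congr rfl fun p _ => by ring

variable (hmom : ∀ i j : Fin d, Integrable (fun x : Fin d → ℝ => x i * x j) μ)

include hmom

lemma quad_integrable (B : Matrix (Fin d) (Fin d) ℝ) :
    Integrable (fun x : Fin d → ℝ => dotProduct x (B *ᵥ x)) μ := by
  have : (fun x : Fin d → ℝ => dotProduct x (B *ᵥ x))
      = fun x => ∑ q, ∑ p, B q p * (x q * x p) := funext fun x => quad_expand B x
  rw [this]
  exact integrable_finset_sum _ fun q _ =>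
    integrable_finset_sum _ fun p _ => (hmom q p).const_mul _

lemma setIntegral_quad (B : Matrix (Fin d) (Fin d) ℝ) (A : Set (Fin d → ℝ)) :
    ∫ x in A, dotProduct x (B *ᵥ x) ∂μ
      = ∑ q, ∑ p, B q p * ∫ x in A, x q * x p ∂μ := by
  have h1 : ∫ x in A, dotProduct x (B *ᵥ x) ∂μ
      = ∫ x in A, ∑ q, ∑ p, B q p * (x q * x p) ∂μ := by
    refine integral_congr_ae (Filter.Eventually.of_forall fun x => quad_expand B x)
  rw [h1]; refine (integral_finset_sum _ fun q _ => integrable_finset_sum _ fun p _ =>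
    ((hmom q p).restrict).const_mul _).trans ?_
  refine Finset.sum_congr rfl fun q _ => ?_
  refine (integral_finset_sum _ fun p _ => ((hmom q p).restrict).const_mul _).trans ?_
  exact Finset.sum_congr rfl fun p _ => integral_const_mul _ _

lemma secondMoment_posSemidef : (secondMoment μ).PosSemidef := by
  refine Matrix.PosSemidef.of_dotProduct_mulVec_nonneg ?_ ?_
  · show (secondMoment μ)ᴴ = secondMoment μ
    funext p q
    simp only [Matrix.conjTranspose_apply, secondMoment, Matrix.of_apply, star_trivial]
    exact integral_congr_ae (Filter.Eventually.of_forall fun x => mul_comm _ _)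
  · intro y
    rw [star_trivial, quad_expand]
    have hval : ∀ q p : Fin d, secondMoment μ q p * (y q * y p)
        = ∫ x, (y q * x q) * (y p * x p) ∂μ := by
      intro q p
      rw [show (fun x : Fin d → ℝ => (y q * x q) * (y p * x p))
          = fun x => (y q * y p) * (x q * x p) by funext x; ring]
      rw [integral_const_mul]
      simp only [secondMoment, Matrix.of_apply]
      ring
    calc (0:ℝ) ≤ ∫ x, (∑ q, y q * x q)^2 ∂μ :=
          integral_nonneg fun x => sq_nonneg _
      _ = ∑ q, ∑ p, secondMoment μ q p * (y q * y p) := by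
          have : ∀ x : Fin d → ℝ, (∑ q, y q * x q)^2
              = ∑ q, ∑ p, (y q * x q) * (y p * x p) := by
            intro x
            rw [sq, Finset.sum_mul_sum]
          rw [integral_congr_ae (Filter.Eventually.of_forall this)]
          rw [integral_finset_sum _ fun q _ => integrable_finset_sum _ fun p _ => by
            have : (fun x : Fin d → ℝ => (y q * x q) * (y p * x p))
                = fun x => (y q * y p) * (x q * x p) := by funext x; ring
            rw [this]; exact (hmom q p).const_mul _]
          · refine Finset.sum_congr rfl fun q _ => ?_
            rw [integral_finset_sum _ fun p _ => ?_]
            · exact Finset.sum_congr rfl fun p _ => (hval q p).symm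
            · have : (fun x : Fin d → ℝ => (y q * x q) * (y p * x p))
                  = fun x => (y q * y p) * (x q * x p) := by funext x; ring
              rw [this]; exact (hmom q p).const_mul _

lemma secondMoment_posDef (hSig : IsUnit (secondMoment μ).det) :
    (secondMoment μ).PosDef := by
  have hpsd := secondMoment_posSemidef μ hmom
  refine Matrix.PosDef.of_dotProduct_mulVec_pos hpsd.1 fun y hy => ?_
  rcases lt_or_eq_of_le (hpsd.dotProduct_mulVec_nonneg y) with h | h
  · exact h
  · exfalso
    have h0 : (secondMoment μ) *ᵥ y = 0 := (hpsd.dotProduct_mulVec_zero_iff y).mp h.symm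
    have : y = 0 := by
      have := congrArg (fun v => (secondMoment μ)⁻¹ *ᵥ v) h0
      simpa [Matrix.mulVec_mulVec, Matrix.nonsing_inv_mul _ hSig] using this
    exact hy this

end Moment

section RowFun

open Finset

variable {d k : ℕ}

/-- The per-row factor appearing in the expansion of `1_A(X i) · det(XᵀX)`. -/
noncomputable def rowFun (A : Set (Fin d → ℝ)) (i : Fin k) (h : Fin d → Fin k)
    (σ : Equiv.Perm (Fin d)) (t : Fin k) (x : Fin d → ℝ) : ℝ :=
  (if t = i then A.indicator 1 x else 1) *
    ∏ p ∈ Finset.univ.filter (fun p => h p = t), (x p * x (σ p))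

lemma rowFun_prod (A : Set (Fin d → ℝ)) (i : Fin k) (h : Fin d → Fin k)
    (σ : Equiv.Perm (Fin d)) (X : Fin k → Fin d → ℝ) :
    ∏ t, rowFun A i h σ t (X t)
      = A.indicator 1 (X i) * ∏ p, (X (h p) p * X (h p) (σ p)) := by
  unfold rowFun
  rw [Finset.prod_mul_distrib]
  congr 1
  · rw [Finset.prod_ite_eq' Finset.univ i (fun t => A.indicator 1 (X t))]
    rw [if_pos (Finset.mem_univ i)]
  · rw [← Finset.prod_fiberwise Finset.univ h (fun p => X (h p) p * X (h p) (σ p))]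
    refine Finset.prod_congr rfl fun t _ => Finset.prod_congr rfl fun p hp => ?_
    rw [Finset.mem_filter] at hp
    rw [hp.2]

lemma fiber_singleton {h : Fin d → Fin k} (hinj : Function.Injective h) (p : Fin d) :
    Finset.univ.filter (fun p' => h p' = h p) = {p} := by
  ext p'
  simp only [Finset.mem_filter, Finset.mem_univ, true_and, Finset.mem_singleton]
  exact ⟨fun hh => hinj hh, fun hh => by rw [hh]⟩

lemma fiber_empty {h : Fin d → Fin k} {t : Fin k} (ht : ∀ p, h p ≠ t) :
    Finset.univ.filter (fun p => h p = t) = ∅ := by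
  ext p
  simp only [Finset.mem_filter, Finset.mem_univ, true_and, Finset.notMem_empty, iff_false]
  exact ht p

lemma indicator_one_mul {α : Type*} (A : Set α) (f : α → ℝ) (x : α) :
    A.indicator 1 x * f x = A.indicator f x := by
  by_cases hx : x ∈ A <;> simp [hx]

variable (μ : Measure (Fin d → ℝ)) [IsProbabilityMeasure μ]

lemma int_ind_one {A : Set (Fin d → ℝ)} (hA : MeasurableSet A) :
    ∫ x, A.indicator 1 x ∂μ = (μ A).toReal :=
  integral_indicator_one hA

lemma int_ind_mul {A : Set (Fin d → ℝ)} (hA : MeasurableSet A) (p q : Fin d) :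
    ∫ x, A.indicator 1 x * (x p * x q) ∂μ = ∫ x in A, x p * x q ∂μ := by
  rw [show (fun x : Fin d → ℝ => A.indicator 1 x * (x p * x q))
      = A.indicator (fun x => x p * x q) from funext fun x => indicator_one_mul A (fun y => y p * y q) x,
    integral_indicator hA]

variable (hmom : ∀ i j : Fin d, Integrable (fun x : Fin d → ℝ => x i * x j) μ)

include hmom

lemma rowFun_integrable {A : Set (Fin d → ℝ)} (hA : MeasurableSet A) (i : Fin k)
    {h : Fin d → Fin k} (hinj : Function.Injective h) (σ : Equiv.Perm (Fin d)) (t : Fin k) :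
    Integrable (rowFun A i h σ t) μ := by
  classical
  by_cases he : ∃ p, h p = t
  · obtain ⟨p, rfl⟩ := he
    unfold rowFun
    rw [fiber_singleton hinj p]
    simp only [Finset.prod_singleton]
    by_cases hti : h p = i
    · simp only [if_pos hti]
      rw [show (fun x : Fin d → ℝ => A.indicator 1 x * (x p * x (σ p)))
          = A.indicator (fun x => x p * x (σ p)) from funext fun x => indicator_one_mul A (fun y => y p * y (σ p)) x]
      exact (hmom p (σ p)).indicator hA
    · simp only [if_neg hti, one_mul]
      exact hmom p (σ p)
  · push_neg at he
    unfold rowFun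
    rw [fiber_empty he]
    simp only [Finset.prod_empty, mul_one]
    by_cases hti : t = i
    · simp only [if_pos hti]
      exact (integrable_const (1:ℝ)).indicator hA
    · simp only [if_neg hti]
      exact integrable_const 1

omit hmom in
lemma eval_sum {A : Set (Fin d → ℝ)} (hA : MeasurableSet A) (i : Fin k)
    {h : Fin d → Fin k} (hinj : Function.Injective h) :
    ∑ σ : Equiv.Perm (Fin d), ((Equiv.Perm.sign σ : ℤ) : ℝ) *
        ∏ t, ∫ x, rowFun A i h σ t x ∂μ
      = (if ∀ p, h p ≠ i then (μ A).toReal * (secondMoment μ).det else 0)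
        + ∑ p0 ∈ Finset.univ.filter (fun p => h p = i),
            (Matrix.updateRow (secondMoment μ) p0 (fun q => ∫ x in A, x p0 * x q ∂μ)).det := by
  classical
  by_cases hmiss : ∀ p, h p ≠ i
  · rw [if_pos hmiss, fiber_empty hmiss, Finset.sum_empty, add_zero]
    have hval : ∀ σ : Equiv.Perm (Fin d), ∏ t, ∫ x, rowFun A i h σ t x ∂μ
        = (μ A).toReal * ∏ p, secondMoment μ p (σ p) := by
      intro σ
      rw [← Finset.prod_mul_prod_compl (Finset.univ.image h)
        (fun t => ∫ x, rowFun A i h σ t x ∂μ)]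
      have himg : ∏ t ∈ Finset.univ.image h, ∫ x, rowFun A i h σ t x ∂μ
          = ∏ p, secondMoment μ p (σ p) := by
        rw [Finset.prod_image (fun p _ q _ hpq => hinj hpq)]
        refine Finset.prod_congr rfl fun p _ => ?_
        unfold rowFun
        rw [fiber_singleton hinj p]
        simp only [Finset.prod_singleton, if_neg (hmiss p), one_mul]
        rfl
      have hcompl : ∏ t ∈ (Finset.univ.image h)ᶜ, ∫ x, rowFun A i h σ t x ∂μ
          = (μ A).toReal := by
        have hstep : ∀ t ∈ (Finset.univ.image h)ᶜ, (∫ x, rowFun A i h σ t x ∂μ)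
            = if t = i then (μ A).toReal else 1 := by
          intro t ht
          rw [Finset.mem_compl, Finset.mem_image] at ht
          push_neg at ht
          have hfib : Finset.univ.filter (fun p => h p = t) = ∅ :=
            fiber_empty (fun p => ht p (Finset.mem_univ p))
          unfold rowFun
          rw [hfib]
          simp only [Finset.prod_empty, mul_one]
          by_cases hti : t = i
          · simp only [if_pos hti, int_ind_one μ hA]
          · simp only [if_neg hti, integral_const, measure_univ, ENNReal.toReal_one, probReal_univ, one_smul]
        rw [Finset.prod_congr rfl hstep,
          Finset.prod_ite_eq' ((Finset.univ.image h)ᶜ) i (fun _ => (μ A).toReal)]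
        have : i ∈ (Finset.univ.image h)ᶜ := by
          rw [Finset.mem_compl, Finset.mem_image]
          push_neg
          exact fun p _ => hmiss p
        rw [if_pos this]
      rw [himg, hcompl, mul_comm]
    calc ∑ σ : Equiv.Perm (Fin d), ((Equiv.Perm.sign σ : ℤ) : ℝ) *
            ∏ t, ∫ x, rowFun A i h σ t x ∂μ
        = (μ A).toReal * ∑ σ : Equiv.Perm (Fin d), ((Equiv.Perm.sign σ : ℤ) : ℝ) *
            ∏ p, secondMoment μ p (σ p) := by
          rw [Finset.mul_sum]
          exact Finset.sum_congr rfl fun σ _ => by rw [hval σ]; ring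
      _ = (μ A).toReal * (secondMoment μ).det := by rw [det_sum_perm]
  · push_neg at hmiss
    obtain ⟨p0, hp0⟩ := hmiss
    have hne : ¬ (∀ p, h p ≠ i) := by push_neg; exact ⟨p0, hp0⟩
    have hfilter : Finset.univ.filter (fun p => h p = i) = {p0} := by
      rw [← hp0]
      exact fiber_singleton hinj p0
    rw [if_neg hne, hfilter, Finset.sum_singleton, zero_add]
    have hval : ∀ σ : Equiv.Perm (Fin d), ∏ t, ∫ x, rowFun A i h σ t x ∂μ
        = ∏ p, (Matrix.updateRow (secondMoment μ) p0
            (fun q => ∫ x in A, x p0 * x q ∂μ)) p (σ p) := by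
      intro σ
      rw [← Finset.prod_mul_prod_compl (Finset.univ.image h)
        (fun t => ∫ x, rowFun A i h σ t x ∂μ)]
      have hcompl : ∏ t ∈ (Finset.univ.image h)ᶜ, ∫ x, rowFun A i h σ t x ∂μ = 1 := by
        refine Finset.prod_eq_one fun t ht => ?_
        rw [Finset.mem_compl, Finset.mem_image] at ht
        push_neg at ht
        have hti : t ≠ i := by
          intro hc
          exact ht p0 (Finset.mem_univ p0) (by rw [hp0, hc])
        unfold rowFun
        rw [fiber_empty (fun p => ht p (Finset.mem_univ p))]
        simp only [Finset.prod_empty, mul_one, if_neg hti, integral_const, measure_univ,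
          ENNReal.toReal_one, probReal_univ, one_smul]
      have himg : ∏ t ∈ Finset.univ.image h, ∫ x, rowFun A i h σ t x ∂μ
          = ∏ p, (Matrix.updateRow (secondMoment μ) p0
              (fun q => ∫ x in A, x p0 * x q ∂μ)) p (σ p) := by
        rw [Finset.prod_image (fun p _ q _ hpq => hinj hpq)]
        refine Finset.prod_congr rfl fun p _ => ?_
        unfold rowFun
        rw [fiber_singleton hinj p]
        simp only [Finset.prod_singleton]
        by_cases hpp0 : p = p0
        · subst hpp0
          simp only [if_pos hp0]
          rw [int_ind_mul μ hA, Matrix.updateRow_self]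
        · have : h p ≠ i := by
            intro hc
            exact hpp0 (hinj (hc.trans hp0.symm))
          simp only [if_neg this, one_mul]
          rw [Matrix.updateRow_ne hpp0]
          rfl
      rw [himg, hcompl, mul_one]
    calc ∑ σ : Equiv.Perm (Fin d), ((Equiv.Perm.sign σ : ℤ) : ℝ) *
            ∏ t, ∫ x, rowFun A i h σ t x ∂μ
        = ∑ σ : Equiv.Perm (Fin d), ((Equiv.Perm.sign σ : ℤ) : ℝ) *
            ∏ p, (Matrix.updateRow (secondMoment μ) p0
              (fun q => ∫ x in A, x p0 * x q ∂μ)) p (σ p) :=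
          Finset.sum_congr rfl fun σ _ => by rw [hval σ]
      _ = _ := det_sum_perm _

end RowFun

section Central

variable {d k : ℕ} (μ : Measure (Fin d → ℝ)) [IsProbabilityMeasure μ]
  (hmom : ∀ i j : Fin d, Integrable (fun x : Fin d → ℝ => x i * x j) μ)

include hmom

lemma central (A : Set (Fin d → ℝ)) (hA : MeasurableSet A) (i : Fin k) :
    ∫ X, A.indicator 1 (X i) * ((Matrix.of X)ᵀ * Matrix.of X).det
        ∂(Measure.pi fun _ : Fin k => μ)
      = (μ A).toReal * (secondMoment μ).det *
          ((((Finset.univ.filter (fun h : Fin d → Fin k => Function.Injective h)).filter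
            (fun h => ∀ p, h p ≠ i)).card : ℕ) : ℝ)
        + ∑ p0 : Fin d,
            (Matrix.updateRow (secondMoment μ) p0 (fun q => ∫ x in A, x p0 * x q ∂μ)).det *
            ((((Finset.univ.filter (fun h : Fin d → Fin k => Function.Injective h)).filter
              (fun h => h p0 = i)).card : ℕ) : ℝ) := by
  classical
  set s := Finset.univ.filter (fun h : Fin d → Fin k => Function.Injective h) with hs
  have hpt : ∀ X : Fin k → Fin d → ℝ,
      A.indicator 1 (X i) * ((Matrix.of X)ᵀ * Matrix.of X).det
        = ∑ h ∈ s, ∑ σ : Equiv.Perm (Fin d), ((Equiv.Perm.sign σ : ℤ) : ℝ) *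
            ∏ t, rowFun A i h σ t (X t) := by
    intro X
    rw [det_gram_expand X, Finset.mul_sum]
    refine Finset.sum_congr rfl fun h _ => ?_
    rw [Finset.mul_sum]
    refine Finset.sum_congr rfl fun σ _ => ?_
    rw [rowFun_prod]
    ring
  have hmem : ∀ h ∈ s, Function.Injective h := by
    intro h hh
    simpa [hs, Finset.mem_filter] using hh
  have hint : ∀ h ∈ s, ∀ σ : Equiv.Perm (Fin d),
      Integrable (fun X : Fin k → Fin d → ℝ =>
        ((Equiv.Perm.sign σ : ℤ) : ℝ) * ∏ t, rowFun A i h σ t (X t))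
        (Measure.pi fun _ : Fin k => μ) := fun h hh σ =>
    (pi_integrable_prod μ _ (fun t => rowFun_integrable μ hmom hA i (hmem h hh) σ t)).const_mul _
  calc ∫ X, A.indicator 1 (X i) * ((Matrix.of X)ᵀ * Matrix.of X).det
          ∂(Measure.pi fun _ : Fin k => μ)
      = ∫ X, ∑ h ∈ s, ∑ σ : Equiv.Perm (Fin d), ((Equiv.Perm.sign σ : ℤ) : ℝ) *
          ∏ t, rowFun A i h σ t (X t) ∂(Measure.pi fun _ : Fin k => μ) :=
        integral_congr_ae (Filter.Eventually.of_forall hpt)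
    _ = ∑ h ∈ s, ∑ σ : Equiv.Perm (Fin d), ((Equiv.Perm.sign σ : ℤ) : ℝ) *
          ∏ t, ∫ x, rowFun A i h σ t x ∂μ := by
        rw [integral_finset_sum _ (fun h hh => integrable_finset_sum _ (fun σ _ => hint h hh σ))]
        refine Finset.sum_congr rfl fun h hh => ?_
        rw [integral_finset_sum _ (fun σ _ => hint h hh σ)]
        refine Finset.sum_congr rfl fun σ _ => ?_
        rw [integral_const_mul, pi_integral_prod μ]
    _ = ∑ h ∈ s, ((if ∀ p, h p ≠ i then (μ A).toReal * (secondMoment μ).det else 0)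
          + ∑ p0 ∈ Finset.univ.filter (fun p => h p = i),
              (Matrix.updateRow (secondMoment μ) p0
                (fun q => ∫ x in A, x p0 * x q ∂μ)).det) :=
        Finset.sum_congr rfl fun h hh => eval_sum μ hA i (hmem h hh)
    _ = _ := by
        rw [Finset.sum_add_distrib]
        congr 1
        · rw [← Finset.sum_filter]
          rw [Finset.sum_const, nsmul_eq_mul, mul_comm]
        · have h1 : ∀ h ∈ s, ∑ p0 ∈ Finset.univ.filter (fun p => h p = i),
              (Matrix.updateRow (secondMoment μ) p0
                (fun q => ∫ x in A, x p0 * x q ∂μ)).det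
              = ∑ p0 : Fin d, if h p0 = i then
                  (Matrix.updateRow (secondMoment μ) p0
                    (fun q => ∫ x in A, x p0 * x q ∂μ)).det else 0 := by
            intro h _
            rw [Finset.sum_filter]
          rw [Finset.sum_congr rfl h1, Finset.sum_comm]
          refine Finset.sum_congr rfl fun p0 _ => ?_
          rw [← Finset.sum_filter, Finset.sum_const, nsmul_eq_mul, mul_comm]

omit hmom in
lemma count_split (i : Fin k) :
    ((((Finset.univ.filter (fun h : Fin d → Fin k => Function.Injective h)).filter
        (fun h => ∀ p, h p ≠ i)).card : ℕ) : ℝ)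
      + ∑ p0 : Fin d,
          ((((Finset.univ.filter (fun h : Fin d → Fin k => Function.Injective h)).filter
            (fun h => h p0 = i)).card : ℕ) : ℝ)
      = (k.descFactorial d : ℝ) := by
  classical
  set s := Finset.univ.filter (fun h : Fin d → Fin k => Function.Injective h) with hs
  have hmem : ∀ h ∈ s, Function.Injective h := by
    intro h hh
    simpa [hs, Finset.mem_filter] using hh
  have key : ∀ h ∈ s, ((if ∀ p, h p ≠ i then (1:ℝ) else 0)
      + ∑ p0 ∈ Finset.univ.filter (fun p => h p = i), (1:ℝ)) = 1 := by
    intro h hh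
    by_cases hmiss : ∀ p, h p ≠ i
    · rw [if_pos hmiss, fiber_empty hmiss, Finset.sum_empty, add_zero]
    · have hne := hmiss
      push_neg at hmiss
      obtain ⟨p0, hp0⟩ := hmiss
      have hfilter : Finset.univ.filter (fun p => h p = i) = {p0} := by
        rw [← hp0]
        exact fiber_singleton (hmem h hh) p0
      rw [if_neg hne, hfilter, Finset.sum_singleton, zero_add]
  have h2 : ((s.filter (fun h => ∀ p, h p ≠ i)).card : ℝ)
      = ∑ h ∈ s, (if ∀ p, h p ≠ i then (1:ℝ) else 0) := by
    rw [← Finset.sum_filter, Finset.sum_const, nsmul_eq_mul, mul_one]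
  have h3 : ∑ p0 : Fin d, ((((s.filter (fun h => h p0 = i)).card : ℕ)) : ℝ)
      = ∑ h ∈ s, ∑ p0 ∈ Finset.univ.filter (fun p => h p = i), (1:ℝ) := by
    have : ∀ p0 : Fin d, (((s.filter (fun h => h p0 = i)).card : ℕ) : ℝ)
        = ∑ h ∈ s, if h p0 = i then (1:ℝ) else 0 := by
      intro p0
      rw [← Finset.sum_filter, Finset.sum_const, nsmul_eq_mul, mul_one]
    rw [Finset.sum_congr rfl fun p0 _ => this p0, Finset.sum_comm]
    exact Finset.sum_congr rfl fun h _ => (Finset.sum_filter _ _).symm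
  rw [h2, h3, ← Finset.sum_add_distrib, Finset.sum_congr rfl key, Finset.sum_const,
    nsmul_eq_mul, mul_one, ← inj_card (d := d) (k := k)]

lemma sumD (hSig : IsUnit (secondMoment μ).det) (A : Set (Fin d → ℝ)) :
    ∑ p0 : Fin d, (Matrix.updateRow (secondMoment μ) p0
        (fun q => ∫ x in A, x p0 * x q ∂μ)).det
      = (secondMoment μ).det *
          ∫ x in A, dotProduct x ((secondMoment μ)⁻¹ *ᵥ x) ∂μ := by
  classical
  have hadj : (secondMoment μ).adjugate = (secondMoment μ).det • (secondMoment μ)⁻¹ := by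
    rw [Matrix.inv_def, smul_smul, Ring.mul_inverse_cancel _ hSig, one_smul]
  have hD : ∀ p0 : Fin d, (Matrix.updateRow (secondMoment μ) p0
      (fun q => ∫ x in A, x p0 * x q ∂μ)).det
      = ∑ q, (secondMoment μ).adjugate q p0 * ∫ x in A, x p0 * x q ∂μ := by
    intro p0
    rw [← Matrix.det_transpose, ← Matrix.updateCol_transpose, ← Matrix.cramer_apply,
      Matrix.cramer_eq_adjugate_mulVec]
    simp only [Matrix.mulVec, dotProduct, ← Matrix.adjugate_transpose,
      Matrix.transpose_apply]
  rw [Finset.sum_congr rfl (fun p0 _ => hD p0), setIntegral_quad μ hmom _ A, Finset.mul_sum,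
    Finset.sum_comm]
  refine Finset.sum_congr rfl fun q _ => ?_
  rw [Finset.mul_sum]
  refine Finset.sum_congr rfl fun p _ => ?_
  rw [hadj, Matrix.smul_apply, smul_eq_mul]
  have hcomm : ∫ x in A, x p * x q ∂μ = ∫ x in A, x q * x p ∂μ :=
    integral_congr_ae (Filter.Eventually.of_forall fun x => mul_comm _ _)
  rw [hcomm]
  ring

lemma Lev_apply (A : Set (Fin d → ℝ)) (hA : MeasurableSet A) :
    Lev μ A = ENNReal.ofReal
      ((∫ x in A, dotProduct x ((secondMoment μ)⁻¹ *ᵥ x) ∂μ) / d) := by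
  have hpsd : ((secondMoment μ)⁻¹).PosSemidef := (secondMoment_posSemidef μ hmom).inv
  have hnn : ∀ x : Fin d → ℝ, 0 ≤ dotProduct x ((secondMoment μ)⁻¹ *ᵥ x) := fun x => by
    have := hpsd.dotProduct_mulVec_nonneg x
    rwa [star_trivial] at this
  rw [Lev, withDensity_apply _ hA,
    ← ofReal_integral_eq_lintegral_ofReal
      (((quad_integrable μ hmom ((secondMoment μ)⁻¹)).div_const (d:ℝ)).restrict)
      (Filter.Eventually.of_forall fun x => div_nonneg (hnn x) (Nat.cast_nonneg d)),
    integral_div]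

end Central

section Main

variable {d k : ℕ} (μ : Measure (Fin d → ℝ)) [IsProbabilityMeasure μ]
  (hmom : ∀ i j : Fin d, Integrable (fun x : Fin d → ℝ => x i * x j) μ)

include hmom

lemma central_integrable (A : Set (Fin d → ℝ)) (hA : MeasurableSet A) (i : Fin k) :
    Integrable (fun X : Fin k → Fin d → ℝ =>
        A.indicator 1 (X i) * ((Matrix.of X)ᵀ * Matrix.of X).det)
      (Measure.pi fun _ : Fin k => μ) := by
  classical
  set s := Finset.univ.filter (fun h : Fin d → Fin k => Function.Injective h) with hs
  have hmem : ∀ h ∈ s, Function.Injective h := by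
    intro h hh
    simpa [hs, Finset.mem_filter] using hh
  have hpt : (fun X : Fin k → Fin d → ℝ =>
      A.indicator 1 (X i) * ((Matrix.of X)ᵀ * Matrix.of X).det)
        = fun X => ∑ h ∈ s, ∑ σ : Equiv.Perm (Fin d), ((Equiv.Perm.sign σ : ℤ) : ℝ) *
            ∏ t, rowFun A i h σ t (X t) := by
    funext X
    rw [det_gram_expand X, Finset.mul_sum]
    refine Finset.sum_congr rfl fun h _ => ?_
    rw [Finset.mul_sum]
    refine Finset.sum_congr rfl fun σ _ => ?_
    rw [rowFun_prod]
    ring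
  rw [hpt]
  exact integrable_finset_sum _ (fun h hh => integrable_finset_sum _ (fun σ _ =>
    (pi_integrable_prod μ _
      (fun t => rowFun_integrable μ hmom hA i (hmem h hh) σ t)).const_mul _))

end Main

/-- **Row marginal of volume-rescaled sampling** (Theorem 5, Dereziński–Warmuth–Hsu).
If `X̄ ~ VS^k`, then each row `x̄ᵢᵀ` of `X̄` is marginally distributed as the mixture
`(d/k)·Lev + (1 − d/k)·μ` of leverage score sampling and the input distribution. -/
theorem volume_rescaled_row_marginal
    {d k : ℕ} (hdk : d ≤ k)
    (μ : Measure (Fin d → ℝ)) [IsProbabilityMeasure μ]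
    (hmom : ∀ i j : Fin d, Integrable (fun x : Fin d → ℝ => x i * x j) μ)
    (hSig : IsUnit (secondMoment μ).det)
    (i : Fin k) (A : Set (Fin d → ℝ)) (hA : MeasurableSet A) :
    VS μ k {X : Fin k → Fin d → ℝ | X i ∈ A} =
      ((d : ℝ≥0∞) / (k : ℝ≥0∞)) * Lev μ A + (1 - (d : ℝ≥0∞) / (k : ℝ≥0∞)) * μ A := by
  classical
  have hk : 0 < k := i.pos
  have hk0 : (0:ℝ) < (k:ℝ) := by exact_mod_cast hk
  have hdet : 0 < (secondMoment μ).det := (secondMoment_posDef μ hmom hSig).det_pos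
  have hT0 : k.descFactorial d ≠ 0 := by
    intro hc
    exact absurd (Nat.descFactorial_eq_zero_iff_lt.mp hc) (not_lt.mpr hdk)
  have hT : (0:ℝ) < (k.descFactorial d : ℝ) := by
    exact_mod_cast Nat.pos_of_ne_zero hT0
  set T : ℝ := (k.descFactorial d : ℝ) with hTdef
  set c : ℝ := T * (secondMoment μ).det with hcdef
  have hc : 0 < c := mul_pos hT hdet
  set Sset : Set (Fin k → Fin d → ℝ) := {X | X i ∈ A} with hSsetdef
  have hSset : MeasurableSet Sset := (measurable_pi_apply i) hA
  set L : ℝ := ∫ x in A, dotProduct x ((secondMoment μ)⁻¹ *ᵥ x) ∂μ with hLdef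
  have hpsdInv : ((secondMoment μ)⁻¹).PosSemidef := (secondMoment_posSemidef μ hmom).inv
  have hnnq : ∀ x : Fin d → ℝ, 0 ≤ dotProduct x ((secondMoment μ)⁻¹ *ᵥ x) := fun x => by
    have := hpsdInv.dotProduct_mulVec_nonneg x
    rwa [star_trivial] at this
  have hLnn : 0 ≤ L := integral_nonneg fun x => hnnq x
  set a : ℝ := (μ A).toReal with hadef
  have hann : 0 ≤ a := ENNReal.toReal_nonneg
  -- counting values
  have hC1 : ∀ p0 : Fin d,
      ((((Finset.univ.filter (fun h : Fin d → Fin k => Function.Injective h)).filter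
        (fun h => h p0 = i)).card : ℕ) : ℝ) = T / k := by
    intro p0
    have := count_fiber p0 i
    have hcast : (k:ℝ) * ((((Finset.univ.filter
        (fun h : Fin d → Fin k => Function.Injective h)).filter
          (fun h => h p0 = i)).card : ℕ) : ℝ) = T := by
      rw [hTdef]
      exact_mod_cast this
    field_simp at hcast ⊢
    linarith
  have hC0 : ((((Finset.univ.filter (fun h : Fin d → Fin k => Function.Injective h)).filter
      (fun h => ∀ p, h p ≠ i)).card : ℕ) : ℝ) = T - d * (T / k) := by
    have hsplit := count_split (d := d) (k := k) i
    rw [Finset.sum_congr rfl (fun p0 _ => hC1 p0), Finset.sum_const, Finset.card_univ,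
      Fintype.card_fin, nsmul_eq_mul] at hsplit
    linarith
  -- the central integral
  have hF : ∫ X, A.indicator 1 (X i) * ((Matrix.of X)ᵀ * Matrix.of X).det
      ∂(Measure.pi fun _ : Fin k => μ)
      = a * (secondMoment μ).det * (T - d * (T / k))
        + (secondMoment μ).det * L * (T / k) := by
    rw [central μ hmom A hA i, hC0, Finset.sum_congr rfl (fun p0 _ => by rw [hC1 p0]),
      ← Finset.sum_mul, sumD μ hmom hSig A]
  -- LHS
  have hLHS : VS μ k Sset = ENNReal.ofReal ((1 - (d:ℝ)/k) * a + L / k) := by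
    rw [VS, withDensity_apply _ hSset]
    have hind : Sset.indicator (fun X : Fin k → Fin d → ℝ =>
        ((Matrix.of X)ᵀ * Matrix.of X).det / c)
        = fun X => (A.indicator 1 (X i) * ((Matrix.of X)ᵀ * Matrix.of X).det) / c := by
      funext X
      by_cases hX : X i ∈ A
      · have hX' : X ∈ Sset := hX
        rw [Set.indicator_of_mem hX', Set.indicator_of_mem hX]
        simp
      · have hX' : X ∉ Sset := hX
        rw [Set.indicator_of_notMem hX', Set.indicator_of_notMem hX]
        simp
    have hint2 : IntegrableOn (fun X : Fin k → Fin d → ℝ =>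
        ((Matrix.of X)ᵀ * Matrix.of X).det / c) Sset (Measure.pi fun _ : Fin k => μ) := by
      rw [← integrable_indicator_iff hSset, hind]
      exact (central_integrable μ hmom A hA i).div_const c
    have hnn2 : 0 ≤ᵐ[(Measure.pi fun _ : Fin k => μ).restrict Sset]
        fun X : Fin k → Fin d → ℝ => ((Matrix.of X)ᵀ * Matrix.of X).det / c :=
      Filter.Eventually.of_forall fun X => div_nonneg (det_gram_nonneg X) hc.le
    rw [← ofReal_integral_eq_lintegral_ofReal hint2 hnn2]
    congr 1
    rw [← integral_indicator hSset, hind, integral_div, hF]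
    rw [div_eq_iff (ne_of_gt hc), hcdef]
    field_simp
  -- RHS
  have hμA : μ A = ENNReal.ofReal a := (ENNReal.ofReal_toReal (measure_ne_top μ A)).symm
  have hLev : Lev μ A = ENNReal.ofReal (L / d) := Lev_apply μ hmom A hA
  have hdk1 : (d:ℝ)/k ≤ 1 := by
    rw [div_le_one hk0]
    exact_mod_cast hdk
  have hfrac : ((d : ℝ≥0∞) / (k : ℝ≥0∞)) = ENNReal.ofReal ((d:ℝ)/(k:ℝ)) := by
    rw [ENNReal.ofReal_div_of_pos hk0, ENNReal.ofReal_natCast, ENNReal.ofReal_natCast]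
  have h1m : (1 : ℝ≥0∞) - ENNReal.ofReal ((d:ℝ)/(k:ℝ)) = ENNReal.ofReal (1 - (d:ℝ)/k) := by
    rw [ENNReal.ofReal_sub _ (div_nonneg (Nat.cast_nonneg d) hk0.le), ENNReal.ofReal_one]
  show VS μ k Sset = _
  rw [hLHS, hLev, hμA, hfrac, h1m, ← ENNReal.ofReal_mul (div_nonneg (Nat.cast_nonneg d) hk0.le),
    ← ENNReal.ofReal_mul (by linarith : (0:ℝ) ≤ 1 - (d:ℝ)/k),
    ← ENNReal.ofReal_add (by positivity) (mul_nonneg (by linarith) hann)]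
  congr 1
  by_cases hd : d = 0
  · subst hd
    have hL0 : L = 0 := by
      rw [hLdef]
      have : ∀ x : Fin 0 → ℝ, dotProduct x ((secondMoment μ)⁻¹ *ᵥ x) = 0 := by
        intro x
        simp [dotProduct]
      rw [integral_congr_ae (Filter.Eventually.of_forall this)]
      simp
    rw [hL0]
    norm_num
  · have hd0 : (0:ℝ) < (d:ℝ) := by
      exact_mod_cast Nat.pos_of_ne_zero hd
    field_simp
    ring
end

section
/- Let X̄ ~ VS^k, and let X ~ D_X^k. Assuming the stated expectations exist, E[(X̄ᵀX̄)⁻¹X̄ᵀ] = (E[XᵀX])⁻¹·E[X]ᵀ = (kΣ)⁻¹·E[X]ᵀ, where E[X]ᵀ is the d×k matrix each of whose columns equals E_{D_X}[x]. (Since X̄ᵀX̄ is invertible VS^k-almost surely, (X̄ᵀX̄)⁻¹X̄ᵀ equals the Moore–Penrose pseudoinverse X̄† almost surely.) -/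
open MeasureTheory ProbabilityTheory Matrix
open scoped ENNReal

section PiProd

variable {α : Type*} [MeasurableSpace α] (μ : Measure α) [IsProbabilityMeasure μ]
variable {ι : Type*} [Fintype ι]

lemma my_integral_pi_prod (f : ι → α → ℝ) :
    ∫ x : ι → α, ∏ t, f t (x t) ∂(Measure.pi fun _ => μ) = ∏ t, ∫ x, f t x ∂μ := by
  letI : MeasureSpace α := ⟨μ⟩
  haveI : SigmaFinite (volume : Measure α) := by show SigmaFinite μ; infer_instance
  have h1 : (Measure.pi fun _ : ι => μ) = (volume : Measure (ι → α)) := (volume_pi).symm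
  rw [h1]
  exact integral_fintype_prod_eq_prod f

lemma my_integrable_pi_prod (f : ι → α → ℝ) (hf : ∀ t, Integrable (f t) μ) :
    Integrable (fun x : ι → α => ∏ t, f t (x t)) (Measure.pi fun _ => μ) := by
  letI : MeasureSpace α := ⟨μ⟩
  haveI : SigmaFinite (volume : Measure α) := by show SigmaFinite μ; infer_instance
  have h1 : (Measure.pi fun _ : ι => μ) = (volume : Measure (ι → α)) := (volume_pi).symm
  rw [h1]
  exact Integrable.fintype_prod hf

end PiProd

section Det

variable {d k : ℕ}

lemma my_psd_det_nonneg {n : Type*} [Fintype n] [DecidableEq n] {A : Matrix n n ℝ}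
    (h : A.PosSemidef) : 0 ≤ A.det := by
  rw [h.isHermitian.det_eq_prod_eigenvalues]
  exact Finset.prod_nonneg fun i _ => by simpa using h.eigenvalues_nonneg i

lemma my_det_XtX_nonneg (X : Matrix (Fin k) (Fin d) ℝ) : 0 ≤ (Xᵀ * X).det :=
  my_psd_det_nonneg (by
    simpa [Matrix.conjTranspose_eq_transpose_of_trivial] using
      Matrix.posSemidef_conjTranspose_mul_self X)

lemma my_det_smul_inv_mul (X : Matrix (Fin k) (Fin d) ℝ) :
    (Xᵀ * X).det • ((Xᵀ * X)⁻¹ * Xᵀ) = (Xᵀ * X).adjugate * Xᵀ := by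
  by_cases h : IsUnit (Xᵀ * X).det
  · rw [Matrix.inv_def, Matrix.smul_mul, smul_smul, Ring.mul_inverse_cancel _ h, one_smul]
  · have hdet : (Xᵀ * X).det = 0 := by
      by_contra hne; exact h (IsUnit.mk0 _ hne)
    rw [Matrix.nonsing_inv_apply_not_isUnit _ h, Matrix.zero_mul, smul_zero]
    have hker : ∀ v : Fin d → ℝ, (Xᵀ * X) *ᵥ v = 0 → X *ᵥ v = 0 := by
      intro v hv
      refine (Matrix.conjTranspose_mul_self_mulVec_eq_zero X v).mp ?_
      rwa [Matrix.conjTranspose_eq_transpose_of_trivial]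
    have hXadj : X * (Xᵀ * X).adjugate = 0 := by
      ext t c
      have h0 : (Xᵀ * X) *ᵥ (fun a => (Xᵀ * X).adjugate a c) = 0 := by
        funext b
        have := congrFun (congrFun (Matrix.mul_adjugate (Xᵀ * X)) b) c
        rw [hdet, zero_smul] at this
        simpa [Matrix.mulVec, Matrix.mul_apply, dotProduct] using this
      have h1 := congrFun (hker _ h0) t
      simpa [Matrix.mulVec, Matrix.mul_apply, dotProduct] using h1
    have hsym : (Xᵀ * X)ᵀ = Xᵀ * X := by
      rw [Matrix.transpose_mul, Matrix.transpose_transpose]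
    have hadj : ((Xᵀ * X).adjugate)ᵀ = (Xᵀ * X).adjugate := by
      rw [Matrix.adjugate_transpose, hsym]
    have : (Xᵀ * X).adjugate * Xᵀ = (X * (Xᵀ * X).adjugate)ᵀ := by
      rw [Matrix.transpose_mul, hadj]
    rw [this, hXadj, Matrix.transpose_zero]

end Det



section SM

variable {d k : ℕ} {μ : Measure (Fin d → ℝ)}

lemma my_secondMoment_symm (μ : Measure (Fin d → ℝ)) : (secondMoment μ)ᵀ = secondMoment μ := by
  ext a b
  simp only [secondMoment, Matrix.transpose_apply, Matrix.of_apply]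
  simp_rw [mul_comm]

lemma my_secondMoment_posSemidef
    (hmom : ∀ i j : Fin d, Integrable (fun x : Fin d → ℝ => x i * x j) μ) :
    (secondMoment μ).PosSemidef := by
  rw [Matrix.posSemidef_iff_dotProduct_mulVec]
  constructor
  · rw [Matrix.IsHermitian, Matrix.conjTranspose_eq_transpose_of_trivial, my_secondMoment_symm]
  · intro v
    have hkey : dotProduct (star v) (secondMoment μ *ᵥ v)
        = ∫ y, (∑ c, v c * y c)^2 ∂μ := by
      have hsq : ∀ y : Fin d → ℝ,
          (∑ c, v c * y c)^2 = ∑ a, ∑ b, (v a * v b) * (y a * y b) := by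
        intro y
        rw [sq, Finset.sum_mul_sum]
        exact Finset.sum_congr rfl fun a _ => Finset.sum_congr rfl fun b _ => by ring
      simp_rw [hsq]
      rw [integral_finset_sum _ (fun a _ =>
        integrable_finset_sum _ (fun b _ => (hmom a b).const_mul _))]
      have : ∀ a : Fin d, ∫ y, ∑ b, (v a * v b) * (y a * y b) ∂μ
          = ∑ b, (v a * v b) * (secondMoment μ) a b := by
        intro a
        rw [integral_finset_sum _ (fun b _ => (hmom a b).const_mul _)]
        exact Finset.sum_congr rfl fun b _ => by
          rw [MeasureTheory.integral_const_mul]; rfl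
      simp_rw [this]
      simp only [dotProduct, Matrix.mulVec, Pi.star_apply, star_trivial]
      refine Finset.sum_congr rfl fun a _ => ?_
      rw [Finset.mul_sum]
      exact Finset.sum_congr rfl fun b _ => by ring
    rw [hkey]
    exact integral_nonneg fun y => sq_nonneg _

end SM


variable {d k : ℕ}

lemma my_det_update_expand (i : Fin d) (j : Fin k) (X : Matrix (Fin k) (Fin d) ℝ) :
    ((Xᵀ * X).updateCol i (X j)).det
      = ∑ r ∈ Finset.univ.filter
            (fun r : Fin d → Fin k => Function.Injective r ∧ r i = j),
          (∏ c ∈ Finset.univ.erase i, X (r c) c) * (X.submatrix r id).det := by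
  classical
  set w : Fin d → Fin k → ℝ :=
    fun c t => if c = i then (if t = j then 1 else 0) else X t c with hw
  have key : ((Xᵀ * X).updateCol i (X j))ᵀ
      = Matrix.of (fun c => ∑ t, w c t • X t) := by
    ext c a
    by_cases hc : c = i
    · subst hc
      simp [hw, Matrix.updateCol_apply, ite_apply, Finset.sum_ite_eq' Finset.univ j]
    · simp [hw, Matrix.updateCol_apply, hc, Matrix.mul_apply, mul_comm]
  rw [← Matrix.det_transpose, key]
  have hdet0 : (Matrix.of (fun c => ∑ t, w c t • X t)).det
      = (Matrix.detRowAlternating (fun c : Fin d => ∑ t, w c t • X t) : ℝ) := rfl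
  rw [hdet0]
  rw [show (Matrix.detRowAlternating (fun c : Fin d => ∑ t, w c t • X t) : ℝ)
      = ∑ r : Fin d → Fin k, Matrix.detRowAlternating (fun c : Fin d => w c (r c) • X (r c))
      from (Matrix.detRowAlternating (R := ℝ) (n := Fin d)).toMultilinearMap.map_sum
        (g := fun c t => w c t • X t)]
  have hterm : ∀ r : Fin d → Fin k,
      Matrix.detRowAlternating (fun c : Fin d => w c (r c) • X (r c))
        = (∏ c, w c (r c)) * (X.submatrix r id).det := by
    intro r
    have h := (Matrix.detRowAlternating (R := ℝ) (n := Fin d)).toMultilinearMap.map_smul_univ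
      (fun c => w c (r c)) (fun c => X (r c))
    exact h.trans (by rw [smul_eq_mul]; rfl)
  simp_rw [hterm]
  rw [← Finset.sum_filter_of_ne (p := fun r : Fin d → Fin k => Function.Injective r ∧ r i = j)]
  · refine Finset.sum_congr rfl fun r hr => ?_
    obtain ⟨hrinj, hri⟩ := (Finset.mem_filter.mp hr).2
    congr 1
    rw [← Finset.mul_prod_erase _ _ (Finset.mem_univ i)]
    have h1 : w i (r i) = 1 := by simp [hw, hri]
    rw [h1, one_mul]
    exact Finset.prod_congr rfl fun c hc => by
      simp [hw, Finset.ne_of_mem_erase hc]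
  · intro r _ hne
    constructor
    · by_contra hninj
      apply hne
      simp only [Function.Injective] at hninj
      push_neg at hninj
      obtain ⟨c1, c2, hc12, hne12⟩ := hninj
      have : (X.submatrix r id).det = 0 := by
        have heq : X.submatrix r id c1 = X.submatrix r id c2 := by
          funext a; simp [Matrix.submatrix_apply, hc12]
        exact Matrix.det_zero_of_row_eq hne12 heq
      rw [this, mul_zero]
    · by_contra hri
      apply hne
      have : w i (r i) = 0 := by simp [hw, hri]
      rw [Finset.prod_eq_zero (Finset.mem_univ i) this, zero_mul]





variable {d k : ℕ}

/-- factor attached to column `c` : the part of the integrand coming from row `r c`. -/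
def myphi (i : Fin d) (σ : Equiv.Perm (Fin d)) (c : Fin d) (x : Fin d → ℝ) : ℝ :=
  if c = i then x (σ c) else x c * x (σ c)

def myG (i : Fin d) (σ : Equiv.Perm (Fin d)) (r : Fin d → Fin k) (t : Fin k)
    (x : Fin d → ℝ) : ℝ :=
  ∏ c ∈ Finset.univ.filter (fun c => r c = t), myphi i σ c x

def myP (i : Fin d) (σ : Equiv.Perm (Fin d)) (r : Fin d → Fin k)
    (X : Fin k → Fin d → ℝ) : ℝ :=
  ∏ t, myG i σ r t (X t)

noncomputable def myVal {d : ℕ} (μ : Measure (Fin d → ℝ)) (i : Fin d)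
    (σ : Equiv.Perm (Fin d)) (c : Fin d) : ℝ :=
  if c = i then (∫ x, x (σ c) ∂μ) else secondMoment μ c (σ c)

lemma my_fiber_cases {r : Fin d → Fin k} (hr : Function.Injective r) (t : Fin k) :
    Finset.univ.filter (fun c : Fin d => r c = t) = ∅ ∨
    ∃ c₀, Finset.univ.filter (fun c : Fin d => r c = t) = {c₀} := by
  by_cases h : ∃ c₀, r c₀ = t
  · obtain ⟨c₀, hc₀⟩ := h
    right
    refine ⟨c₀, ?_⟩
    ext c
    simp only [Finset.mem_filter, Finset.mem_univ, true_and, Finset.mem_singleton]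
    exact ⟨fun hh => hr (hh.trans hc₀.symm), fun hh => hh ▸ hc₀⟩
  · left
    ext c
    push_neg at h
    simp [h c]

section Integr
variable {μ : Measure (Fin d → ℝ)} [IsProbabilityMeasure μ]

lemma myG_integrable
    (hmom : ∀ i j : Fin d, Integrable (fun x : Fin d → ℝ => x i * x j) μ)
    (hmean : ∀ i : Fin d, Integrable (fun x : Fin d → ℝ => x i) μ) (i : Fin d) (σ : Equiv.Perm (Fin d)) {r : Fin d → Fin k}
    (hr : Function.Injective r) (t : Fin k) : Integrable (myG i σ r t) μ := by
  unfold myG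
  rcases my_fiber_cases hr t with hf | ⟨c₀, hf⟩
  · simp only [hf, Finset.prod_empty]
    exact integrable_const 1
  · simp only [hf, Finset.prod_singleton]
    unfold myphi
    by_cases hc : c₀ = i
    · simp only [if_pos hc]
      exact hmean _
    · simp only [if_neg hc]
      exact hmom _ _

lemma myG_integral (i : Fin d) (σ : Equiv.Perm (Fin d)) {r : Fin d → Fin k}
    (hr : Function.Injective r) (t : Fin k) :
    ∫ x, myG i σ r t x ∂μ
      = ∏ c ∈ Finset.univ.filter (fun c => r c = t), myVal μ i σ c := by
  rcases my_fiber_cases hr t with hf | ⟨c₀, hf⟩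
  · simp only [myG, hf, Finset.prod_empty]
    simp
  · simp only [myG, hf, Finset.prod_singleton]
    by_cases hc : c₀ = i
    · simp only [myphi, myVal, if_pos hc]
    · simp only [myphi, myVal, if_neg hc]
      rfl

lemma myP_eq (i : Fin d) (σ : Equiv.Perm (Fin d)) (r : Fin d → Fin k)
    (X : Fin k → Fin d → ℝ) :
    myP i σ r X = ∏ c, myphi i σ c (X (r c)) := by
  unfold myP myG
  calc ∏ t, ∏ c ∈ Finset.univ.filter (fun c => r c = t), myphi i σ c (X t)
      = ∏ t, ∏ c ∈ Finset.univ.filter (fun c => r c = t), myphi i σ c (X (r c)) :=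
        Finset.prod_congr rfl fun t _ => Finset.prod_congr rfl fun c hc => by
          rw [(Finset.mem_filter.mp hc).2]
    _ = ∏ c, myphi i σ c (X (r c)) := Finset.prod_fiberwise _ _ _

lemma myP_integrable
    (hmom : ∀ i j : Fin d, Integrable (fun x : Fin d → ℝ => x i * x j) μ)
    (hmean : ∀ i : Fin d, Integrable (fun x : Fin d → ℝ => x i) μ)
    (i : Fin d) (σ : Equiv.Perm (Fin d)) {r : Fin d → Fin k}
    (hr : Function.Injective r) :
    Integrable (myP i σ r) (Measure.pi fun _ : Fin k => μ) :=
  my_integrable_pi_prod μ _ (fun t => myG_integrable hmom hmean i σ hr t)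

lemma myP_integral (i : Fin d) (σ : Equiv.Perm (Fin d)) {r : Fin d → Fin k}
    (hr : Function.Injective r) :
    ∫ X, myP i σ r X ∂(Measure.pi fun _ : Fin k => μ) = ∏ c, myVal μ i σ c := by
  unfold myP
  rw [my_integral_pi_prod μ (fun t x => myG i σ r t x)]
  rw [Finset.prod_congr rfl (fun t _ => myG_integral i σ hr t)]
  exact Finset.prod_fiberwise _ _ _

end Integr

noncomputable def mygr (i : Fin d) (r : Fin d → Fin k) (X : Fin k → Fin d → ℝ) : ℝ :=
  (∏ c ∈ Finset.univ.erase i, X (r c) c) * ((Matrix.of X).submatrix r id).det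

lemma my_prod_phi_eq (i : Fin d) (σ : Equiv.Perm (Fin d)) (r : Fin d → Fin k)
    (X : Fin k → Fin d → ℝ) :
    ∏ c, myphi i σ c (X (r c))
      = (∏ c ∈ Finset.univ.erase i, X (r c) c) * ∏ c, X (r c) (σ c) := by
  rw [← Finset.mul_prod_erase _ (fun c => myphi i σ c (X (r c))) (Finset.mem_univ i)]
  rw [← Finset.mul_prod_erase _ (fun c => X (r c) (σ c)) (Finset.mem_univ i)]
  have h1 : ∀ c ∈ Finset.univ.erase i, myphi i σ c (X (r c)) = X (r c) c * X (r c) (σ c) :=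
    fun c hc => if_neg (Finset.ne_of_mem_erase hc)
  rw [Finset.prod_congr rfl h1, Finset.prod_mul_distrib]
  have h2 : myphi i σ i (X (r i)) = X (r i) (σ i) := if_pos rfl
  rw [h2]
  ring

lemma mygr_eq (i : Fin d) (r : Fin d → Fin k) (X : Fin k → Fin d → ℝ) :
    mygr i r X = ∑ σ : Equiv.Perm (Fin d), ((Equiv.Perm.sign σ : ℤ) : ℝ) * myP i σ r X := by
  unfold mygr
  rw [← Matrix.det_transpose, Matrix.det_apply']
  rw [Finset.mul_sum]
  refine Finset.sum_congr rfl fun σ _ => ?_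
  rw [myP_eq, my_prod_phi_eq]
  have : ∀ c, ((Matrix.of X).submatrix r id)ᵀ (σ c) c = X (r c) (σ c) := fun c => rfl
  simp only [this]
  ring

section Integr2
variable {μ : Measure (Fin d → ℝ)} [IsProbabilityMeasure μ]

lemma mygr_integrable
    (hmom : ∀ i j : Fin d, Integrable (fun x : Fin d → ℝ => x i * x j) μ)
    (hmean : ∀ i : Fin d, Integrable (fun x : Fin d → ℝ => x i) μ)
    (i : Fin d) {r : Fin d → Fin k} (hr : Function.Injective r) :
    Integrable (mygr i r) (Measure.pi fun _ : Fin k => μ) := by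
  have : mygr i r = fun X => ∑ σ : Equiv.Perm (Fin d),
      ((Equiv.Perm.sign σ : ℤ) : ℝ) * myP i σ r X := funext (mygr_eq i r)
  rw [this]
  exact integrable_finset_sum _ fun σ _ => (myP_integrable hmom hmean i σ hr).const_mul _

lemma mygr_integral
    (hmom : ∀ i j : Fin d, Integrable (fun x : Fin d → ℝ => x i * x j) μ)
    (hmean : ∀ i : Fin d, Integrable (fun x : Fin d → ℝ => x i) μ)
    (i : Fin d) {r : Fin d → Fin k} (hr : Function.Injective r) :
    ∫ X, mygr i r X ∂(Measure.pi fun _ : Fin k => μ)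
      = (((secondMoment μ).updateRow i (fun l => ∫ x, x l ∂μ))ᵀ).det := by
  have h1 : ∀ X : Fin k → Fin d → ℝ, mygr i r X = ∑ σ : Equiv.Perm (Fin d),
      ((Equiv.Perm.sign σ : ℤ) : ℝ) * myP i σ r X := mygr_eq i r
  simp_rw [h1]
  rw [integral_finset_sum _ fun σ _ => (myP_integrable hmom hmean i σ hr).const_mul _]
  rw [Matrix.det_apply']
  refine Finset.sum_congr rfl fun σ _ => ?_
  rw [MeasureTheory.integral_const_mul, myP_integral i σ hr]
  congr 1
  refine Finset.prod_congr rfl fun c _ => ?_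
  unfold myVal
  by_cases hc : c = i
  · simp [Matrix.updateRow_apply, hc]
  · simp [Matrix.updateRow_apply, hc]

end Integr2


variable {d k : ℕ}

def myEnc (i : Fin d) (j : Fin k) :
    {r : Fin d → Fin k // Function.Injective r ∧ r i = j}
      ≃ ({c : Fin d // c ≠ i} ↪ {t : Fin k // t ≠ j}) where
  toFun r := ⟨fun c => ⟨r.1 c.1, fun h => c.2 (r.2.1 (h.trans r.2.2.symm))⟩,
    fun c c' h => Subtype.ext (r.2.1 (congrArg Subtype.val h))⟩
  invFun e := ⟨fun c => if h : c = i then j else (e ⟨c, h⟩).1, by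
      constructor
      · intro c c' hcc
        simp only at hcc
        by_cases h : c = i <;> by_cases h' : c' = i
        · rw [h, h']
        · rw [dif_pos h, dif_neg h'] at hcc
          exact absurd hcc.symm (e ⟨c', h'⟩).2
        · rw [dif_neg h, dif_pos h'] at hcc
          exact absurd hcc (e ⟨c, h⟩).2
        · rw [dif_neg h, dif_neg h'] at hcc
          exact congrArg Subtype.val (e.injective (Subtype.ext hcc))
      · exact dif_pos rfl⟩
  left_inv r := by
    apply Subtype.ext
    funext c
    by_cases h : c = i
    · rw [h]; exact (dif_pos rfl).trans r.2.2.symm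
    · exact dif_neg h
  right_inv e := by
    ext c
    simp only [Function.Embedding.coeFn_mk]
    exact congrArg Fin.val (dif_neg c.2)

lemma my_card_R (i : Fin d) (j : Fin k) :
    (Finset.univ.filter
        (fun r : Fin d → Fin k => Function.Injective r ∧ r i = j)).card
      = (k - 1).descFactorial (d - 1) := by
  classical
  rw [← Fintype.card_subtype]
  rw [Fintype.card_congr (myEnc i j)]
  rw [Fintype.card_embedding_eq]
  congr 1
  · rw [Fintype.card_subtype_compl, Fintype.card_subtype_eq, Fintype.card_fin]
  · rw [Fintype.card_subtype_compl, Fintype.card_subtype_eq, Fintype.card_fin]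

lemma my_rhs_eval {d : ℕ} (S : Matrix (Fin d) (Fin d) ℝ) (hS : IsUnit S.det) (c : ℝ) (hc : c ≠ 0)
    (m : Fin d → ℝ) (i : Fin d) :
    ((c • S)⁻¹ *ᵥ m) i = c⁻¹ * (S.det⁻¹ * (S.updateCol i m).det) := by
  letI : Invertible c := invertibleOfNonzero hc
  rw [Matrix.inv_smul (A := S) c hS, invOf_eq_inv, Matrix.smul_mulVec, Pi.smul_apply,
    smul_eq_mul, Matrix.inv_def, Ring.inverse_eq_inv, Matrix.smul_mulVec,
    Pi.smul_apply, smul_eq_mul, ← Matrix.cramer_eq_adjugate_mulVec, Matrix.cramer_apply]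
open scoped NNReal

/-- **Expected pseudoinverse under volume-rescaled sampling**
(Theorem 6, Dereziński–Warmuth–Hsu).
If `X̄ ~ VS^k` then `E[(X̄ᵀX̄)⁻¹X̄ᵀ] = (E[XᵀX])⁻¹ E[X]ᵀ = (kΣ)⁻¹ E[X]ᵀ`, where `X ~ μ^k`
and each column of `E[X]ᵀ` equals `E_μ[x]`.  (Since `X̄ᵀX̄` is a.s. invertible,
`(X̄ᵀX̄)⁻¹X̄ᵀ` is a.s. the Moore–Penrose pseudoinverse `X̄†`.) -/
theorem expected_pseudoinverse_volume_rescaled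
    {d k : ℕ} (hdk : d ≤ k)
    (μ : Measure (Fin d → ℝ)) [IsProbabilityMeasure μ]
    (hmom : ∀ i j : Fin d, Integrable (fun x : Fin d → ℝ => x i * x j) μ)
    (hSig : IsUnit (secondMoment μ).det)
    (hmean : ∀ i : Fin d, Integrable (fun x : Fin d → ℝ => x i) μ)
    (hint : ∀ (i : Fin d) (j : Fin k),
      Integrable
        (fun X : Fin k → Fin d → ℝ =>
          ((((Matrix.of X)ᵀ * Matrix.of X)⁻¹ * (Matrix.of X)ᵀ) i j)) (VS μ k)) :
    ∀ (i : Fin d) (j : Fin k),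
      ∫ X : Fin k → Fin d → ℝ,
          ((((Matrix.of X)ᵀ * Matrix.of X)⁻¹ * (Matrix.of X)ᵀ) i j) ∂(VS μ k) =
        Matrix.mulVec ((k : ℝ) • secondMoment μ)⁻¹ (fun l => ∫ x, x l ∂μ) i := by
  classical
  intro i j
  have hd0 : 0 < d := i.pos
  have hk0 : 0 < k := lt_of_lt_of_le hd0 hdk
  have hpsd := my_secondMoment_posSemidef (μ := μ) hmom
  have hdetne : (secondMoment μ).det ≠ 0 := by
    simpa [isUnit_iff_ne_zero] using hSig
  have hdetS2 : (0:ℝ) < (secondMoment μ).det :=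
    lt_of_le_of_ne (my_psd_det_nonneg hpsd) (Ne.symm hdetne)
  have hdescne : (k.descFactorial d : ℝ) ≠ 0 := by
    have : k.descFactorial d ≠ 0 := by
      intro h
      exact absurd (Nat.descFactorial_eq_zero_iff_lt.mp h) (not_lt.mpr hdk)
    exact_mod_cast this
  set C : ℝ := (k.descFactorial d : ℝ) * (secondMoment μ).det with hCdef
  have hCpos : 0 < C := by
    refine mul_pos ?_ hdetS2
    have : 0 < k.descFactorial d := Nat.pos_of_ne_zero (by exact_mod_cast hdescne)
    exact_mod_cast this
  have hρ : ∀ X : Fin k → Fin d → ℝ, 0 ≤ ((Matrix.of X)ᵀ * Matrix.of X).det / C :=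
    fun X => div_nonneg (my_det_XtX_nonneg _) hCpos.le
  have hmeas : Measurable fun X : Fin k → Fin d → ℝ =>
      ((((Matrix.of X)ᵀ * Matrix.of X).det / C).toNNReal) := by
    apply Measurable.real_toNNReal
    apply Measurable.div_const
    have hcont : Continuous fun X : Fin k → Fin d → ℝ =>
        ((Matrix.of X)ᵀ * Matrix.of X).det :=
      ((continuous_id.matrix_transpose).matrix_mul continuous_id).matrix_det
    exact hcont.measurable
  have hVS : VS μ k = (Measure.pi fun _ : Fin k => μ).withDensity fun X =>
      (((((Matrix.of X)ᵀ * Matrix.of X).det / C).toNNReal : ℝ≥0) : ℝ≥0∞) := rfl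
  rw [hVS, integral_withDensity_eq_integral_smul hmeas]
  -- pointwise identification of the integrand
  have hpt : ∀ X : Fin k → Fin d → ℝ,
      ((((Matrix.of X)ᵀ * Matrix.of X).det / C).toNNReal : ℝ≥0)
          • ((((Matrix.of X)ᵀ * Matrix.of X)⁻¹ * (Matrix.of X)ᵀ) i j)
        = C⁻¹ * ∑ r ∈ Finset.univ.filter
              (fun r : Fin d → Fin k => Function.Injective r ∧ r i = j),
            mygr i r X := by
    intro X
    have h1 : ((((Matrix.of X)ᵀ * Matrix.of X).det / C).toNNReal : ℝ≥0)
          • ((((Matrix.of X)ᵀ * Matrix.of X)⁻¹ * (Matrix.of X)ᵀ) i j)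
        = (((Matrix.of X)ᵀ * Matrix.of X).det / C)
          * ((((Matrix.of X)ᵀ * Matrix.of X)⁻¹ * (Matrix.of X)ᵀ) i j) := by
      rw [NNReal.smul_def, Real.coe_toNNReal _ (hρ X), smul_eq_mul]
    rw [h1]
    have h2 : ((Matrix.of X)ᵀ * Matrix.of X).det
          * ((((Matrix.of X)ᵀ * Matrix.of X)⁻¹ * (Matrix.of X)ᵀ) i j)
        = (((Matrix.of X)ᵀ * Matrix.of X).adjugate * (Matrix.of X)ᵀ) i j := by
      have := congrFun (congrFun (my_det_smul_inv_mul (Matrix.of X)) i) j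
      simpa [Matrix.smul_apply, smul_eq_mul] using this
    have h3 : (((Matrix.of X)ᵀ * Matrix.of X).adjugate * (Matrix.of X)ᵀ) i j
        = (((Matrix.of X)ᵀ * Matrix.of X).adjugate *ᵥ (Matrix.of X j)) i := by
      simp [Matrix.mul_apply, Matrix.mulVec, dotProduct, Matrix.transpose_apply]
    have h4 : (((Matrix.of X)ᵀ * Matrix.of X).adjugate *ᵥ (Matrix.of X j)) i
        = ((((Matrix.of X)ᵀ * Matrix.of X).updateCol i (Matrix.of X j)).det) := by
      rw [← Matrix.cramer_eq_adjugate_mulVec, Matrix.cramer_apply]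
    have h5 := my_det_update_expand i j (Matrix.of X)
    have h6 : ∑ r ∈ Finset.univ.filter
            (fun r : Fin d → Fin k => Function.Injective r ∧ r i = j),
          (∏ c ∈ Finset.univ.erase i, (Matrix.of X) (r c) c)
            * ((Matrix.of X).submatrix r id).det
        = ∑ r ∈ Finset.univ.filter
            (fun r : Fin d → Fin k => Function.Injective r ∧ r i = j),
          mygr i r X := rfl
    rw [div_eq_mul_inv, mul_comm (((Matrix.of X)ᵀ * Matrix.of X).det) C⁻¹, mul_assoc,
      h2, h3, h4, h5, h6]
  rw [integral_congr_ae (Filter.EventuallyEq.of_eq (funext hpt))]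
  rw [MeasureTheory.integral_const_mul]
  rw [integral_finset_sum _ fun r hr =>
    mygr_integrable hmom hmean i ((Finset.mem_filter.mp hr).2.1)]
  rw [Finset.sum_congr rfl fun r hr =>
    mygr_integral hmom hmean i ((Finset.mem_filter.mp hr).2.1)]
  rw [Finset.sum_const, my_card_R i j, nsmul_eq_mul]
  -- identify the determinant with the update-column determinant
  have hsymm : (secondMoment μ)ᵀ = secondMoment μ := my_secondMoment_symm μ
  have hdetT : (((secondMoment μ).updateRow i (fun l => ∫ x, x l ∂μ))ᵀ).det
      = ((secondMoment μ).updateCol i (fun l => ∫ x, x l ∂μ)).det := by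
    rw [← Matrix.updateCol_transpose, hsymm]
  rw [hdetT]
  -- compute the right-hand side
  have hkR : (k:ℝ) ≠ 0 := Nat.cast_ne_zero.mpr hk0.ne'
  rw [my_rhs_eval (secondMoment μ) hSig (k:ℝ) hkR]
  -- final arithmetic
  have hfact : (k.descFactorial d : ℝ)
      = (k:ℝ) * ((k-1).descFactorial (d-1) : ℝ) := by
    obtain ⟨d', rfl⟩ := Nat.exists_eq_succ_of_ne_zero hd0.ne'
    obtain ⟨k', rfl⟩ := Nat.exists_eq_succ_of_ne_zero hk0.ne'
    rw [Nat.succ_sub_one, Nat.succ_sub_one, Nat.succ_descFactorial_succ]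
    push_cast
    ring
  have hF0 : ((k-1).descFactorial (d-1) : ℝ) ≠ 0 := by
    have : ¬ (k - 1 < d - 1) := not_lt.mpr (Nat.sub_le_sub_right hdk 1)
    have h0 : (k-1).descFactorial (d-1) ≠ 0 := by
      intro h
      exact this (Nat.descFactorial_eq_zero_iff_lt.mp h)
    exact_mod_cast h0
  rw [hCdef, hfact]
  field_simp
end

section
/- Let X̄ ~ VS^k and suppose that X ~ D_X^k has rank(X) = d almost surely. Then, assuming the stated expectations exist, E[(X̄ᵀX̄)⁻¹] = (k/(k−d+1))·(E[XᵀX])⁻¹ = (1/(k−d+1))·Σ⁻¹. -/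
open MeasureTheory ProbabilityTheory Matrix
open scoped ENNReal

open scoped NNReal

private lemma prod_comp_integral {d n k : ℕ}
    (μ : Measure (Fin d → ℝ)) [IsProbabilityMeasure μ]
    (s : Fin n → Fin k) (hs : Function.Injective s)
    (h : Fin n → (Fin d → ℝ) → ℝ) (hh : ∀ b, Integrable (h b) μ) :
    Integrable (fun X : Fin k → Fin d → ℝ => ∏ b, h b (X (s b))) (Measure.pi fun _ => μ) ∧
      (∫ X : Fin k → Fin d → ℝ, ∏ b, h b (X (s b)) ∂(Measure.pi fun _ => μ))
        = ∏ b, ∫ x, h b x ∂μ := by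
  classical
  letI : MeasureSpace (Fin d → ℝ) := ⟨μ⟩
  haveI : SigmaFinite (volume : Measure (Fin d → ℝ)) := by
    show SigmaFinite μ; infer_instance
  set H : Fin k → (Fin d → ℝ) → ℝ :=
    fun r x => ∏ b ∈ Finset.univ.filter (fun b => s b = r), h b x with hH
  have hfib : ∀ r : Fin k, Integrable (H r) μ ∧
      (∫ x, H r x ∂μ) = ∏ b ∈ Finset.univ.filter (fun b => s b = r), ∫ x, h b x ∂μ := by
    intro r
    by_cases hr : ∃ b, s b = r
    · obtain ⟨b, hb⟩ := hr
      have hset : Finset.univ.filter (fun b => s b = r) = {b} := by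
        ext c
        simp only [Finset.mem_filter, Finset.mem_univ, true_and, Finset.mem_singleton]
        constructor
        · intro hc; exact hs (hc.trans hb.symm)
        · rintro rfl; exact hb
      rw [hH]
      simp only [hset, Finset.prod_singleton]
      exact ⟨hh b, trivial⟩
    · push_neg at hr
      have hset : Finset.univ.filter (fun b => s b = r) = ∅ := by
        ext c; simp [hr c]
      rw [hH]
      simp only [hset, Finset.prod_empty]
      exact ⟨integrable_const 1, by simp⟩
  have hpt : ∀ X : Fin k → Fin d → ℝ, (∏ r, H r (X r)) = ∏ b, h b (X (s b)) := by
    intro X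
    rw [hH]
    calc (∏ r, ∏ b ∈ Finset.univ.filter (fun b => s b = r), h b (X r))
        = ∏ r, ∏ b ∈ Finset.univ.filter (fun b => s b = r), h b (X (s b)) := by
          refine Finset.prod_congr rfl fun r _ => Finset.prod_congr rfl fun b hb => ?_
          rw [(Finset.mem_filter.1 hb).2]
      _ = ∏ b, h b (X (s b)) :=
          Finset.prod_fiberwise_of_maps_to (fun b _ => Finset.mem_univ (s b)) _
  have hvol : (Measure.pi fun _ : Fin k => μ) = (volume : Measure (Fin k → Fin d → ℝ)) :=
    (MeasureTheory.volume_pi).symm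
  constructor
  · rw [hvol]
    exact (MeasureTheory.Integrable.fintype_prod (f := H) (fun r => (hfib r).1)).congr
      (Filter.Eventually.of_forall fun X => hpt X)
  · rw [hvol]
    calc (∫ X : Fin k → Fin d → ℝ, ∏ b, h b (X (s b)))
        = ∫ X : Fin k → Fin d → ℝ, ∏ r, H r (X r) :=
          integral_congr_ae (Filter.Eventually.of_forall fun X => (hpt X).symm)
      _ = ∏ r, ∫ x, H r x ∂μ := MeasureTheory.integral_fintype_prod_eq_prod H
      _ = ∏ r, ∏ b ∈ Finset.univ.filter (fun b => s b = r), ∫ x, h b x ∂μ :=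
          Finset.prod_congr rfl fun r _ => (hfib r).2
      _ = ∏ b, ∫ x, h b x ∂μ :=
          Finset.prod_fiberwise_of_maps_to (fun b _ => Finset.mem_univ (s b)) _

private lemma integral_det_gram {d n k : ℕ}
    (μ : Measure (Fin d → ℝ)) [IsProbabilityMeasure μ]
    (hmom : ∀ i j : Fin d, Integrable (fun x : Fin d → ℝ => x i * x j) μ)
    (f g : Fin n → Fin d) :
    (∫ X : Fin k → Fin d → ℝ,
        (Matrix.of fun a b : Fin n => ∑ t, X t (f a) * X t (g b)).det
          ∂(Measure.pi fun _ : Fin k => μ))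
      = (k.descFactorial n : ℝ) *
          (Matrix.of fun a b : Fin n => secondMoment μ (f a) (g b)).det := by
  classical
  -- pointwise expansion of the determinant by multilinearity
  have hrow : ∀ X : Fin k → Fin d → ℝ,
      (Matrix.of fun a b : Fin n => ∑ t, X t (f a) * X t (g b)).det
        = ∑ t : Fin n → Fin k,
            (∏ a, X (t a) (f a)) * (Matrix.of fun a b : Fin n => X (t a) (g b)).det := by
    intro X
    have harg : (Matrix.of fun a b : Fin n => ∑ t, X t (f a) * X t (g b))
        = fun a : Fin n => ∑ t : Fin k, X t (f a) • fun b : Fin n => X t (g b) := by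
      funext a b
      simp [Finset.sum_apply]
    have h0 : (Matrix.of fun a b : Fin n => ∑ t, X t (f a) * X t (g b)).det
        = Matrix.detRowAlternating.toMultilinearMap
            (fun a : Fin n => ∑ t : Fin k, X t (f a) • fun b : Fin n => X t (g b)) := by
      rw [Matrix.det, harg]; rfl
    rw [h0, MultilinearMap.map_sum]
    refine Finset.sum_congr rfl fun t _ => ?_
    rw [MultilinearMap.map_smul_univ]
    rfl
  -- each injective term integrates to the Gram determinant of the second moment
  have hinj : ∀ t : Fin n → Fin k, Function.Injective t →
      Integrable (fun X : Fin k → Fin d → ℝ =>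
          (∏ a, X (t a) (f a)) * (Matrix.of fun a b : Fin n => X (t a) (g b)).det)
        (Measure.pi fun _ : Fin k => μ) ∧
      (∫ X : Fin k → Fin d → ℝ,
          (∏ a, X (t a) (f a)) * (Matrix.of fun a b : Fin n => X (t a) (g b)).det
            ∂(Measure.pi fun _ : Fin k => μ))
        = (Matrix.of fun a b : Fin n => secondMoment μ (f a) (g b)).det := by
    intro t ht
    have hexp : (fun X : Fin k → Fin d → ℝ =>
        (∏ a, X (t a) (f a)) * (Matrix.of fun a b : Fin n => X (t a) (g b)).det)
        = fun X => ∑ σ : Equiv.Perm (Fin n),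
            ((Equiv.Perm.sign σ : ℤ) : ℝ) *
              ∏ b, (X (t (σ b)) (f (σ b)) * X (t (σ b)) (g b)) := by
      funext X
      rw [Matrix.det_apply', Finset.mul_sum]
      refine Finset.sum_congr rfl fun σ _ => ?_
      rw [mul_left_comm]
      congr 1
      rw [← Equiv.prod_comp σ (fun a => X (t a) (f a)), ← Finset.prod_mul_distrib]
      rfl
    have hterm : ∀ σ : Equiv.Perm (Fin n),
        Integrable (fun X : Fin k → Fin d → ℝ =>
            ((Equiv.Perm.sign σ : ℤ) : ℝ) *
              ∏ b, (X (t (σ b)) (f (σ b)) * X (t (σ b)) (g b)))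
          (Measure.pi fun _ : Fin k => μ) ∧
        (∫ X : Fin k → Fin d → ℝ,
            ((Equiv.Perm.sign σ : ℤ) : ℝ) *
              ∏ b, (X (t (σ b)) (f (σ b)) * X (t (σ b)) (g b))
              ∂(Measure.pi fun _ : Fin k => μ))
          = ((Equiv.Perm.sign σ : ℤ) : ℝ) *
              ∏ b, secondMoment μ (f (σ b)) (g b) := by
      intro σ
      have := prod_comp_integral μ (t ∘ σ) (ht.comp σ.injective)
        (fun b x => x (f (σ b)) * x (g b)) (fun b => hmom _ _)
      refine ⟨this.1.const_mul _, ?_⟩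
      rw [MeasureTheory.integral_const_mul]
      congr 1
      exact this.2
    constructor
    · rw [hexp]
      exact integrable_finset_sum _ fun σ _ => (hterm σ).1
    · rw [hexp, integral_finset_sum _ fun σ _ => (hterm σ).1]
      rw [Matrix.det_apply']
      exact Finset.sum_congr rfl fun σ _ => (hterm σ).2
  -- sum over all maps, the non-injective ones vanish
  have hzero : ∀ t : Fin n → Fin k, ¬ Function.Injective t →
      (fun X : Fin k → Fin d → ℝ =>
        (∏ a, X (t a) (f a)) * (Matrix.of fun a b : Fin n => X (t a) (g b)).det)
        = fun _ => (0 : ℝ) := by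
    intro t ht
    funext X
    rw [Function.not_injective_iff] at ht
    obtain ⟨a, b, hab, hne⟩ := ht
    have : (Matrix.of fun a b : Fin n => X (t a) (g b)).det = 0 :=
      Matrix.det_zero_of_row_eq hne (by funext c; simp [hab])
    rw [this, mul_zero]
  calc (∫ X : Fin k → Fin d → ℝ,
        (Matrix.of fun a b : Fin n => ∑ t, X t (f a) * X t (g b)).det
          ∂(Measure.pi fun _ : Fin k => μ))
      = ∫ X : Fin k → Fin d → ℝ, ∑ t : Fin n → Fin k,
          (∏ a, X (t a) (f a)) * (Matrix.of fun a b : Fin n => X (t a) (g b)).det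
            ∂(Measure.pi fun _ : Fin k => μ) :=
        integral_congr_ae (Filter.Eventually.of_forall fun X => hrow X)
    _ = ∑ t : Fin n → Fin k, ∫ X : Fin k → Fin d → ℝ,
          (∏ a, X (t a) (f a)) * (Matrix.of fun a b : Fin n => X (t a) (g b)).det
            ∂(Measure.pi fun _ : Fin k => μ) := by
        refine integral_finset_sum _ fun t _ => ?_
        by_cases ht : Function.Injective t
        · exact (hinj t ht).1
        · rw [hzero t ht]; exact integrable_const 0
    _ = ∑ t : Fin n → Fin k, if Function.Injective t then
          (Matrix.of fun a b : Fin n => secondMoment μ (f a) (g b)).det else 0 := by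
        refine Finset.sum_congr rfl fun t _ => ?_
        by_cases ht : Function.Injective t
        · rw [if_pos ht]; exact (hinj t ht).2
        · rw [if_neg ht, hzero t ht]; simp
    _ = (k.descFactorial n : ℝ) *
          (Matrix.of fun a b : Fin n => secondMoment μ (f a) (g b)).det := by
        rw [← Finset.sum_filter, Finset.sum_const, nsmul_eq_mul]
        congr 2
        rw [← Fintype.card_subtype,
          Fintype.card_congr (Equiv.subtypeInjectiveEquivEmbedding (Fin n) (Fin k)),
          Fintype.card_embedding_eq, Fintype.card_fin, Fintype.card_fin]

private lemma integral_adjugate {e k : ℕ}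
    (μ : Measure (Fin (e + 1) → ℝ)) [IsProbabilityMeasure μ]
    (hmom : ∀ i j : Fin (e + 1), Integrable (fun x : Fin (e + 1) → ℝ => x i * x j) μ)
    (i j : Fin (e + 1)) :
    (∫ X : Fin k → Fin (e + 1) → ℝ,
        ((Matrix.of X)ᵀ * Matrix.of X).adjugate i j ∂(Measure.pi fun _ : Fin k => μ))
      = (k.descFactorial e : ℝ) * (secondMoment μ).adjugate i j := by
  have h1 : ∀ X : Fin k → Fin (e + 1) → ℝ,
      ((Matrix.of X)ᵀ * Matrix.of X).adjugate i j
        = ((-1 : ℝ) ^ (j + i : ℕ)) *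
            (Matrix.of fun a b : Fin e => ∑ t, X t (j.succAbove a) * X t (i.succAbove b)).det := by
    intro X
    rw [Matrix.adjugate_fin_succ_eq_det_submatrix]
    have h3 : ((Matrix.of X)ᵀ * Matrix.of X).submatrix j.succAbove i.succAbove
        = Matrix.of fun a b : Fin e => ∑ t, X t (j.succAbove a) * X t (i.succAbove b) := by
      ext a b
      simp [Matrix.mul_apply]
    rw [h3]
  rw [integral_congr_ae (Filter.Eventually.of_forall h1), MeasureTheory.integral_const_mul,
    integral_det_gram μ hmom (Fin.succAbove j) (Fin.succAbove i)]
  have h2 : (Matrix.of fun a b : Fin e => secondMoment μ (j.succAbove a) (i.succAbove b))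
      = (secondMoment μ).submatrix j.succAbove i.succAbove := by
    ext a b; simp
  rw [h2, Matrix.adjugate_fin_succ_eq_det_submatrix (secondMoment μ) i j]
  ring

private lemma psd_det_nonneg {m : Type*} [Fintype m] [DecidableEq m]
    {A : Matrix m m ℝ} (hA : A.PosSemidef) : 0 ≤ A.det := by
  exact hA.det_nonneg

private lemma det_transpose_mul_self_nonneg {k m : ℕ} (A : Matrix (Fin k) (Fin m) ℝ) :
    0 ≤ (Aᵀ * A).det := by
  have h := Matrix.posSemidef_conjTranspose_mul_self A
  rw [Matrix.conjTranspose_eq_transpose_of_trivial] at h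
  exact psd_det_nonneg h

private lemma secondMoment_posSemidef_s5 {d : ℕ} (μ : Measure (Fin d → ℝ))
    [IsProbabilityMeasure μ]
    (hmom : ∀ i j : Fin d, Integrable (fun x : Fin d → ℝ => x i * x j) μ) :
    (secondMoment μ).PosSemidef := by
  refine Matrix.PosSemidef.of_dotProduct_mulVec_nonneg ?_ ?_
  · ext i j
    simp only [Matrix.conjTranspose_apply, secondMoment, Matrix.of_apply, star_trivial]
    exact integral_congr_ae (Filter.Eventually.of_forall fun x => mul_comm _ _)
  · intro v
    have h1 : ∀ i j : Fin d,
        Integrable (fun x : Fin d → ℝ => v i * v j * (x i * x j)) μ :=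
      fun i j => (hmom i j).const_mul _
    have key : star v ⬝ᵥ (secondMoment μ) *ᵥ v
        = ∫ x, (∑ i, v i * x i) * (∑ j, v j * x j) ∂μ := by
      calc star v ⬝ᵥ (secondMoment μ) *ᵥ v
          = ∑ i, ∑ j, v i * v j * (∫ x, x i * x j ∂μ) := by
            simp only [dotProduct, Matrix.mulVec, Pi.star_apply, star_trivial,
              secondMoment, Matrix.of_apply, Finset.mul_sum]
            exact Finset.sum_congr rfl fun i _ => Finset.sum_congr rfl fun j _ => by ring
        _ = ∑ i, ∑ j, ∫ x, v i * v j * (x i * x j) ∂μ := by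
            refine Finset.sum_congr rfl fun i _ => Finset.sum_congr rfl fun j _ => ?_
            rw [MeasureTheory.integral_const_mul]
        _ = ∫ x, ∑ i, ∑ j, v i * v j * (x i * x j) ∂μ := by
            rw [integral_finset_sum _ fun i _ => integrable_finset_sum _ fun j _ => h1 i j]
            exact Finset.sum_congr rfl fun i _ =>
              (integral_finset_sum _ fun j _ => h1 i j).symm
        _ = ∫ x, (∑ i, v i * x i) * (∑ j, v j * x j) ∂μ := by
            refine integral_congr_ae (Filter.Eventually.of_forall fun x => ?_)
            show (∑ i, ∑ j, v i * v j * (x i * x j))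
                = (∑ i, v i * x i) * (∑ j, v j * x j)
            rw [Finset.sum_mul_sum]
            exact Finset.sum_congr rfl fun i _ => Finset.sum_congr rfl fun j _ => by ring
    rw [key]
    exact integral_nonneg fun x => mul_self_nonneg _

private lemma isUnit_det_of_rank {d k : ℕ} (X : Matrix (Fin k) (Fin d) ℝ)
    (h : X.rank = d) : IsUnit (Xᵀ * X).det := by
  have h2 : (Xᵀ * X).rank = d := by rw [Matrix.rank_transpose_mul_self, h]
  have htop : LinearMap.range (Xᵀ * X).mulVecLin = ⊤ := by
    apply Submodule.eq_top_of_finrank_eq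
    rw [Module.finrank_fintype_fun_eq_card, Fintype.card_fin]
    exact h2
  have hsurj : Function.Surjective (Xᵀ * X).mulVec :=
    LinearMap.range_eq_top.1 htop
  exact (Matrix.isUnit_iff_isUnit_det _).1 (Matrix.mulVec_surjective_iff_isUnit.1 hsurj)

/-- **Expected inverse covariance under volume-rescaled sampling, full-rank case**
(Theorem 7, Dereziński–Warmuth–Hsu).
If `X̄ ~ VS^k` and `X ~ μ^k` has `rank(X) = d` almost surely, then
`E[(X̄ᵀX̄)⁻¹] = (k/(k−d+1))·(E[XᵀX])⁻¹ = (1/(k−d+1))·Σ⁻¹`. -/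
theorem expected_inverse_covariance_volume_rescaled
    {d k : ℕ} (hdk : d ≤ k)
    (μ : Measure (Fin d → ℝ)) [IsProbabilityMeasure μ]
    (hmom : ∀ i j : Fin d, Integrable (fun x : Fin d → ℝ => x i * x j) μ)
    (hSig : IsUnit (secondMoment μ).det)
    (hrank : ∀ᵐ X ∂(Measure.pi fun _ : Fin k => μ), (Matrix.of X).rank = d)
    (hint : ∀ i j : Fin d,
      Integrable
        (fun X : Fin k → Fin d → ℝ => (((Matrix.of X)ᵀ * Matrix.of X)⁻¹) i j) (VS μ k)) :
    (Matrix.of fun i j : Fin d =>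
        ∫ X : Fin k → Fin d → ℝ,
          (((Matrix.of X)ᵀ * Matrix.of X)⁻¹) i j ∂(VS μ k)) =
        ((k : ℝ) / ((k : ℝ) - (d : ℝ) + 1)) • ((k : ℝ) • secondMoment μ)⁻¹ ∧
      (Matrix.of fun i j : Fin d =>
        ∫ X : Fin k → Fin d → ℝ,
          (((Matrix.of X)ᵀ * Matrix.of X)⁻¹) i j ∂(VS μ k)) =
        (((k : ℝ) - (d : ℝ) + 1))⁻¹ • (secondMoment μ)⁻¹ := by
  by_cases hd : d = 0
  · subst hd
    constructor <;> · ext i j; exact i.elim0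
  obtain ⟨e, rfl⟩ := Nat.exists_eq_succ_of_ne_zero hd
  have hpsd := secondMoment_posSemidef_s5 μ hmom
  have hdetpos : 0 < (secondMoment μ).det :=
    lt_of_le_of_ne (psd_det_nonneg hpsd) (Ne.symm hSig.ne_zero)
  have hkpos : 0 < (k : ℝ) := by
    have : 0 < k := lt_of_lt_of_le (Nat.succ_pos e) hdk
    exact_mod_cast this
  have hek : e ≤ k := le_trans (Nat.le_succ e) hdk
  have heklt : e < k := lt_of_lt_of_le (Nat.lt_succ_self e) hdk
  have hdesc_e : (0 : ℝ) < (k.descFactorial e : ℝ) := by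
    have : k.descFactorial e ≠ 0 := fun h =>
      (Nat.lt_irrefl e (lt_of_le_of_lt hek (Nat.descFactorial_eq_zero_iff_lt.1 h)))
    exact_mod_cast Nat.pos_of_ne_zero this
  have hdesc_d : (0 : ℝ) < (k.descFactorial (e + 1) : ℝ) := by
    have : k.descFactorial (e + 1) ≠ 0 := fun h =>
      (Nat.lt_irrefl (e + 1) (lt_of_le_of_lt hdk (Nat.descFactorial_eq_zero_iff_lt.1 h)))
    exact_mod_cast Nat.pos_of_ne_zero this
  set c : ℝ := (k.descFactorial (e + 1) : ℝ) * (secondMoment μ).det with hc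
  have hcpos : 0 < c := mul_pos hdesc_d hdetpos
  have hkme : (0 : ℝ) < (k : ℝ) - e := by
    have : (e : ℝ) < k := by exact_mod_cast heklt
    linarith
  have hmeasdens : Measurable fun X : Fin k → Fin (e + 1) → ℝ =>
      Real.toNNReal (((Matrix.of X)ᵀ * Matrix.of X).det / c) := by
    apply Measurable.real_toNNReal
    apply Measurable.div_const
    have hcont : Continuous fun X : Fin k → Fin (e + 1) → ℝ =>
        ((Matrix.of X)ᵀ * Matrix.of X).det := by
      apply Continuous.matrix_det
      exact Continuous.matrix_mul (continuous_id.matrix_transpose) continuous_id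
    exact hcont.measurable
  have key : ∀ i j : Fin (e + 1),
      (∫ X : Fin k → Fin (e + 1) → ℝ,
          (((Matrix.of X)ᵀ * Matrix.of X)⁻¹) i j ∂(VS μ k))
        = (k.descFactorial e : ℝ) * (secondMoment μ).adjugate i j * c⁻¹ := by
    intro i j
    have hVS : VS μ k = (Measure.pi fun _ : Fin k => μ).withDensity
        (fun X => ((Real.toNNReal ((((Matrix.of X)ᵀ * Matrix.of X)).det / c) : ℝ≥0) : ℝ≥0∞)) :=
      rfl
    rw [hVS, integral_withDensity_eq_integral_smul hmeasdens]
    have hae : ∀ᵐ X ∂(Measure.pi fun _ : Fin k => μ),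
        (Real.toNNReal ((((Matrix.of X)ᵀ * Matrix.of X)).det / c) : ℝ≥0) •
            ((((Matrix.of X)ᵀ * Matrix.of X))⁻¹ i j)
          = ((Matrix.of X)ᵀ * Matrix.of X).adjugate i j * c⁻¹ := by
      filter_upwards [hrank] with X hX
      have hu : IsUnit (((Matrix.of X)ᵀ * Matrix.of X)).det := isUnit_det_of_rank _ hX
      have hdet0 : (((Matrix.of X)ᵀ * Matrix.of X)).det ≠ 0 := hu.ne_zero
      have hnn : 0 ≤ (((Matrix.of X)ᵀ * Matrix.of X)).det := det_transpose_mul_self_nonneg _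
      rw [NNReal.smul_def, Real.coe_toNNReal _ (div_nonneg hnn hcpos.le)]
      rw [Matrix.inv_def, Ring.inverse_eq_inv']
      simp only [Matrix.smul_apply, smul_eq_mul]
      field_simp
    rw [integral_congr_ae hae, MeasureTheory.integral_mul_const,
      integral_adjugate μ hmom i j]
  have hcast : (k : ℝ) - ((e + 1 : ℕ) : ℝ) + 1 = (k : ℝ) - e := by push_cast; ring
  have hdescsucc : (k.descFactorial (e + 1) : ℝ)
      = ((k : ℝ) - e) * (k.descFactorial e : ℝ) := by
    rw [Nat.descFactorial_succ]
    push_cast [Nat.cast_sub hek]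
    ring
  have hinvSig : (secondMoment μ)⁻¹ = (secondMoment μ).det⁻¹ • (secondMoment μ).adjugate := by
    rw [Matrix.inv_def, Ring.inverse_eq_inv']
  have second : (Matrix.of fun i j : Fin (e + 1) =>
      ∫ X : Fin k → Fin (e + 1) → ℝ,
        (((Matrix.of X)ᵀ * Matrix.of X)⁻¹) i j ∂(VS μ k)) =
      (((k : ℝ) - ((e + 1 : ℕ) : ℝ) + 1))⁻¹ • (secondMoment μ)⁻¹ := by
    ext i j
    rw [Matrix.of_apply, key i j, hcast, hinvSig]
    simp only [Matrix.smul_apply, smul_eq_mul]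
    rw [hc, hdescsucc]
    field_simp
  refine ⟨?_, second⟩
  rw [second]
  have hsmulinv : ((k : ℝ) • secondMoment μ)⁻¹ = (k : ℝ)⁻¹ • (secondMoment μ)⁻¹ := by
    apply Matrix.inv_eq_right_inv
    rw [Matrix.smul_mul, Matrix.mul_smul, smul_smul, Matrix.mul_nonsing_inv _ hSig,
      mul_inv_cancel₀ hkpos.ne', one_smul]
  rw [hsmulinv, smul_smul, hcast]
  congr 1
  field_simp
end

section
/- Let X̄ ~ VS^k. Then, assuming the stated expectations exist, E[(X̄ᵀX̄)⁻¹] ⪯ (1/(k−d+1))·Σ⁻¹ in the positive semidefinite (Loewner) order; equivalently, for X ~ D_X^k, E[det(XᵀX)·(XᵀX)⁻¹] ⪯ (k^{d̲}/(k−d+1))·det(Σ)·Σ⁻¹. -/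
open MeasureTheory ProbabilityTheory Matrix
open scoped ENNReal

/-! ### Auxiliary lemmas -/

namespace VSaux

section PiIntegral

variable {E : Type*} [MeasurableSpace E] {μ : Measure E} [IsProbabilityMeasure μ]

lemma pi_prod_integral {ι : Type*} [Fintype ι] (f : ι → E → ℝ) :
    ∫ x : ι → E, ∏ i, f i (x i) ∂(Measure.pi fun _ : ι => μ) = ∏ i, ∫ y, f i y ∂μ := by
  letI : MeasureSpace E := ⟨μ⟩
  haveI : SigmaFinite (volume : Measure E) := show SigmaFinite μ by infer_instance
  exact MeasureTheory.integral_fintype_prod_eq_prod f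

lemma pi_prod_integrable {ι : Type*} [Fintype ι] (f : ι → E → ℝ)
    (hf : ∀ i, Integrable (f i) μ) :
    Integrable (fun x : ι → E => ∏ i, f i (x i)) (Measure.pi fun _ : ι => μ) := by
  letI : MeasureSpace E := ⟨μ⟩
  haveI : SigmaFinite (volume : Measure E) := show SigmaFinite μ by infer_instance
  exact Integrable.fintype_prod hf

/-- Integrability and value of the integral of a product of functions of
injectively-chosen independent coordinates. -/
lemma pi_prod_integral_injOn {ι κ : Type*} [Fintype ι] [Fintype κ]
    (s : Finset ι) (r : ι → κ) (hr : ∀ a ∈ s, ∀ b ∈ s, r a = r b → a = b)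
    (g : ι → E → ℝ) (hg : ∀ a ∈ s, Integrable (g a) μ) :
    Integrable (fun x : κ → E => ∏ a ∈ s, g a (x (r a))) (Measure.pi fun _ : κ => μ) ∧
      ∫ x : κ → E, ∏ a ∈ s, g a (x (r a)) ∂(Measure.pi fun _ : κ => μ)
        = ∏ a ∈ s, ∫ y, g a y ∂μ := by
  classical
  set h : κ → E → ℝ := fun t y => ∏ a ∈ s.filter (fun a => r a = t), g a y with hh
  have hfib : ∀ t, s.filter (fun a => r a = t) = ∅ ∨
      ∃ a, a ∈ s ∧ s.filter (fun a => r a = t) = {a} := by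
    intro t
    rcases (s.filter (fun a => r a = t)).eq_empty_or_nonempty with he | ⟨a, ha⟩
    · exact Or.inl he
    · right
      have has : a ∈ s := (Finset.mem_filter.1 ha).1
      refine ⟨a, has, Finset.eq_singleton_iff_unique_mem.2 ⟨ha, ?_⟩⟩
      intro b hb
      have hbs := Finset.mem_filter.1 hb
      exact hr b hbs.1 a has (hbs.2.trans (Finset.mem_filter.1 ha).2.symm)
  have hpt : ∀ x : κ → E, ∏ a ∈ s, g a (x (r a)) = ∏ t : κ, h t (x t) := by
    intro x
    rw [← Finset.prod_fiberwise_of_maps_to (fun a _ => Finset.mem_univ (r a))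
      (fun a => g a (x (r a)))]
    refine Finset.prod_congr rfl fun t _ => Finset.prod_congr rfl fun a ha => ?_
    rw [(Finset.mem_filter.1 ha).2]
  have hint : ∀ t, Integrable (h t) μ := by
    intro t
    rcases hfib t with he | ⟨a, has, hsing⟩
    · simp only [hh, he, Finset.prod_empty]
      exact integrable_const 1
    · simp only [hh, hsing, Finset.prod_singleton]
      exact hg a has
  have hval : ∀ t, ∫ y, h t y ∂μ = ∏ a ∈ s.filter (fun a => r a = t), ∫ y, g a y ∂μ := by
    intro t
    rcases hfib t with he | ⟨a, has, hsing⟩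
    · simp [hh, he]
    · simp [hh, hsing]
  have hfun : (fun x : κ → E => ∏ a ∈ s, g a (x (r a))) = fun x => ∏ t, h t (x t) :=
    funext hpt
  constructor
  · rw [hfun]; exact pi_prod_integrable h hint
  · rw [hfun, pi_prod_integral h]
    rw [Finset.prod_congr rfl (fun t _ => hval t)]
    exact Finset.prod_fiberwise_of_maps_to (fun a _ => Finset.mem_univ (r a)) _

end PiIntegral

section DetExpand

/-- Leibniz-type expansion of the determinant of a matrix whose `j`-th row has been replaced
by the standard basis vector `e_i`. -/
lemma det_updateRow_single {d : ℕ} (i j : Fin d) (w : Fin d → Fin d → ℝ) :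
    ((Matrix.of w).updateRow j (Pi.single i 1)).det
      = ∑ σ : Equiv.Perm (Fin d), ((Equiv.Perm.sign σ : ℤ) : ℝ) *
          ((if σ j = i then (1 : ℝ) else 0) * ∏ a ∈ Finset.univ.erase j, w a (σ a)) := by
  rw [← Matrix.det_transpose, Matrix.det_apply']
  refine Finset.sum_congr rfl fun σ _ => ?_
  congr 1
  have h1 : (∏ a, ((Matrix.of w).updateRow j (Pi.single i 1))ᵀ (σ a) a)
      = ∏ a, ((Matrix.of w).updateRow j (Pi.single i 1)) a (σ a) := rfl
  rw [h1, ← Finset.mul_prod_erase Finset.univ _ (Finset.mem_univ j)]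
  congr 1
  · rw [Matrix.updateRow_self, Pi.single_apply]
  · exact Finset.prod_congr rfl fun a ha => by
      rw [Matrix.updateRow_ne (Finset.ne_of_mem_erase ha)]; rfl

/-- Scaling the rows of a matrix scales the determinant by the product of the scalars. -/
lemma det_rows_mul {d : ℕ} (v : Fin d → ℝ) (B : Matrix (Fin d) (Fin d) ℝ) :
    (Matrix.of fun a c => v a * B a c).det = (∏ a, v a) * B.det := by
  have h : (Matrix.of fun a c => v a * B a c) = (Matrix.of fun p q => v q * Bᵀ p q)ᵀ := by
    ext a c; rfl
  rw [h, Matrix.det_transpose, Matrix.det_mul_row, Matrix.det_transpose]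

end DetExpand

section PSDHelpers

lemma star_eq {d : ℕ} (x : Fin d → ℝ) : star x = x :=
  funext fun i => star_trivial (x i)

lemma isHermitian_of_symm {d : ℕ} {M : Matrix (Fin d) (Fin d) ℝ}
    (h : ∀ i j, M i j = M j i) : M.IsHermitian := by
  ext i j
  rw [Matrix.conjTranspose_apply, star_trivial, h]

lemma symm_of_isHermitian {d : ℕ} {M : Matrix (Fin d) (Fin d) ℝ}
    (h : M.IsHermitian) (i j : Fin d) : M i j = M j i := by
  have := congrFun (congrFun h j) i
  rw [Matrix.conjTranspose_apply, star_trivial] at this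
  exact this

lemma psd_smul {d : ℕ} {M : Matrix (Fin d) (Fin d) ℝ} (hM : M.PosSemidef)
    {c : ℝ} (hc : 0 ≤ c) : (c • M).PosSemidef := by
  refine Matrix.PosSemidef.of_dotProduct_mulVec_nonneg (isHermitian_of_symm fun i j => ?_) fun x => ?_
  · simp only [Matrix.smul_apply, smul_eq_mul]
    rw [symm_of_isHermitian hM.1]
  · rw [Matrix.smul_mulVec, dotProduct_smul, smul_eq_mul]
    exact mul_nonneg hc (hM.dotProduct_mulVec_nonneg x)

lemma adjugate_eq_det_smul_inv {d : ℕ} {N : Matrix (Fin d) (Fin d) ℝ}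
    (h : IsUnit N.det) : N.adjugate = N.det • N⁻¹ := by
  rw [Matrix.inv_def, Ring.inverse_eq_inv', smul_smul,
    mul_inv_cancel₀ h.ne_zero, one_smul]

lemma psd_det_nonneg {d : ℕ} {M : Matrix (Fin d) (Fin d) ℝ}
    (hM : M.PosSemidef) : 0 ≤ M.det := by
  rw [hM.1.det_eq_prod_eigenvalues]
  refine Finset.prod_nonneg fun a _ => ?_
  simpa using hM.eigenvalues_nonneg a

lemma posDef_add_smul_one {d : ℕ} {M : Matrix (Fin d) (Fin d) ℝ}
    (hM : M.PosSemidef) {ε : ℝ} (hε : 0 < ε) : (M + ε • 1).PosDef := by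
  refine Matrix.PosDef.posSemidef_add hM (Matrix.PosDef.of_dotProduct_mulVec_pos (isHermitian_of_symm fun i j => ?_) fun x hx => ?_)
  · simp only [Matrix.smul_apply, Matrix.one_apply, smul_eq_mul]
    by_cases h : i = j
    · subst h; rfl
    · rw [if_neg h, if_neg (Ne.symm h)]
  · rw [Matrix.smul_mulVec, Matrix.one_mulVec, dotProduct_smul, smul_eq_mul,
      star_eq]
    have hxx : 0 < x ⬝ᵥ x := by
      have := (Matrix.dotProduct_star_self_pos_iff (v := x)).2 hx
      rwa [star_eq] at this
    exact mul_pos hε hxx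

/-- The adjugate of a positive semidefinite real matrix is positive semidefinite. -/
lemma psd_adjugate {d : ℕ} {M : Matrix (Fin d) (Fin d) ℝ}
    (hM : M.PosSemidef) : M.adjugate.PosSemidef := by
  refine Matrix.PosSemidef.of_dotProduct_mulVec_nonneg (isHermitian_of_symm fun i j => ?_) fun x => ?_
  · have hMsymm : Mᵀ = M := Matrix.ext fun a b => symm_of_isHermitian hM.1 b a
    have h1 : M.adjugateᵀ = M.adjugate := by
      rw [Matrix.adjugate_transpose, hMsymm]
    exact (congrFun (congrFun h1 i) j).symm
  · rw [star_eq]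
    set q : ℝ → ℝ := fun ε => x ⬝ᵥ ((M + ε • 1).adjugate *ᵥ x) with hq
    have hcont : Continuous q := by
      have h1 : Continuous fun ε : ℝ => M + ε • (1 : Matrix (Fin d) (Fin d) ℝ) :=
        continuous_const.add (continuous_id.smul continuous_const)
      have h2 : Continuous fun ε : ℝ => (M + ε • (1 : Matrix (Fin d) (Fin d) ℝ)).adjugate :=
        h1.matrix_adjugate
      have h3 : q = fun ε => ∑ a, x a * ∑ b, (M + ε • 1).adjugate a b * x b := rfl
      rw [h3]
      refine continuous_finset_sum _ fun a _ => continuous_const.mul ?_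
      exact continuous_finset_sum _ fun b _ => ((h2.matrix_elem a b).mul continuous_const)
    have hpos : ∀ ε : ℝ, 0 < ε → 0 ≤ q ε := by
      intro ε hε
      have hPD := posDef_add_smul_one hM hε
      have hadj : (M + ε • 1).adjugate = (M + ε • 1).det • (M + ε • 1)⁻¹ :=
        adjugate_eq_det_smul_inv hPD.det_pos.ne'.isUnit
      have hPSD : (M + ε • 1).adjugate.PosSemidef := by
        rw [hadj]
        exact psd_smul hPD.inv.posSemidef hPD.det_pos.le
      have := hPSD.dotProduct_mulVec_nonneg x
      rwa [star_eq] at this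
    have h0 : q 0 = x ⬝ᵥ (M.adjugate *ᵥ x) := by
      rw [hq]; simp
    have htend : Filter.Tendsto q (nhdsWithin 0 (Set.Ioi 0)) (nhds (q 0)) :=
      (hcont.tendsto 0).mono_left nhdsWithin_le_nhds
    have hev : ∀ᶠ ε in nhdsWithin (0:ℝ) (Set.Ioi 0), 0 ≤ q ε := by
      filter_upwards [self_mem_nhdsWithin] with ε hε using hpos ε hε
    have := ge_of_tendsto htend hev
    rwa [h0] at this

/-- A matrix of entrywise integrals of pointwise PSD matrices is PSD. -/
lemma psd_integral {d : ℕ} {α : Type*} [MeasurableSpace α] (ν : Measure α)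
    (f : α → Matrix (Fin d) (Fin d) ℝ)
    (hint : ∀ i j, Integrable (fun X => f X i j) ν) (hpsd : ∀ X, (f X).PosSemidef) :
    (Matrix.of fun i j : Fin d => ∫ X, f X i j ∂ν).PosSemidef := by
  refine Matrix.PosSemidef.of_dotProduct_mulVec_nonneg (isHermitian_of_symm fun i j => ?_) fun x => ?_
  · simp only [Matrix.of_apply]
    exact integral_congr_ae (Filter.Eventually.of_forall fun X =>
      symm_of_isHermitian (hpsd X).1 i j)
  · rw [star_eq]
    have hTint : ∀ i j : Fin d,
        Integrable (fun X => x i * (f X i j * x j)) ν := fun i j =>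
      ((hint i j).const_mul (x i * x j)).congr
        (Filter.Eventually.of_forall fun X => by ring)
    have key : x ⬝ᵥ ((Matrix.of fun i j : Fin d => ∫ X, f X i j ∂ν) *ᵥ x)
        = ∫ X, x ⬝ᵥ (f X *ᵥ x) ∂ν := by
      simp only [dotProduct, Matrix.mulVec, Matrix.of_apply]
      have h1 : ∀ i : Fin d, x i * (∑ j, (∫ X, f X i j ∂ν) * x j)
          = ∫ X, ∑ j, x i * (f X i j * x j) ∂ν := by
        intro i
        rw [integral_finset_sum _ fun j _ => hTint i j, Finset.mul_sum]
        refine Finset.sum_congr rfl fun j _ => ?_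
        rw [show (fun X => x i * (f X i j * x j)) = fun X => (x i * x j) * f X i j from
          funext fun X => by ring, integral_const_mul]
        ring
      calc (∑ i, x i * ∑ j, (∫ X, f X i j ∂ν) * x j)
          = ∑ i, ∫ X, ∑ j, x i * (f X i j * x j) ∂ν := Finset.sum_congr rfl fun i _ => h1 i
        _ = ∫ X, ∑ i, ∑ j, x i * (f X i j * x j) ∂ν := by
            rw [integral_finset_sum _ fun i _ => integrable_finset_sum _ fun j _ => hTint i j]
        _ = ∫ X, ∑ i, x i * ∑ j, f X i j * x j ∂ν := by
            refine integral_congr_ae (Filter.Eventually.of_forall fun X => ?_)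
            exact Finset.sum_congr rfl fun i _ => by rw [Finset.mul_sum]
    rw [key]
    refine integral_nonneg fun X => ?_
    have := (hpsd X).dotProduct_mulVec_nonneg x
    rwa [star_eq] at this

end PSDHelpers

section Core

/-- The core computation: the expected adjugate of `XᵀX` for `k` i.i.d. rows equals
`k^{(d-1)̲}` times the adjugate of the second-moment matrix. -/
lemma core {d k : ℕ} (hdk : d ≤ k) (hd : 0 < d) (μ : Measure (Fin d → ℝ))
    [IsProbabilityMeasure μ]
    (hmom : ∀ i j : Fin d, Integrable (fun x : Fin d → ℝ => x i * x j) μ) (i j : Fin d) :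
    Integrable (fun X : Fin k → Fin d → ℝ => ((Matrix.of X)ᵀ * Matrix.of X).adjugate i j)
      (Measure.pi fun _ : Fin k => μ) ∧
    ∫ X : Fin k → Fin d → ℝ, ((Matrix.of X)ᵀ * Matrix.of X).adjugate i j
        ∂(Measure.pi fun _ : Fin k => μ)
      = (k.descFactorial (d - 1) : ℝ) * (secondMoment μ).adjugate i j := by
  classical
  have hk : 0 < k := lt_of_lt_of_le hd hdk
  set ν := (Measure.pi fun _ : Fin k => μ) with hν
  set t₀ : Fin k := ⟨0, hk⟩ with ht₀
  set A : Fin d → Finset (Fin k) := fun a => if a = j then {t₀} else Finset.univ with hA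
  set F : (Fin d → Fin k) → (Fin k → Fin d → ℝ) → ℝ := fun r X =>
    (∏ a ∈ Finset.univ.erase j, X (r a) a) *
      ((Matrix.of fun a c => X (r a) c).updateRow j (Pi.single i 1)).det with hF
  -- pointwise decomposition of the adjugate entry
  have hdecomp : ∀ X : Fin k → Fin d → ℝ,
      ((Matrix.of X)ᵀ * Matrix.of X).adjugate i j = ∑ r ∈ Fintype.piFinset A, F r X := by
    intro X
    rw [Matrix.adjugate_apply]
    have hrow : (((Matrix.of X)ᵀ * Matrix.of X).updateRow j (Pi.single i 1))
        = fun a => ∑ t ∈ A a, (if a = j then Pi.single i 1 else (X t a) • X t) := by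
      funext a
      by_cases haj : a = j
      · subst haj
        rw [Matrix.updateRow_self]
        simp [hA]
      · rw [Matrix.updateRow_ne haj]
        funext c
        simp only [hA, if_neg haj, Finset.sum_apply, Pi.smul_apply, smul_eq_mul]
        rw [Matrix.mul_apply]
        rfl
    have hdet0 : (((Matrix.of X)ᵀ * Matrix.of X).updateRow j (Pi.single i 1)).det
        = (Matrix.detRowAlternating :
            AlternatingMap ℝ (Fin d → ℝ) ℝ (Fin d)).toMultilinearMap
          (fun a => ∑ t ∈ A a, (if a = j then Pi.single i 1 else (X t a) • X t)) := by
      rw [show (((Matrix.of X)ᵀ * Matrix.of X).updateRow j (Pi.single i 1)).det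
          = (Matrix.detRowAlternating :
              AlternatingMap ℝ (Fin d → ℝ) ℝ (Fin d)).toMultilinearMap
            (((Matrix.of X)ᵀ * Matrix.of X).updateRow j (Pi.single i 1)) from rfl, hrow]
    rw [hdet0, (Matrix.detRowAlternating :
        AlternatingMap ℝ (Fin d → ℝ) ℝ (Fin d)).toMultilinearMap.map_sum_finset
      (fun a t => if a = j then Pi.single i 1 else (X t a) • X t) A]
    refine Finset.sum_congr rfl fun r _ => ?_
    have hmat : (fun a => if a = j then Pi.single i 1 else (X (r a) a) • X (r a))
        = Matrix.of fun a c => (if a = j then (1:ℝ) else X (r a) a) *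
            (((Matrix.of fun a c => X (r a) c).updateRow j (Pi.single i 1)) a c) := by
      funext a c
      by_cases haj : a = j
      · subst haj
        simp [Matrix.updateRow_self]
      · simp only [if_neg haj, Matrix.of_apply, Matrix.updateRow_ne haj, Pi.smul_apply,
          smul_eq_mul]
    have h2 : (Matrix.detRowAlternating :
        AlternatingMap ℝ (Fin d → ℝ) ℝ (Fin d)).toMultilinearMap
          (fun a => if a = j then Pi.single i 1 else (X (r a) a) • X (r a))
        = (Matrix.of fun a c => (if a = j then (1:ℝ) else X (r a) a) *
            (((Matrix.of fun a c => X (r a) c).updateRow j (Pi.single i 1)) a c)).det := by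
      rw [hmat]; rfl
    rw [h2, det_rows_mul]
    simp only [hF]
    congr 1
    rw [← Finset.mul_prod_erase Finset.univ _ (Finset.mem_univ j), if_pos rfl, one_mul]
    exact Finset.prod_congr rfl fun a ha => by rw [if_neg (Finset.ne_of_mem_erase ha)]
  -- good assignments
  have hgood : ∀ r : Fin d → Fin k, (∀ a b, a ≠ j → b ≠ j → r a = r b → a = b) →
      Integrable (F r) ν ∧ ∫ X, F r X ∂ν = (secondMoment μ).adjugate i j := by
    intro r hr
    have hFr : F r = fun X : Fin k → Fin d → ℝ =>
        ∑ σ : Equiv.Perm (Fin d), ((Equiv.Perm.sign σ : ℤ) : ℝ) *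
            (if σ j = i then (1:ℝ) else 0) *
            ∏ a ∈ Finset.univ.erase j, (X (r a) a * X (r a) (σ a)) := by
      funext X
      simp only [hF]
      rw [det_updateRow_single i j (fun a c => X (r a) c), Finset.mul_sum]
      refine Finset.sum_congr rfl fun σ _ => ?_
      rw [Finset.prod_mul_distrib]
      ring
    have hinj : ∀ a ∈ Finset.univ.erase j, ∀ b ∈ Finset.univ.erase j, r a = r b → a = b :=
      fun a ha b hb => hr a b (Finset.ne_of_mem_erase ha) (Finset.ne_of_mem_erase hb)
    have hterm : ∀ σ : Equiv.Perm (Fin d),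
        Integrable (fun X : Fin k → Fin d → ℝ =>
            ((Equiv.Perm.sign σ : ℤ) : ℝ) * (if σ j = i then (1:ℝ) else 0) *
            ∏ a ∈ Finset.univ.erase j, (X (r a) a * X (r a) (σ a))) ν ∧
        ∫ X : Fin k → Fin d → ℝ, (((Equiv.Perm.sign σ : ℤ) : ℝ) *
              (if σ j = i then (1:ℝ) else 0) *
            ∏ a ∈ Finset.univ.erase j, (X (r a) a * X (r a) (σ a))) ∂ν
          = ((Equiv.Perm.sign σ : ℤ) : ℝ) * (if σ j = i then (1:ℝ) else 0) *
            ∏ a ∈ Finset.univ.erase j, (secondMoment μ) a (σ a) := by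
      intro σ
      have hps := pi_prod_integral_injOn (μ := μ) (Finset.univ.erase j) r hinj
        (fun a y => y a * y (σ a)) (fun a _ => hmom a (σ a))
      constructor
      · exact hps.1.const_mul _
      · rw [integral_const_mul, hps.2]
        exact congrArg (HMul.hMul (((Equiv.Perm.sign σ : ℤ) : ℝ) *
          (if σ j = i then (1:ℝ) else 0))) (Finset.prod_congr rfl fun a _ => rfl)
    constructor
    · rw [hFr]
      exact integrable_finset_sum _ fun σ _ => (hterm σ).1
    · rw [hFr, integral_finset_sum _ fun σ _ => (hterm σ).1,
        Finset.sum_congr rfl fun σ _ => (hterm σ).2, Matrix.adjugate_apply]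
      rw [show ((secondMoment μ).updateRow j (Pi.single i 1)).det
          = ∑ σ : Equiv.Perm (Fin d), ((Equiv.Perm.sign σ : ℤ) : ℝ) *
              ((if σ j = i then (1:ℝ) else 0) * ∏ a ∈ Finset.univ.erase j,
                secondMoment μ a (σ a)) from det_updateRow_single i j (secondMoment μ)]
      exact Finset.sum_congr rfl fun σ _ => by ring
  -- bad assignments give the zero function
  have hbad : ∀ r : Fin d → Fin k, ¬(∀ a b, a ≠ j → b ≠ j → r a = r b → a = b) →
      F r = fun _ => 0 := by
    intro r hrbad
    push_neg at hrbad
    obtain ⟨a, b, haj, hbj, hab, hne⟩ := hrbad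
    funext X
    have hdet : ((Matrix.of fun a c => X (r a) c).updateRow j (Pi.single i 1)).det = 0 := by
      refine Matrix.det_zero_of_row_eq hne ?_
      funext c
      rw [Matrix.updateRow_ne haj, Matrix.updateRow_ne hbj]
      show X (r a) c = X (r b) c
      rw [hab]
    simp only [hF, hdet, mul_zero]
  -- membership in the pi finset
  have hmemA : ∀ r : Fin d → Fin k, r ∈ Fintype.piFinset A ↔ r j = t₀ := by
    intro r
    rw [Fintype.mem_piFinset]
    constructor
    · intro h
      have := h j
      simp only [hA, if_pos (rfl : j = j), Finset.mem_singleton] at this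
      exact this
    · intro h a
      by_cases haj : a = j
      · subst haj
        simp only [hA, Finset.mem_singleton]
        simpa using h
      · simp only [hA, if_neg haj]
        exact Finset.mem_univ _
  set Good : (Fin d → Fin k) → Prop := fun r => ∀ a b, a ≠ j → b ≠ j → r a = r b → a = b
    with hGood
  -- the count of good assignments
  have hcount : ((Fintype.piFinset A).filter Good).card = k.descFactorial (d - 1) := by
    have hcard : ((Fintype.piFinset A).filter Good).card
        = (Finset.univ : Finset ({a : Fin d // a ≠ j} ↪ Fin k)).card := by
      refine Finset.card_bij'
        (fun r hr => ⟨fun a => r a.1, fun a b hab => Subtype.ext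
          ((Finset.mem_filter.1 hr).2 a.1 b.1 a.2 b.2 hab)⟩)
        (fun e _ => fun a => if h : a = j then t₀ else e ⟨a, h⟩)
        (fun r hr => Finset.mem_univ _) ?_ ?_ ?_
      · intro e _
        rw [Finset.mem_filter]
        refine ⟨(hmemA _).2 (by simp), ?_⟩
        intro a b haj hbj hab
        simp only [dif_neg haj, dif_neg hbj] at hab
        exact congrArg Subtype.val (e.injective hab)
      · intro r hr
        funext a
        by_cases haj : a = j
        · subst haj
          simp only [dif_pos]
          exact ((hmemA r).1 (Finset.mem_filter.1 hr).1).symm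
        · simp only [Function.Embedding.coeFn_mk, dif_neg haj]
          rfl
      · intro e _
        apply DFunLike.ext
        intro a
        exact dif_neg a.2
    rw [hcard, Finset.card_univ, Fintype.card_embedding_eq, Fintype.card_fin]
    congr 1
    rw [Fintype.card_subtype_compl, Fintype.card_subtype_eq, Fintype.card_fin]
  -- assemble
  have hintr : ∀ r ∈ Fintype.piFinset A, Integrable (F r) ν := by
    intro r _
    by_cases hg : Good r
    · exact (hgood r hg).1
    · rw [hbad r hg]
      exact integrable_const 0
  have hintadj : Integrable
      (fun X : Fin k → Fin d → ℝ => ((Matrix.of X)ᵀ * Matrix.of X).adjugate i j) ν := by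
    rw [show (fun X : Fin k → Fin d → ℝ => ((Matrix.of X)ᵀ * Matrix.of X).adjugate i j)
        = fun X => ∑ r ∈ Fintype.piFinset A, F r X from funext hdecomp]
    exact integrable_finset_sum _ hintr
  refine ⟨hintadj, ?_⟩
  have hstep : ∫ X, ((Matrix.of X)ᵀ * Matrix.of X).adjugate i j ∂ν
      = ∑ r ∈ Fintype.piFinset A, ∫ X, F r X ∂ν := by
    rw [← integral_finset_sum _ hintr]
    exact integral_congr_ae (Filter.Eventually.of_forall fun X => hdecomp X)
  have hsum : ∀ r ∈ Fintype.piFinset A, ∫ X, F r X ∂ν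
      = if Good r then (secondMoment μ).adjugate i j else 0 := by
    intro r _
    by_cases hg : Good r
    · rw [if_pos hg, (hgood r hg).2]
    · rw [if_neg hg, hbad r hg]
      simp
  rw [hstep, Finset.sum_congr rfl hsum, ← Finset.sum_filter, Finset.sum_const, hcount,
    nsmul_eq_mul]

end Core

end VSaux

/-- **Expected inverse covariance under volume-rescaled sampling, general case**
(Theorem 7, Dereziński–Warmuth–Hsu, inequality form).
If `X̄ ~ VS^k`, then `E[(X̄ᵀX̄)⁻¹] ⪯ (1/(k−d+1))·Σ⁻¹` in the Loewner order; equivalently,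
for `X ~ μ^k`, `E[det(XᵀX)·(XᵀX)⁻¹] ⪯ (k^{d̲}/(k−d+1))·det(Σ)·Σ⁻¹`. -/
theorem expected_inverse_covariance_psd_bound
    {d k : ℕ} (hdk : d ≤ k)
    (μ : Measure (Fin d → ℝ)) [IsProbabilityMeasure μ]
    (hmom : ∀ i j : Fin d, Integrable (fun x : Fin d → ℝ => x i * x j) μ)
    (hSig : IsUnit (secondMoment μ).det)
    (hint : ∀ i j : Fin d,
      Integrable
        (fun X : Fin k → Fin d → ℝ => (((Matrix.of X)ᵀ * Matrix.of X)⁻¹) i j) (VS μ k))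
    (hint' : ∀ i j : Fin d,
      Integrable
        (fun X : Fin k → Fin d → ℝ =>
          ((Matrix.of X)ᵀ * Matrix.of X).det * ((((Matrix.of X)ᵀ * Matrix.of X)⁻¹) i j))
        (Measure.pi fun _ : Fin k => μ)) :
    ((((k : ℝ) - (d : ℝ) + 1))⁻¹ • (secondMoment μ)⁻¹ -
        Matrix.of fun i j : Fin d =>
          ∫ X : Fin k → Fin d → ℝ,
            (((Matrix.of X)ᵀ * Matrix.of X)⁻¹) i j ∂(VS μ k)).PosSemidef ∧
      ((((k.descFactorial d : ℝ) / ((k : ℝ) - (d : ℝ) + 1)) * (secondMoment μ).det) •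
          (secondMoment μ)⁻¹ -
        Matrix.of fun i j : Fin d =>
          ∫ X : Fin k → Fin d → ℝ,
            ((Matrix.of X)ᵀ * Matrix.of X).det * ((((Matrix.of X)ᵀ * Matrix.of X)⁻¹) i j)
            ∂(Measure.pi fun _ : Fin k => μ)).PosSemidef := by
  classical
  rcases Nat.eq_zero_or_pos d with hd0 | hd
  · subst hd0
    constructor <;>
      exact Matrix.PosSemidef.of_dotProduct_mulVec_nonneg (Matrix.ext fun i => i.elim0) fun x => by simp [dotProduct]
  · set ν := (Measure.pi fun _ : Fin k => μ) with hν
    have hMpsd : ∀ X : Fin k → Fin d → ℝ, ((Matrix.of X)ᵀ * Matrix.of X).PosSemidef := by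
      intro X
      have h := Matrix.posSemidef_conjTranspose_mul_self (Matrix.of X)
      rwa [show (Matrix.of X)ᴴ = (Matrix.of X)ᵀ from
        Matrix.ext fun a b => star_trivial _] at h
    -- the second-moment matrix is PSD with positive determinant
    have hSpsd : (secondMoment μ).PosSemidef := by
      refine Matrix.PosSemidef.of_dotProduct_mulVec_nonneg (VSaux.isHermitian_of_symm fun a b => ?_) fun x => ?_
      · show (∫ y, y a * y b ∂μ) = ∫ y, y b * y a ∂μ
        exact integral_congr_ae (Filter.Eventually.of_forall fun y => mul_comm _ _)
      · rw [VSaux.star_eq]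
        have hT : ∀ a b : Fin d,
            Integrable (fun y : Fin d → ℝ => (x a * y a) * (x b * y b)) μ := fun a b =>
          ((hmom a b).const_mul (x a * x b)).congr
            (Filter.Eventually.of_forall fun y => by ring)
        have key : x ⬝ᵥ (secondMoment μ *ᵥ x) = ∫ y, (∑ a, x a * y a) ^ 2 ∂μ := by
          simp only [dotProduct, Matrix.mulVec]
          have h1 : ∀ a : Fin d, x a * (∑ b, secondMoment μ a b * x b)
              = ∫ y, ∑ b, (x a * y a) * (x b * y b) ∂μ := by
            intro a
            rw [integral_finset_sum _ fun b _ => hT a b, Finset.mul_sum]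
            refine Finset.sum_congr rfl fun b _ => ?_
            rw [show (fun y : Fin d → ℝ => (x a * y a) * (x b * y b))
                = fun y => (x a * x b) * (y a * y b) from funext fun y => by ring,
              integral_const_mul]
            show x a * ((∫ y, y a * y b ∂μ) * x b) = (x a * x b) * ∫ y, y a * y b ∂μ
            ring
          rw [Finset.sum_congr rfl fun a _ => h1 a,
            ← integral_finset_sum _ fun a _ => integrable_finset_sum _ fun b _ => hT a b]
          refine integral_congr_ae (Filter.Eventually.of_forall fun y => ?_)
          show (∑ a, ∑ b, (x a * y a) * (x b * y b)) = (∑ a, x a * y a) ^ 2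
          rw [sq, Finset.sum_mul_sum]
        rw [key]
        exact integral_nonneg fun y => sq_nonneg _
    have hdetS : 0 < (secondMoment μ).det :=
      lt_of_le_of_ne (VSaux.psd_det_nonneg hSpsd) (Ne.symm hSig.ne_zero)
    -- casts and the falling-factorial identity
    have hcast : ((k : ℝ) - (d:ℝ) + 1) = ((k - d + 1 : ℕ) : ℝ) := by
      push_cast [Nat.cast_sub hdk]; ring
    have hkd1 : (0:ℝ) < (k:ℝ) - (d:ℝ) + 1 := by
      rw [hcast]
      exact_mod_cast Nat.succ_le_of_lt (by omega)
    have hdescnat : k.descFactorial d = (k - d + 1) * k.descFactorial (d-1) := by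
      conv_lhs => rw [show d = (d-1)+1 by omega]
      rw [Nat.descFactorial_succ]
      congr 1
      omega
    have hdesc : (k.descFactorial d : ℝ)
        = ((k:ℝ) - (d:ℝ) + 1) * (k.descFactorial (d-1) : ℝ) := by
      rw [hcast]
      exact_mod_cast congrArg (Nat.cast : ℕ → ℝ) hdescnat
    have hdescpos : (0:ℝ) < (k.descFactorial d : ℝ) := by
      have : k.descFactorial d ≠ 0 := by
        intro h
        have := Nat.descFactorial_eq_zero_iff_lt.1 h
        omega
      exact_mod_cast Nat.pos_of_ne_zero this
    have hratio : (k.descFactorial d : ℝ) / ((k : ℝ) - (d:ℝ) + 1)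
        = (k.descFactorial (d-1) : ℝ) := by
      rw [hdesc]
      field_simp
    have hadjS : (secondMoment μ).adjugate = (secondMoment μ).det • (secondMoment μ)⁻¹ :=
      VSaux.adjugate_eq_det_smul_inv hSig
    have hcore := fun i j : Fin d => VSaux.core hdk hd μ hmom i j
    -- pointwise PSD of adj(XᵀX) - det(XᵀX)•(XᵀX)⁻¹
    have hpoint : ∀ X : Fin k → Fin d → ℝ,
        (((Matrix.of X)ᵀ * Matrix.of X).adjugate -
          ((Matrix.of X)ᵀ * Matrix.of X).det • ((Matrix.of X)ᵀ * Matrix.of X)⁻¹).PosSemidef := by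
      intro X
      by_cases hu : IsUnit ((Matrix.of X)ᵀ * Matrix.of X).det
      · rw [VSaux.adjugate_eq_det_smul_inv hu, sub_self]
        exact Matrix.PosSemidef.zero
      · rw [Matrix.nonsing_inv_apply_not_isUnit _ hu, smul_zero, sub_zero]
        exact VSaux.psd_adjugate (hMpsd X)
    have hentint : ∀ i j : Fin d,
        Integrable (fun X : Fin k → Fin d → ℝ =>
          (((Matrix.of X)ᵀ * Matrix.of X).adjugate -
            ((Matrix.of X)ᵀ * Matrix.of X).det • ((Matrix.of X)ᵀ * Matrix.of X)⁻¹) i j) ν := by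
      intro i j
      exact ((hcore i j).1.sub (hint' i j)).congr
        (Filter.Eventually.of_forall fun X => by
          simp [Matrix.sub_apply, Matrix.smul_apply, smul_eq_mul])
    -- part 2
    have hpart2mat :
        ((((k.descFactorial d : ℝ) / ((k : ℝ) - (d : ℝ) + 1)) * (secondMoment μ).det) •
            (secondMoment μ)⁻¹ -
          Matrix.of fun i j : Fin d =>
            ∫ X : Fin k → Fin d → ℝ,
              ((Matrix.of X)ᵀ * Matrix.of X).det * ((((Matrix.of X)ᵀ * Matrix.of X)⁻¹) i j) ∂ν)
        = Matrix.of fun i j : Fin d => ∫ X : Fin k → Fin d → ℝ,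
            (((Matrix.of X)ᵀ * Matrix.of X).adjugate -
              ((Matrix.of X)ᵀ * Matrix.of X).det • ((Matrix.of X)ᵀ * Matrix.of X)⁻¹) i j ∂ν := by
      ext i j
      simp only [Matrix.sub_apply, Matrix.smul_apply, Matrix.of_apply, smul_eq_mul]
      rw [integral_sub (hcore i j).1 (hint' i j), (hcore i j).2, hratio,
        show (secondMoment μ).adjugate i j = (secondMoment μ).det * (secondMoment μ)⁻¹ i j
          from by rw [hadjS]; rfl]
      ring
    have hpart2 :
        ((((k.descFactorial d : ℝ) / ((k : ℝ) - (d : ℝ) + 1)) * (secondMoment μ).det) •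
            (secondMoment μ)⁻¹ -
          Matrix.of fun i j : Fin d =>
            ∫ X : Fin k → Fin d → ℝ,
              ((Matrix.of X)ᵀ * Matrix.of X).det *
                ((((Matrix.of X)ᵀ * Matrix.of X)⁻¹) i j) ∂ν).PosSemidef := by
      rw [hpart2mat]
      exact VSaux.psd_integral ν _ hentint hpoint
    -- part 1 : relate the VS-integral to the density-weighted integral
    set C : ℝ := (k.descFactorial d : ℝ) * (secondMoment μ).det with hC
    have hCpos : 0 < C := mul_pos hdescpos hdetS
    have hcontM : Continuous fun X : Fin k → Fin d → ℝ => (Matrix.of X)ᵀ * Matrix.of X := by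
      apply continuous_matrix
      intro a b
      show Continuous fun X : Fin k → Fin d → ℝ => ∑ t, X t a * X t b
      exact continuous_finset_sum _ fun t _ =>
        (((continuous_apply a).comp (continuous_apply t)).fun_mul
          ((continuous_apply b).comp (continuous_apply t)))
    have hmeas : Measurable fun X : Fin k → Fin d → ℝ =>
        ((((Matrix.of X)ᵀ * Matrix.of X).det / C)).toNNReal :=
      measurable_real_toNNReal.comp ((hcontM.matrix_det).measurable.div_const C)
    have hVSint : ∀ i j : Fin d,
        ∫ X : Fin k → Fin d → ℝ, (((Matrix.of X)ᵀ * Matrix.of X)⁻¹) i j ∂(VS μ k)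
        = C⁻¹ * ∫ X : Fin k → Fin d → ℝ,
            ((Matrix.of X)ᵀ * Matrix.of X).det * ((((Matrix.of X)ᵀ * Matrix.of X)⁻¹) i j) ∂ν := by
      intro i j
      have hVS : VS μ k = ν.withDensity fun X =>
          (((((Matrix.of X)ᵀ * Matrix.of X).det / C)).toNNReal : ℝ≥0∞) := rfl
      rw [hVS, integral_withDensity_eq_integral_smul hmeas]
      have hpt : ∀ X : Fin k → Fin d → ℝ,
          ((((Matrix.of X)ᵀ * Matrix.of X).det / C)).toNNReal •
              ((((Matrix.of X)ᵀ * Matrix.of X)⁻¹) i j)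
          = C⁻¹ * (((Matrix.of X)ᵀ * Matrix.of X).det *
              ((((Matrix.of X)ᵀ * Matrix.of X)⁻¹) i j)) := by
        intro X
        have hnn : 0 ≤ ((Matrix.of X)ᵀ * Matrix.of X).det / C :=
          div_nonneg (VSaux.psd_det_nonneg (hMpsd X)) hCpos.le
        rw [NNReal.smul_def, Real.coe_toNNReal _ hnn, div_eq_inv_mul, smul_eq_mul]
        ring
      rw [integral_congr_ae (Filter.Eventually.of_forall hpt), integral_const_mul]
    have hpart1mat :
        ((((k : ℝ) - (d : ℝ) + 1))⁻¹ • (secondMoment μ)⁻¹ -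
          Matrix.of fun i j : Fin d =>
            ∫ X : Fin k → Fin d → ℝ,
              (((Matrix.of X)ᵀ * Matrix.of X)⁻¹) i j ∂(VS μ k))
        = C⁻¹ • ((((k.descFactorial d : ℝ) / ((k : ℝ) - (d : ℝ) + 1)) * (secondMoment μ).det) •
            (secondMoment μ)⁻¹ -
          Matrix.of fun i j : Fin d =>
            ∫ X : Fin k → Fin d → ℝ,
              ((Matrix.of X)ᵀ * Matrix.of X).det *
                ((((Matrix.of X)ᵀ * Matrix.of X)⁻¹) i j) ∂ν) := by
      rw [smul_sub]
      congr 1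
      · rw [smul_smul]
        congr 1
        rw [hC]
        field_simp
      · ext i j
        simp only [Matrix.smul_apply, Matrix.of_apply, smul_eq_mul]
        exact hVSint i j
    constructor
    · rw [hpart1mat]
      exact VSaux.psd_smul hpart2 (inv_nonneg.2 hCpos.le)
    · exact hpart2
end

section
/- For any matrix X ∈ ℝ^{k×d} with k > d, writing I_{−i} := I − e_i e_iᵀ ∈ ℝ^{k×k} (identity with the i-th diagonal entry zeroed), the following identity holds: det(XᵀX)·(XᵀX)⁻¹Xᵀ = (1/(k−d)) · Σ_{i=1}^k det(Xᵀ I_{−i} X)·(Xᵀ I_{−i} X)⁻¹ (I_{−i} X)ᵀ. (With the convention M⁻¹ = 0 for singular M, each side equals the corresponding Moore–Penrose expression det(XᵀX)·X† and det(Xᵀ I_{−i} X)·(I_{−i}X)†.) -/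
open Matrix

section helpers
variable {l m n : Type*} [Fintype m]

set_option linter.unusedSectionVars false

lemma my_mul_vecMulVec (M : Matrix l m ℝ) (u : m → ℝ) (v : n → ℝ) :
    M * vecMulVec u v = vecMulVec (M *ᵥ u) v := by
  ext a b
  simp only [mul_apply, vecMulVec_apply, mulVec, dotProduct, Finset.sum_mul]
  exact Finset.sum_congr rfl fun c _ => by ring

lemma my_vecMulVec_mul (u : l → ℝ) (v : m → ℝ) (M : Matrix m n ℝ) :
    vecMulVec u v * M = vecMulVec u (v ᵥ* M) := by
  ext a b
  simp only [mul_apply, vecMulVec_apply, vecMul, dotProduct, Finset.mul_sum]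
  exact Finset.sum_congr rfl fun c _ => by ring

lemma my_vecMul_vecMulVec (v : m → ℝ) (w : m → ℝ) (z : n → ℝ) :
    v ᵥ* vecMulVec w z = (v ⬝ᵥ w) • z := by
  funext b
  simp only [vecMul, dotProduct, vecMulVec_apply, Pi.smul_apply, smul_eq_mul, Finset.sum_mul]
  exact Finset.sum_congr rfl fun c _ => by ring

lemma my_sum_stdBasisMatrix (k : ℕ) :
    ∑ i : Fin k, single i i (1 : ℝ) = 1 := by
  ext a b
  simp only [Matrix.sum_apply, single, of_apply, one_apply, ite_and]
  rw [Finset.sum_ite_eq' (Finset.univ : Finset (Fin k)) a fun i => if i = b then (1:ℝ) else 0]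
  simp

lemma my_row_mul (M : Matrix l m ℝ) (N : Matrix m n ℝ) (i : l) :
    (M * N) i = M i ᵥ* N := by
  funext b
  simp [mul_apply, vecMul, dotProduct]

end helpers

/-- **Pseudoinverse leave-one-out identity**
(Lemma 9, Dereziński–Warmuth–Hsu, due to Dereziński–Warmuth).
For any `X ∈ ℝ^{k×d}` with `k > d`, writing `I₋ᵢ = I − eᵢeᵢᵀ`,
`det(XᵀX)·(XᵀX)⁻¹Xᵀ = (1/(k−d)) Σᵢ det(XᵀI₋ᵢX)·(XᵀI₋ᵢX)⁻¹(I₋ᵢX)ᵀ`. -/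
theorem det_smul_pseudoinverse_leave_one_out
    {d k : ℕ} (hdk : d < k) (X : Matrix (Fin k) (Fin d) ℝ) :
    (Xᵀ * X).det • ((Xᵀ * X)⁻¹ * Xᵀ) =
      ((k : ℝ) - (d : ℝ))⁻¹ •
        ∑ i : Fin k,
          (Xᵀ * ((1 : Matrix (Fin k) (Fin k) ℝ) - Matrix.single i i 1) * X).det •
            ((Xᵀ * ((1 : Matrix (Fin k) (Fin k) ℝ) - Matrix.single i i 1) * X)⁻¹ *
              (((1 : Matrix (Fin k) (Fin k) ℝ) - Matrix.single i i 1) * X)ᵀ) := by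
  set A : Matrix (Fin d) (Fin d) ℝ := Xᵀ * X with hA_def
  -- rewrite the building blocks
  have hE : ∀ i : Fin k, single i i (1:ℝ) =
      vecMulVec (Pi.single i 1) (Pi.single i 1) :=
    fun i => single_eq_single_vecMulVec_single i i
  have hXrow : ∀ i : Fin k, Xᵀ *ᵥ Pi.single i 1 = X i := by
    intro i; funext a
    simp [mulVec, dotProduct, transpose_apply, Pi.single_apply]
  have hB : ∀ i : Fin k, Xᵀ * ((1 : Matrix (Fin k) (Fin k) ℝ) - single i i 1) * X
      = A - vecMulVec (X i) (X i) := by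
    intro i
    rw [Matrix.mul_sub, Matrix.mul_one, Matrix.sub_mul, hE,
      my_mul_vecMulVec, hXrow, my_vecMulVec_mul]
    congr 2
    funext b
    simp [vecMul, dotProduct, Pi.single_apply]
  have hY : ∀ i : Fin k, (((1 : Matrix (Fin k) (Fin k) ℝ) - single i i 1) * X)ᵀ
      = Xᵀ - vecMulVec (X i) (Pi.single i 1) := by
    intro i
    rw [transpose_mul, transpose_sub, transpose_one, hE]
    have ht : (vecMulVec (Pi.single i (1:ℝ)) (Pi.single i 1))ᵀ
        = vecMulVec (Pi.single i 1) (Pi.single i 1) := by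
      ext a b; simp [vecMulVec_apply, mul_comm]
    rw [ht, Matrix.mul_sub, Matrix.mul_one, my_mul_vecMulVec, hXrow]
  -- key entrywise fact used several times
  have hsingle_vecMul : ∀ (i : Fin k) (M : Matrix (Fin k) (Fin k) ℝ),
      (Pi.single i 1 : Fin k → ℝ) ᵥ* M = M i := by
    intro i M; funext b
    simp [vecMul, dotProduct, Pi.single_apply]
  by_cases hA : IsUnit A.det
  · -- invertible case
    have hA1 : A * A⁻¹ = 1 := Matrix.mul_nonsing_inv _ hA
    have hA2 : A⁻¹ * A = 1 := Matrix.nonsing_inv_mul _ hA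
    set P : Matrix (Fin d) (Fin k) ℝ := A⁻¹ * Xᵀ with hP_def
    set H : Matrix (Fin k) (Fin k) ℝ := X * P with hH_def
    have hPX : P * X = 1 := by
      rw [hP_def, Matrix.mul_assoc, ← hA_def, hA2]
    have hPH : P * H = P := by
      rw [hH_def, ← Matrix.mul_assoc, hPX, Matrix.one_mul]
    have hHH : H * H = H := by
      rw [hH_def, Matrix.mul_assoc X P (X * P), ← hH_def, hPH]
    have hHsym : ∀ a b, H b a = H a b := by
      intro a b
      have hAiT : A⁻¹ᵀ = A⁻¹ := by
        rw [Matrix.transpose_nonsing_inv]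
        congr 1
        rw [hA_def, transpose_mul, transpose_transpose]
      have : Hᵀ = H := by
        rw [hH_def, hP_def, transpose_mul, transpose_mul, hAiT, transpose_transpose,
          Matrix.mul_assoc]
      exact congrFun (congrFun this a) b
    have htr : ∑ b : Fin k, H b b = (d : ℝ) := by
      have h1 : H.trace = (1 : Matrix (Fin d) (Fin d) ℝ).trace := by
        rw [hH_def, Matrix.trace_mul_comm, hPX]
      have h2 : (1 : Matrix (Fin d) (Fin d) ℝ).trace = (d : ℝ) := by
        rw [Matrix.trace_one]; simp
      rw [← h2, ← h1]
      rfl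
    have hHrow : ∀ i : Fin k, H i = (X i) ᵥ* P := fun i => my_row_mul X P i
    have hHii : ∀ i : Fin k, (X i) ᵥ* A⁻¹ ⬝ᵥ (X i) = H i i := by
      intro i
      have h1 : H i = (X i) ᵥ* A⁻¹ ᵥ* Xᵀ := by
        rw [hHrow i, hP_def, Matrix.vecMul_vecMul]
      rw [h1, Matrix.vecMul_transpose]
      simp [Matrix.mulVec, dotProduct_comm]
    -- the key per-index identity
    have key : ∀ i : Fin k,
        (A - vecMulVec (X i) (X i)).det •
          ((A - vecMulVec (X i) (X i))⁻¹ * (Xᵀ - vecMulVec (X i) (Pi.single i 1))) =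
        A.det • ((1 - H i i) • P + P * single i i (1:ℝ) * (H - 1)) := by
      intro i
      set u : Fin d → ℝ := X i with hu_def
      -- determinant lemma
      have hdet : (A - vecMulVec u u).det = A.det * (1 - H i i) := by
        have h0 : A - vecMulVec u u = A + replicateCol (Fin 1) u * replicateRow (Fin 1) (-u) := by
          rw [show replicateCol (Fin 1) u * replicateRow (Fin 1) (-u) = vecMulVec u (-u) from
            (vecMulVec_eq (Fin 1) u (-u)).symm]
          ext a b
          simp [vecMulVec_apply]
          ring
        rw [h0, det_add_mul _ _ hA]
        congr 1
        rw [← Matrix.replicateRow_vecMul, Matrix.replicateRow_mul_replicateCol, det_fin_one, Matrix.add_apply,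
          Matrix.one_apply_eq, Matrix.of_apply, Matrix.neg_vecMul, neg_dotProduct,
          hHii i]
        ring
      -- the useful product facts
      have hPE : P * single i i (1:ℝ) * (H - 1)
          = A⁻¹ * vecMulVec u (H i) - A⁻¹ * vecMulVec u (Pi.single i 1) := by
        rw [hE i, my_mul_vecMulVec, my_vecMulVec_mul, hsingle_vecMul i (H - 1)]
        have hPu : P *ᵥ Pi.single i 1 = A⁻¹ *ᵥ u := by
          rw [hP_def, ← Matrix.mulVec_mulVec, hXrow i]
        have hH1 : (H - 1) i = H i - Pi.single i 1 := by
          funext b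
          simp [Matrix.sub_apply, Matrix.one_apply, Pi.single_apply, eq_comm]
        rw [hPu, hH1, my_mul_vecMulVec, my_mul_vecMulVec]
        ext a b
        simp [vecMulVec_apply]
        ring
      by_cases hs : H i i = 1
      · -- singular leave-one-out case: row i of H is eᵢ
        have hrow : H i = Pi.single i 1 := by
          have hsq : ∑ b : Fin k, (H i b - (Pi.single i 1 : Fin k → ℝ) b)^2 = 0 := by
            have e1 : ∑ b : Fin k, H i b * H i b = 1 := by
              have h1 : (H * H) i i = H i i := by rw [hHH]
              rw [mul_apply] at h1
              calc ∑ b : Fin k, H i b * H i b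
                  = ∑ b : Fin k, H i b * H b i :=
                    Finset.sum_congr rfl fun b _ => by rw [hHsym b i]
                _ = 1 := by rw [h1, hs]
            have e2 : ∑ b : Fin k, H i b * (Pi.single i 1 : Fin k → ℝ) b = 1 := by
              simp [Pi.single_apply, hs]
            have e3 : ∑ b : Fin k, (Pi.single i 1 : Fin k → ℝ) b * (Pi.single i 1 : Fin k → ℝ) b = 1 := by
              simp [Pi.single_apply]
            have : ∑ b : Fin k, (H i b - (Pi.single i 1 : Fin k → ℝ) b)^2
                = ∑ b : Fin k, (H i b * H i b - 2 * (H i b * (Pi.single i 1 : Fin k → ℝ) b)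
                    + (Pi.single i 1 : Fin k → ℝ) b * (Pi.single i 1 : Fin k → ℝ) b) :=
              Finset.sum_congr rfl fun b _ => by ring
            rw [this, Finset.sum_add_distrib, Finset.sum_sub_distrib, e1, e3,
              ← Finset.mul_sum, e2]
            ring
          funext b
          have hb := (Finset.sum_eq_zero_iff_of_nonneg
            (fun b _ => sq_nonneg (H i b - (Pi.single i 1 : Fin k → ℝ) b))).mp hsq b (Finset.mem_univ b)
          have := pow_eq_zero_iff (n := 2) (by norm_num) |>.mp hb
          linarith [this]
        rw [hdet, hPE, hrow]
        simp
      · -- Sherman–Morrison case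
        have hc : (1 : ℝ) - H i i ≠ 0 := sub_ne_zero.mpr (Ne.symm hs)
        set N : Matrix (Fin d) (Fin d) ℝ :=
          A⁻¹ + ((1:ℝ) - H i i)⁻¹ • (A⁻¹ * vecMulVec u u * A⁻¹) with hN_def
        have hUAU : vecMulVec u u * A⁻¹ * vecMulVec u u = H i i • vecMulVec u u := by
          rw [my_vecMulVec_mul, my_vecMulVec_mul, my_vecMul_vecMulVec, hHii i]
          ext a b
          simp [vecMulVec_apply, Matrix.smul_apply, Pi.smul_apply, smul_eq_mul]
          ring
        have h1 : A * (A⁻¹ * vecMulVec u u * A⁻¹) = vecMulVec u u * A⁻¹ := by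
          rw [← Matrix.mul_assoc, ← Matrix.mul_assoc, hA1, Matrix.one_mul]
        have h2 : vecMulVec u u * (A⁻¹ * vecMulVec u u * A⁻¹)
            = H i i • (vecMulVec u u * A⁻¹) := by
          rw [← Matrix.mul_assoc, ← Matrix.mul_assoc, hUAU, Matrix.smul_mul]
        have hN : (A - vecMulVec u u) * N = 1 := by
          rw [hN_def, Matrix.mul_add, Matrix.mul_smul, Matrix.sub_mul, Matrix.sub_mul,
            h1, h2, hA1]
          match_scalars
          all_goals field_simp
          ring
        have hBinv : (A - vecMulVec u u)⁻¹ = N := inv_eq_right_inv hN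
        have hMX : A⁻¹ * vecMulVec u u * A⁻¹ * Xᵀ = A⁻¹ * vecMulVec u (H i) := by
          rw [Matrix.mul_assoc (A⁻¹ * vecMulVec u u) A⁻¹ Xᵀ, ← hP_def,
            Matrix.mul_assoc A⁻¹ (vecMulVec u u) P, my_vecMulVec_mul, ← hHrow i]
        have hMV : A⁻¹ * vecMulVec u u * A⁻¹ * vecMulVec u (Pi.single i 1)
            = H i i • (A⁻¹ * vecMulVec u (Pi.single i 1)) := by
          rw [Matrix.mul_assoc A⁻¹ (vecMulVec u u) A⁻¹,
            Matrix.mul_assoc A⁻¹ (vecMulVec u u * A⁻¹) (vecMulVec u (Pi.single i 1)),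
            my_vecMulVec_mul, my_vecMulVec_mul, my_vecMul_vecMulVec, hHii i]
          have hvs : vecMulVec u (H i i • (Pi.single i 1 : Fin k → ℝ))
              = H i i • vecMulVec u (Pi.single i 1) := by
            ext a b
            simp [vecMulVec_apply, Matrix.smul_apply, Pi.smul_apply, smul_eq_mul]
            ring
          rw [hvs, Matrix.mul_smul]
        rw [hBinv, hdet, hPE, hN_def]
        rw [Matrix.add_mul, Matrix.smul_mul, Matrix.mul_sub, Matrix.mul_sub, ← hP_def]
        rw [hMX, hMV]
        match_scalars
        all_goals field_simp
        all_goals try ring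
    -- now sum everything
    have hsum : ∑ i : Fin k,
        (Xᵀ * ((1 : Matrix (Fin k) (Fin k) ℝ) - single i i 1) * X).det •
          ((Xᵀ * ((1 : Matrix (Fin k) (Fin k) ℝ) - single i i 1) * X)⁻¹ *
            (((1 : Matrix (Fin k) (Fin k) ℝ) - single i i 1) * X)ᵀ)
        = (A.det * ((k : ℝ) - (d : ℝ))) • P := by
      calc ∑ i : Fin k,
          (Xᵀ * ((1 : Matrix (Fin k) (Fin k) ℝ) - single i i 1) * X).det •
            ((Xᵀ * ((1 : Matrix (Fin k) (Fin k) ℝ) - single i i 1) * X)⁻¹ *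
              (((1 : Matrix (Fin k) (Fin k) ℝ) - single i i 1) * X)ᵀ)
          = ∑ i : Fin k, A.det • ((1 - H i i) • P + P * single i i (1:ℝ) * (H - 1)) :=
            Finset.sum_congr rfl fun i _ => by rw [hB i, hY i, key i]
        _ = A.det • ((∑ i : Fin k, (1 - H i i)) • P
              + P * (∑ i : Fin k, single i i (1:ℝ)) * (H - 1)) := by
            rw [← Finset.smul_sum, Finset.sum_add_distrib, Finset.sum_smul]
            congr 1
            rw [← Matrix.sum_mul, ← Matrix.mul_sum]
        _ = (A.det * ((k : ℝ) - (d : ℝ))) • P := by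
            rw [my_sum_stdBasisMatrix, Matrix.mul_one, Matrix.mul_sub, Matrix.mul_one,
              hPH, sub_self, add_zero, Finset.sum_sub_distrib, htr]
            simp [smul_smul]
    rw [hsum, smul_smul]
    have hκ : (k : ℝ) - (d : ℝ) ≠ 0 := by
      have : (d : ℝ) < (k : ℝ) := by exact_mod_cast hdk
      linarith
    congr 1
    field_simp
  · -- singular case : both sides vanish
    have hdet0 : A.det = 0 := by
      by_contra h; exact hA (isUnit_iff_ne_zero.mpr h)
    obtain ⟨v, hv0, hAv⟩ := Matrix.exists_mulVec_eq_zero_iff.mpr hdet0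
    have hXv : X *ᵥ v = 0 := by
      have hker := Matrix.ker_mulVecLin_transpose_mul_self X
      have h1 : v ∈ LinearMap.ker (Xᵀ * X).mulVecLin := by
        simpa [LinearMap.mem_ker, Matrix.mulVecLin_apply, ← hA_def] using hAv
      rw [hker] at h1
      simpa [LinearMap.mem_ker, Matrix.mulVecLin_apply] using h1
    have hdets : ∀ i : Fin k,
        (Xᵀ * ((1 : Matrix (Fin k) (Fin k) ℝ) - single i i 1) * X).det = 0 := by
      intro i
      rw [← Matrix.exists_mulVec_eq_zero_iff]
      refine ⟨v, hv0, ?_⟩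
      rw [← Matrix.mulVec_mulVec, hXv, Matrix.mulVec_zero]
    rw [hdet0, zero_smul]
    rw [Finset.sum_eq_zero fun i _ => by rw [hdets i, zero_smul], smul_zero]
end
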